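/- arXiv:2510.15073 — 13 statements merged into one kernel-verified Lean document; each statement's English description precedes it below -/
import Mathlib

section
/- If g : [0,1] → [0,1] is a continuous surjection, then for any 0 ≤ c < d ≤ 1 there exist 0 ≤ a < b ≤ 1 such that g([a,b]) = [c,d]. -/
open Set

lemma key_icc_image (g : ℝ → ℝ) (p q c d : ℝ) (hpq : p ≤ q)
    (hg : ContinuousOn g (Icc p q)) (hcd : c < d)
    (hp : g p = c) (hq : g q = d) :
    ∃ a b : ℝ, p ≤ a ∧ a < b ∧ b ≤ q ∧ g '' Icc a b = Icc c d := by
  -- b : first point where g hits d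
  set S : Set ℝ := Icc p q ∩ g ⁻¹' {d} with hSdef
  have hScl : IsClosed S := hg.preimage_isClosed_of_isClosed isClosed_Icc isClosed_singleton
  have hSne : S.Nonempty := ⟨q, ⟨⟨hpq, le_rfl⟩, hq⟩⟩
  have hSbdd : BddBelow S := ⟨p, fun x hx => hx.1.1⟩
  set b := sInf S with hbdef
  have hbS : b ∈ S := hScl.csInf_mem hSne hSbdd
  have hpb : p ≤ b := hbS.1.1
  have hbq : b ≤ q := hbS.1.2
  have hgb : g b = d := hbS.2
  have hplt : p < b := by
    rcases eq_or_lt_of_le hpb with h | h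
    · exfalso; rw [← h] at hgb; rw [hp] at hgb; exact absurd hgb (ne_of_lt hcd)
    · exact h
  -- a : last point in [p,b] where g hits c
  set T : Set ℝ := Icc p b ∩ g ⁻¹' {c} with hTdef
  have hgpb : ContinuousOn g (Icc p b) := hg.mono (Icc_subset_Icc le_rfl hbq)
  have hTcl : IsClosed T := hgpb.preimage_isClosed_of_isClosed isClosed_Icc isClosed_singleton
  have hTne : T.Nonempty := ⟨p, ⟨⟨le_rfl, hpb⟩, hp⟩⟩
  have hTbdd : BddAbove T := ⟨b, fun x hx => hx.1.2⟩
  set a := sSup T with hadef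
  have haT : a ∈ T := hTcl.csSup_mem hTne hTbdd
  have hpa : p ≤ a := haT.1.1
  have hab' : a ≤ b := haT.1.2
  have hga : g a = c := haT.2
  have hab : a < b := by
    rcases eq_or_lt_of_le hab' with h | h
    · exfalso; rw [h] at hga; rw [hgb] at hga; exact absurd hga.symm (ne_of_lt hcd)
    · exact h
  have hgab : ContinuousOn g (Icc a b) := hgpb.mono (Icc_subset_Icc hpa le_rfl)
  refine ⟨a, b, hpa, hab, hbq, ?_⟩
  apply Subset.antisymm
  · rintro _ ⟨x, hx, rfl⟩
    constructor
    · by_contra h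
      push_neg at h
      have hax : a < x := by
        rcases eq_or_lt_of_le hx.1 with h' | h'
        · exfalso; rw [← h', hga] at h; exact absurd h (lt_irrefl c)
        · exact h'
      have hcmem : c ∈ Icc (g x) (g b) := ⟨le_of_lt h, hgb ▸ le_of_lt hcd⟩
      obtain ⟨y, hy, hgy⟩ := intermediate_value_Icc hx.2
        (hgab.mono (Icc_subset_Icc hx.1 le_rfl)) hcmem
      have hyT : y ∈ T := ⟨⟨le_trans hpa (le_trans hax.le hy.1), hy.2⟩, hgy⟩
      have : y ≤ a := le_csSup hTbdd hyT
      exact absurd (lt_of_lt_of_le hax (le_trans hy.1 this)) (lt_irrefl a)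
    · by_contra h
      push_neg at h
      have hxb : x < b := by
        rcases eq_or_lt_of_le hx.2 with h' | h'
        · exfalso; rw [h', hgb] at h; exact absurd h (lt_irrefl d)
        · exact h'
      have hdmem : d ∈ Icc (g a) (g x) := ⟨hga ▸ le_of_lt hcd, le_of_lt h⟩
      obtain ⟨y, hy, hgy⟩ := intermediate_value_Icc hx.1
        (hgab.mono (Icc_subset_Icc le_rfl hx.2)) hdmem
      have hyS : y ∈ S := ⟨⟨le_trans hpa hy.1, le_trans hy.2 (le_trans hxb.le hbq)⟩, hgy⟩
      have : b ≤ y := csInf_le hSbdd hyS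
      exact absurd (lt_of_le_of_lt (le_trans this hy.2) hxb) (lt_irrefl b)
  · have := intermediate_value_Icc hab.le hgab
    rw [hga, hgb] at this
    exact this

theorem stmt_0 (g : ℝ → ℝ)
    (hg : ContinuousOn g (Set.Icc 0 1))
    (hsurj : g '' Set.Icc 0 1 = Set.Icc 0 1)
    (c d : ℝ) (hc : 0 ≤ c) (hcd : c < d) (hd : d ≤ 1) :
    ∃ a b : ℝ, 0 ≤ a ∧ a < b ∧ b ≤ 1 ∧ g '' Set.Icc a b = Set.Icc c d := by
  have hcmem : c ∈ Set.Icc (0:ℝ) 1 := ⟨hc, le_trans hcd.le hd⟩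
  have hdmem : d ∈ Set.Icc (0:ℝ) 1 := ⟨le_trans hc hcd.le, hd⟩
  rw [← hsurj] at hcmem hdmem
  obtain ⟨p, hp01, hgp⟩ := hcmem
  obtain ⟨q, hq01, hgq⟩ := hdmem
  have hpq : p ≠ q := by
    intro h; rw [h, hgq] at hgp; exact absurd hgp (ne_of_gt hcd)
  rcases lt_or_gt_of_ne hpq with h | h
  · obtain ⟨a, b, ha, hab, hb, him⟩ :=
      key_icc_image g p q c d h.le
        (hg.mono (Set.Icc_subset_Icc hp01.1 hq01.2)) hcd hgp hgq
    exact ⟨a, b, le_trans hp01.1 ha, hab, le_trans hb hq01.2, him⟩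
  · -- q < p : reflect
    set f : ℝ → ℝ := fun x => q + p - x with hfdef
    have hmaps : Set.MapsTo f (Icc q p) (Icc q p) := by
      intro x hx
      constructor
      · simp only [hfdef]; linarith [hx.2]
      · simp only [hfdef]; linarith [hx.1]
    have hfc : ContinuousOn f (Icc q p) := (continuous_const.sub continuous_id).continuousOn
    have hgc : ContinuousOn (g ∘ f) (Icc q p) :=
      (hg.mono (Set.Icc_subset_Icc hq01.1 hp01.2)).comp hfc hmaps
    have h1 : (g ∘ f) q = c := by simp [hfdef, hgp]
    have h2 : (g ∘ f) p = d := by simp [hfdef, hgq]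
    obtain ⟨a, b, ha, hab, hb, him⟩ :=
      key_icc_image (g ∘ f) q p c d h.le hgc hcd h1 h2
    refine ⟨q + p - b, q + p - a, by linarith [hq01.1, hp01.2], by linarith,
      by linarith [hq01.1, hp01.2], ?_⟩
    rw [Set.image_comp] at him
    have : f '' Icc a b = Icc (q + p - b) (q + p - a) := by
      simp only [hfdef]
      exact Set.image_const_sub_Icc (q + p) a b
    rwa [this] at him
end

section
/- Let X be a compact metric space, f : X → X a continuous transitive map, and x ∈ X a point with dense orbit such that for every open neighbourhood W of x there exists N with f^n(W) ∩ W ≠ ∅ for all n ≥ N. Then f is topologically mixing. -/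
/-- `f` is topologically transitive. -/
def TopTransitive {X : Type*} [TopologicalSpace X] (f : X → X) : Prop :=
  ∀ U V : Set X, IsOpen U → IsOpen V → U.Nonempty → V.Nonempty →
    ∃ k : ℕ, (f^[k] '' U ∩ V).Nonempty

/-- `f` is topologically mixing. -/
def TopMixing {X : Type*} [TopologicalSpace X] (f : X → X) : Prop :=
  ∀ U V : Set X, IsOpen U → IsOpen V → U.Nonempty → V.Nonempty →
    ∃ N : ℕ, ∀ n ≥ N, (f^[n] '' U ∩ V).Nonempty

theorem stmt_2 {X : Type*} [MetricSpace X] [CompactSpace X]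
    (f : X → X) (hf : Continuous f) (htrans : TopTransitive f)
    (x : X) (hdense : Dense (Set.range fun n : ℕ => f^[n] x))
    (hret : ∀ W : Set X, IsOpen W → x ∈ W →
      ∃ N : ℕ, ∀ n ≥ N, (f^[n] '' W ∩ W).Nonempty) :
    TopMixing f := by
  intro U V hU hV hUne hVne
  obtain ⟨u, ⟨a, ha⟩, huU⟩ := hdense.exists_mem_open hU hUne
  obtain ⟨v, ⟨b, hb⟩, hvV⟩ := hdense.exists_mem_open hV hVne
  subst ha hb
  set W : Set X := f^[a] ⁻¹' U ∩ f^[b] ⁻¹' V with hW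
  have hWo : IsOpen W := ((hU.preimage (hf.iterate a)).inter (hV.preimage (hf.iterate b)))
  have hxW : x ∈ W := ⟨huU, hvV⟩
  obtain ⟨N, hN⟩ := hret W hWo hxW
  refine ⟨N + b, fun m hm => ?_⟩
  obtain ⟨y, ⟨w, hwW, hwy⟩, hyW⟩ := hN (m + a - b) (by omega)
  refine ⟨f^[m] (f^[a] w), ⟨f^[a] w, hwW.1, rfl⟩, ?_⟩
  have : f^[m] (f^[a] w) = f^[b] (f^[m + a - b] w) := by
    rw [← Function.iterate_add_apply, ← Function.iterate_add_apply]
    congr 1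
    omega
  rw [this, hwy]
  exact hyW.2
end

section
/- Let X be a compact metric space without isolated points and f : X → X a continuous transitive map. If x ∈ X is a point whose orbit closure has nonempty interior, then x has dense orbit. -/
theorem stmt_3 {X : Type*} [MetricSpace X] [CompactSpace X]
    (hperf : ∀ x : X, ¬ IsOpen ({x} : Set X))
    (f : X → X) (hf : Continuous f) (htrans : TopTransitive f)
    (x : X)
    (hint : (interior (closure (Set.range fun n : ℕ => f^[n] x))).Nonempty) :
    Dense (Set.range fun n : ℕ => f^[n] x) := by
  set S := Set.range fun n : ℕ => f^[n] x with hS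
  set C := closure S with hC
  have hmaps : ∀ y ∈ S, f y ∈ S := by
    rintro _ ⟨n, rfl⟩
    exact ⟨n + 1, by simp [Function.iterate_succ_apply']⟩
  have hfC : ∀ y ∈ C, f y ∈ C := by
    intro y hy
    have h1 : f '' C ⊆ closure (f '' S) := image_closure_subset_closure_image hf
    have h2 : f '' S ⊆ S := by rintro _ ⟨z, hz, rfl⟩; exact hmaps z hz
    exact closure_mono h2 (h1 ⟨y, hy, rfl⟩)
  have hkC : ∀ k : ℕ, ∀ y ∈ C, f^[k] y ∈ C := by
    intro k
    induction k with
    | zero => intro y hy; simpa using hy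
    | succ k ih =>
      intro y hy
      rw [Function.iterate_succ_apply']
      exact hfC _ (ih y hy)
  rw [← dense_closure]
  rw [dense_iff_inter_open]
  intro V hV hVne
  obtain ⟨k, y, ⟨u, hu, rfl⟩, hyV⟩ :=
    htrans (interior C) V isOpen_interior hV hint hVne
  exact ⟨f^[k] u, hyV, hkC k u (interior_subset hu)⟩
end

section
/- Let X be a compact metric space, f : X → X a continuous transitive map, and W ⊆ X a nonempty open set such that W is contained in the closure of W ∩ Per(f), where Per(f) is the set of periodic points of f. Then Per(f) is dense in X. -/
def Per {X : Type*} (f : X → X) : Set X := {x | ∃ n : ℕ, 0 < n ∧ f^[n] x = x}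

theorem stmt_4 {X : Type*} [MetricSpace X] [CompactSpace X]
    (f : X → X) (hf : Continuous f) (htrans : TopTransitive f)
    (W : Set X) (hW : IsOpen W) (hWne : W.Nonempty)
    (hWper : W ⊆ closure (W ∩ Per f)) :
    Dense (Per f) := by
  rw [dense_iff_inter_open]
  intro V hV hVne
  obtain ⟨k, y, ⟨w, hwW, hwy⟩, hyV⟩ := htrans W V hW hV hWne hVne
  -- O = W ∩ f^[k]⁻¹ V is open nonempty
  have hOopen : IsOpen (W ∩ f^[k] ⁻¹' V) :=
    hW.inter ((hf.iterate k).isOpen_preimage V hV)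
  have hOne : (W ∩ f^[k] ⁻¹' V).Nonempty := ⟨w, hwW, by simpa [hwy] using hyV⟩
  obtain ⟨x, hxO⟩ := hOne
  have hxcl : x ∈ closure (W ∩ Per f) := hWper hxO.1
  obtain ⟨p, hpO, hpW, hpPer⟩ :=
    (mem_closure_iff.mp hxcl) _ hOopen hxO
  obtain ⟨n, hn, hnp⟩ := hpPer
  refine ⟨f^[k] p, hpO.2, n, hn, ?_⟩
  rw [← Function.iterate_add_apply, Nat.add_comm, Function.iterate_add_apply, hnp]
end

section
/- Let f : X → X be a continuous map on a compact metric space X without isolated points. Then the set of points without dense orbit is either empty or dense in X. -/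
open Set Metric Function

/-- In a space with no isolated points (no singleton open), removing a point
from a dense set keeps it dense. -/
lemma dense_of_dense_insert {X : Type*} [MetricSpace X]
    (hperf : ∀ x : X, ¬ IsOpen ({x} : Set X))
    (a : X) (s : Set X) (h : Dense (insert a s)) : Dense s := by
  have hclo : (({a} : Set X)ᶜ) ⊆ closure s := by
    intro x hx
    have hx2 : x ∈ closure (insert a s) := h x
    rw [show insert a s = {a} ∪ s from rfl, closure_union, closure_singleton] at hx2
    rcases hx2 with h1 | h2
    · exact absurd h1 hx
    · exact h2
  have hint : interior ({a} : Set X) = ∅ := by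
    rcases Set.subset_singleton_iff_eq.1
        (interior_subset : interior ({a} : Set X) ⊆ {a}) with h1 | h1
    · exact h1
    · exact absurd (h1 ▸ isOpen_interior) (hperf a)
  intro x
  have hcompl : closure (({a} : Set X)ᶜ) = univ := by
    rw [closure_compl, hint]; simp
  have hx : x ∈ closure (({a} : Set X)ᶜ) := by rw [hcompl]; trivial
  have := closure_mono hclo hx
  rwa [closure_closure] at this

theorem stmt_5 {X : Type*} [MetricSpace X] [CompactSpace X]
    (hperf : ∀ x : X, ¬ IsOpen ({x} : Set X))
    (f : X → X) (hf : Continuous f) :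
    {x : X | ¬ Dense (Set.range fun n : ℕ => f^[n] x)} = ∅ ∨
      Dense {x : X | ¬ Dense (Set.range fun n : ℕ => f^[n] x)} := by
  classical
  by_cases hd : Dense {x : X | ¬ Dense (Set.range fun n : ℕ => f^[n] x)}
  · exact Or.inr hd
  left
  obtain ⟨x₀, hx₀⟩ : ∃ x₀ : X,
      x₀ ∉ closure {x : X | ¬ Dense (Set.range fun n : ℕ => f^[n] x)} := by
    by_contra h; push_neg at h; exact hd h
  obtain ⟨ε, εpos, hεball⟩ :=
    Metric.isOpen_iff.1 (isClosed_closure.isOpen_compl) x₀ hx₀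
  have htrans : ∀ y ∈ ball x₀ ε, Dense (Set.range fun n : ℕ => f^[n] y) := by
    intro y hy
    have hy' := hεball hy
    simp only [mem_compl_iff] at hy'
    by_contra hny
    exact hy' (subset_closure hny)
  -- transitivity propagates forward
  have hstep : ∀ x : X, Dense (Set.range fun n : ℕ => f^[n] x) →
      Dense (Set.range fun n : ℕ => f^[n] (f x)) := by
    intro x hx
    apply dense_of_dense_insert hperf x
    have hrange : (Set.range fun n : ℕ => f^[n] x)
        = insert x (Set.range fun n : ℕ => f^[n] (f x)) := by
      ext y
      constructor
      · rintro ⟨n, rfl⟩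
        cases n with
        | zero => exact Or.inl rfl
        | succ k => exact Or.inr ⟨k, (Function.iterate_succ_apply f k x).symm⟩
      · rintro (rfl | ⟨k, rfl⟩)
        · exact ⟨0, rfl⟩
        · exact ⟨k + 1, Function.iterate_succ_apply f k x⟩
    rwa [hrange] at hx
  have hiter : ∀ (j : ℕ) (x : X), Dense (Set.range fun n : ℕ => f^[n] x) →
      Dense (Set.range fun n : ℕ => f^[n] (f^[j] x)) := by
    intro j
    induction j with
    | zero => intro x hx; exact hx
    | succ k ih =>
      intro x hx
      have := hstep _ (ih x hx)
      rwa [← Function.iterate_succ_apply' f k x] at this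
  have hmono : ∀ (j : ℕ) (x : X),
      Dense (Set.range fun n : ℕ => f^[n] (f^[j] x)) →
      Dense (Set.range fun n : ℕ => f^[n] x) := by
    intro j x h
    apply h.mono
    rintro y ⟨n, rfl⟩
    exact ⟨n + j, Function.iterate_add_apply f n j x⟩
  set B : Set X := ball x₀ (ε / 2) with hB
  have hBopen : IsOpen B := isOpen_ball
  have hBne : B.Nonempty := ⟨x₀, mem_ball_self (half_pos εpos)⟩
  have hcbsub : closedBall x₀ (ε / 2) ⊆ ball x₀ ε :=
    closedBall_subset_ball (by linarith)
  have htransCB : ∀ y ∈ closedBall x₀ (ε / 2),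
      Dense (Set.range fun n : ℕ => f^[n] y) :=
    fun y hy => htrans y (hcbsub hy)
  have hhit : ∀ y : X, Dense (Set.range fun n : ℕ => f^[n] y) →
      ∃ j : ℕ, f^[j] y ∈ B := by
    intro y hy
    obtain ⟨w, hw1, hw2⟩ := hy.exists_mem_open hBopen hBne
    obtain ⟨j, rfl⟩ := hw1
    exact ⟨j, hw2⟩
  have hx₀trans : Dense (Set.range fun n : ℕ => f^[n] x₀) :=
    htransCB x₀ (mem_closedBall_self (by linarith))
  -- first hitting time of B after time m
  have hP : ∀ m : ℕ, ∃ j : ℕ, f^[m + j] x₀ ∈ B := by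
    intro m
    obtain ⟨j, hj⟩ := hhit (f^[m] x₀) (hiter m x₀ hx₀trans)
    refine ⟨j, ?_⟩
    rwa [Nat.add_comm, Function.iterate_add_apply]
  set r : ℕ → ℕ := fun m => Nat.find (hP m) with hr
  have rmem : ∀ m, f^[m + r m] x₀ ∈ B := fun m => Nat.find_spec (hP m)
  have rmin : ∀ m, ∀ j < r m, f^[m + j] x₀ ∉ B := fun m j hj => Nat.find_min (hP m) hj
  by_cases hbdd : ∃ N : ℕ, ∀ m : ℕ, r m ≤ N
  · -- bounded gaps: every point is transitive
    obtain ⟨N, hN⟩ := hbdd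
    have hVdense : Dense (⋃ j : Fin (N + 1), (f^[(j : ℕ)]) ⁻¹' B) := by
      apply hx₀trans.mono
      rintro y ⟨m, rfl⟩
      refine Set.mem_iUnion.2 ⟨⟨r m, Nat.lt_succ_of_le (hN m)⟩, ?_⟩
      simp only [Set.mem_preimage]
      have := rmem m
      rwa [Nat.add_comm, Function.iterate_add_apply] at this
    have hclosed : IsClosed (⋃ j : Fin (N + 1), (f^[(j : ℕ)]) ⁻¹' closedBall x₀ (ε / 2)) :=
      isClosed_iUnion_of_finite fun j =>
        (Metric.isClosed_closedBall).preimage (hf.iterate _)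
    have hsub : (⋃ j : Fin (N + 1), (f^[(j : ℕ)]) ⁻¹' B)
        ⊆ ⋃ j : Fin (N + 1), (f^[(j : ℕ)]) ⁻¹' closedBall x₀ (ε / 2) := by
      apply Set.iUnion_mono
      intro j
      exact Set.preimage_mono ball_subset_closedBall
    have hcover : ∀ x : X, ∃ j : ℕ, f^[j] x ∈ closedBall x₀ (ε / 2) := by
      intro x
      have hx : x ∈ closure (⋃ j : Fin (N + 1), (f^[(j : ℕ)]) ⁻¹' B) := hVdense x
      have := (closure_minimal hsub hclosed) hx
      obtain ⟨j, hj⟩ := Set.mem_iUnion.1 this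
      exact ⟨(j : ℕ), hj⟩
    ext x
    simp only [Set.mem_setOf_eq, Set.mem_empty_iff_false, iff_false, not_not]
    obtain ⟨j, hj⟩ := hcover x
    exact hmono j x (htransCB _ hj)
  · -- unbounded gaps: contradiction
    exfalso
    push_neg at hbdd
    set C : Set X := f '' closedBall x₀ (ε / 2) with hC
    have hCcomp : IsCompact C := (isCompact_closedBall x₀ (ε / 2)).image hf
    set A : ℕ → Set X := fun N => {z | ∀ j ≤ N, f^[j] z ∉ B} ∩ C with hA
    have hAclosed : ∀ N, IsClosed (A N) := by
      intro N
      apply IsClosed.inter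
      · have : {z : X | ∀ j ≤ N, f^[j] z ∉ B} = ⋂ j ∈ Finset.range (N + 1), (f^[j]) ⁻¹' Bᶜ := by
          ext z
          simp [Nat.lt_succ_iff]
        rw [this]
        exact isClosed_biInter fun j _ => (hBopen.isClosed_compl).preimage (hf.iterate _)
      · exact hCcomp.isClosed
    have hAne : ∀ N, (A N).Nonempty := by
      intro N
      obtain ⟨m, hm⟩ := hbdd (N + 2)
      -- last visit to B before (or at) time m
      set t : ℕ := Nat.findGreatest (fun t => f^[t] x₀ ∈ B) m with ht
      have hP0 : f^[0] x₀ ∈ B := by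
        rw [Function.iterate_zero_apply]
        exact mem_ball_self (half_pos εpos)
      have htmem : f^[t] x₀ ∈ B :=
        Nat.findGreatest_spec (P := fun t => f^[t] x₀ ∈ B) (Nat.zero_le m) hP0
      have htle : t ≤ m := Nat.findGreatest_le (P := fun t => f^[t] x₀ ∈ B) m
      refine ⟨f^[t + 1] x₀, ?_, ?_⟩
      · intro j hj
        have key : f^[j] (f^[t + 1] x₀) = f^[t + 1 + j] x₀ := by
          rw [show t + 1 + j = j + (t + 1) by omega]
          exact (Function.iterate_add_apply f j (t + 1) x₀).symm
        rw [key]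
        by_cases hcase : t + 1 + j ≤ m
        · exact Nat.findGreatest_is_greatest (P := fun t => f^[t] x₀ ∈ B)
            (by omega) hcase
        · have h1 : t + 1 + j = m + (t + 1 + j - m) := by omega
          rw [h1]
          exact rmin m (t + 1 + j - m) (by omega)
      · refine ⟨f^[t] x₀, ball_subset_closedBall htmem, ?_⟩
        rw [Function.iterate_succ_apply' f t x₀]
    have hAsub : ∀ N, A (N + 1) ⊆ A N := by
      intro N z hz
      exact ⟨fun j hj => hz.1 j (Nat.le_succ_of_le hj), hz.2⟩
    have hInter : (⋂ N, A N).Nonempty :=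
      IsCompact.nonempty_iInter_of_sequence_nonempty_isCompact_isClosed A hAsub hAne
        (hCcomp.of_isClosed_subset (hAclosed 0) (Set.inter_subset_right)) hAclosed
    obtain ⟨z, hz⟩ := hInter
    have hzC : z ∈ C := (Set.mem_iInter.1 hz 0).2
    obtain ⟨b, hb1, hb2⟩ := hzC
    have hzb : Dense (Set.range fun n : ℕ => f^[n] z) := by
      rw [← hb2]
      exact hstep b (htransCB b hb1)
    obtain ⟨j, hj⟩ := hhit z hzb
    exact (Set.mem_iInter.1 hz j).1 j le_rfl hj
end

section
/- Let X be a compact metric space, f : X → X continuous, I, J, K, L arcs in X with I ⊆ K, L ⊆ J. If I f-covers J, then K f-covers L. -/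
/-- `I` is an arc: a homeomorphic image of `[0,1]`. Since `[0,1]` is compact and `X`
is Hausdorff, a continuous injection suffices. -/
def IsArc {X : Type*} [TopologicalSpace X] (I : Set X) : Prop :=
  ∃ φ : ℝ → X, ContinuousOn φ (Set.Icc 0 1) ∧ Set.InjOn φ (Set.Icc 0 1) ∧
    φ '' Set.Icc 0 1 = I

/-- `I` is a free arc: an arc whose "interior part" is open in `X`. -/
def IsFreeArc {X : Type*} [TopologicalSpace X] (I : Set X) : Prop :=
  ∃ φ : ℝ → X, ContinuousOn φ (Set.Icc 0 1) ∧ Set.InjOn φ (Set.Icc 0 1) ∧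
    φ '' Set.Icc 0 1 = I ∧ IsOpen (φ '' Set.Ioo 0 1)

/-- `I` `h`-covers `J`: some subarc of `I` is mapped exactly onto `J` by `h`. -/
def Covers {X : Type*} [TopologicalSpace X] (h : X → X) (I J : Set X) : Prop :=
  ∃ K : Set X, IsArc K ∧ K ⊆ I ∧ h '' K = J


/-!
Parametrise `J` by a continuous injection `χ` of `[0, 1]`; it is a homeomorphism onto `J`, so
`L = χ [a, b]` for some `a < b`, and `f` on the covering subarc `φ [0, 1]` becomes a continuous
surjection `G = χ⁻¹ ∘ f ∘ φ` of `[0, 1]`. Between a last visit of `G` to `a` and the next visit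
to `b`, the intermediate value theorem shows that `G` sweeps out exactly `[a, b]`; the
corresponding subarc of `φ [0, 1] ⊆ I ⊆ K` is mapped onto `L`.
-/

open Set Function

theorem IsCompact.continuousOn_image_of_leftInvOn {α β : Type*} [TopologicalSpace α]
    [TopologicalSpace β] [T2Space β] {f : α → β} {s : Set α} (hs : IsCompact s)
    (hf : ContinuousOn f s) {finv : β → α} (hleft : LeftInvOn finv f s) :
    ContinuousOn finv (f '' s) := by
  refine continuousOn_iff_isClosed.2 fun t ht => ⟨f '' (t ∩ s), ?_, ?_⟩
  · exact ((hs.inter_left ht).image_of_continuousOn (hf.mono inter_subset_right)).isClosed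
  · rw [inter_eq_self_of_subset_left (image_mono inter_subset_right), hleft.image_inter']

namespace IsArc

variable {X : Type*} [TopologicalSpace X] {I : Set X}

theorem isCompact (hI : IsArc I) : IsCompact I := by
  obtain ⟨φ, hφc, -, rfl⟩ := hI
  exact isCompact_Icc.image_of_continuousOn hφc

theorem isPreconnected (hI : IsArc I) : IsPreconnected I := by
  obtain ⟨φ, hφc, -, rfl⟩ := hI
  exact isPreconnected_Icc.image φ hφc

theorem nontrivial (hI : IsArc I) : I.Nontrivial := by
  obtain ⟨φ, -, hφi, rfl⟩ := hI
  have h0 : (0 : ℝ) ∈ Icc (0 : ℝ) 1 := left_mem_Icc.2 zero_le_one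
  have h1 : (1 : ℝ) ∈ Icc (0 : ℝ) 1 := right_mem_Icc.2 zero_le_one
  exact ⟨φ 0, mem_image_of_mem φ h0, φ 1, mem_image_of_mem φ h1, hφi.ne h0 h1 zero_ne_one⟩

end IsArc

theorem isArc_image_Icc {X : Type*} [TopologicalSpace X] {φ : ℝ → X} {u v : ℝ} (huv : u < v)
    (hφc : ContinuousOn φ (Icc u v)) (hφi : InjOn φ (Icc u v)) : IsArc (φ '' Icc u v) := by
  set α : ℝ → ℝ := fun t => (v - u) * t + u
  have hα : α '' Icc 0 1 = Icc u v := by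
    rw [image_affine_Icc' (sub_pos.2 huv)]
    congr 1 <;> ring
  have hαi : Injective α := fun s t hst => by
    simpa [α, (sub_pos.2 huv).ne'] using hst
  refine ⟨φ ∘ α, hφc.comp (by fun_prop) (hα ▸ mapsTo_image α _), ?_, by rw [image_comp, hα]⟩
  exact hφi.comp hαi.injOn (hα ▸ mapsTo_image α _)

theorem ContinuousOn.exists_image_Icc_eq_of_le {G : ℝ → ℝ} {a b p q : ℝ} (hpq : p ≤ q)
    (hG : ContinuousOn G (Icc p q)) (hab : a < b) (hp : G p = a) (hq : G q = b) :
    ∃ u v, u < v ∧ Icc u v ⊆ Icc p q ∧ G '' Icc u v = Icc a b := by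
  -- `u` is the last visit to `a` in `[p, q]`, `v` the first visit to `b` after `u`
  set A := Icc p q ∩ G ⁻¹' {a}
  have hAc : IsCompact A := isCompact_Icc.of_isClosed_subset
    (hG.preimage_isClosed_of_isClosed isClosed_Icc isClosed_singleton) inter_subset_left
  have huA : sSup A ∈ A := hAc.sSup_mem ⟨p, ⟨le_rfl, hpq⟩, hp⟩
  set u := sSup A
  set B := Icc u q ∩ G ⁻¹' {b}
  have hBc : IsCompact B := isCompact_Icc.of_isClosed_subset
    ((hG.mono (Icc_subset_Icc_left huA.1.1)).preimage_isClosed_of_isClosed isClosed_Icc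
      isClosed_singleton) inter_subset_left
  have hvB : sInf B ∈ B := hBc.sInf_mem ⟨q, ⟨huA.1.2, le_rfl⟩, hq⟩
  set v := sInf B
  have hGu : G u = a := huA.2
  have hGv : G v = b := hvB.2
  have huv : u < v := hvB.1.1.lt_of_ne fun h => hab.ne (by rw [← hGu, h, hGv])
  have hsub : Icc u v ⊆ Icc p q := Icc_subset_Icc huA.1.1 hvB.1.2
  refine ⟨u, v, huv, hsub, Subset.antisymm ?_ ?_⟩
  · rintro _ ⟨t, ht, rfl⟩
    constructor
    · by_contra! h
      obtain ⟨s, hs, hGs⟩ := intermediate_value_Icc ht.2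
        (hG.mono ((Icc_subset_Icc_left ht.1).trans hsub)) ⟨h.le, hGv ▸ hab.le⟩
      have hsu : s ≤ u := le_csSup hAc.bddAbove ⟨hsub ⟨ht.1.trans hs.1, hs.2⟩, hGs⟩
      have htu : t = u := le_antisymm (hs.1.trans hsu) ht.1
      exact h.ne (htu ▸ hGu)
    · by_contra! h
      obtain ⟨s, hs, hGs⟩ := intermediate_value_Icc ht.1
        (hG.mono ((Icc_subset_Icc_right ht.2).trans hsub)) ⟨hGu ▸ hab.le, h.le⟩
      have hvs : v ≤ s := csInf_le hBc.bddBelow ⟨⟨hs.1, (hs.2.trans ht.2).trans hvB.1.2⟩, hGs⟩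
      have htv : t = v := le_antisymm ht.2 (hvs.trans hs.2)
      exact h.ne' (htv ▸ hGv)
  · simpa only [hGu, hGv] using intermediate_value_Icc huv.le (hG.mono hsub)

theorem ContinuousOn.exists_image_Icc_eq {G : ℝ → ℝ} {a b p q : ℝ}
    (hG : ContinuousOn G (uIcc p q)) (hab : a < b) (hp : G p = a) (hq : G q = b) :
    ∃ u v, u < v ∧ Icc u v ⊆ uIcc p q ∧ G '' Icc u v = Icc a b := by
  rcases le_total p q with hpq | hqp
  · rw [uIcc_of_le hpq] at hG ⊢
    exact hG.exists_image_Icc_eq_of_le hpq hab hp hq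
  · rw [uIcc_of_ge hqp] at hG ⊢
    have hGneg : ContinuousOn (G ∘ Neg.neg) (Icc (-p) (-q)) :=
      hG.comp continuousOn_neg fun t ht => by simpa [neg_le, le_neg] using ht.symm
    obtain ⟨u, v, huv, hsub, himg⟩ := hGneg.exists_image_Icc_eq_of_le (neg_le_neg hqp) hab
      (by simpa using hp) (by simpa using hq)
    refine ⟨-v, -u, neg_lt_neg huv, ?_, by rw [← image_neg_Icc, ← himg, image_comp]⟩
    simpa only [image_neg_Icc, neg_neg] using image_mono (f := Neg.neg) hsub

theorem exists_Icc_image_eq_of_subset_image {X : Type*} [TopologicalSpace X] [T2Space X]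
    {χ : ℝ → X} {s : Set ℝ} (hs : IsCompact s) (hχc : ContinuousOn χ s) (hχi : InjOn χ s)
    {L : Set X} (hLc : IsCompact L) (hLconn : IsPreconnected L) (hLnt : L.Nontrivial)
    (hLs : L ⊆ χ '' s) : ∃ a b, a < b ∧ Icc a b ⊆ s ∧ χ '' Icc a b = L := by
  set g := invFunOn χ s
  have hleft : LeftInvOn g χ s := hχi.leftInvOn_invFunOn
  have hg : ContinuousOn g L := (hs.continuousOn_image_of_leftInvOn hχc hleft).mono hLs
  have hS : g '' L = Icc (sInf (g '' L)) (sSup (g '' L)) :=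
    eq_Icc_of_connected_compact ⟨hLnt.nonempty.image g, hLconn.image g hg⟩
      (hLc.image_of_continuousOn hg)
  have hχS : χ '' (g '' L) = L := (surjOn_image χ s).rightInvOn_invFunOn.image_image' hLs
  refine ⟨sInf (g '' L), sSup (g '' L), ?_, ?_, hS ▸ hχS⟩
  · by_contra! h
    apply hLnt.not_subsingleton
    rw [← hχS, hS]
    exact (subsingleton_Icc_of_ge h).image χ
  · exact hS ▸ (image_mono hLs).trans hleft.image_image.subset

namespace Covers

variable {X : Type*} [TopologicalSpace X] {f : X → X} {I J K L : Set X}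

theorem mono_left (h : Covers f I J) (hIK : I ⊆ K) : Covers f K J :=
  let ⟨C, hC, hCI, hfC⟩ := h
  ⟨C, hC, hCI.trans hIK, hfC⟩

theorem mono_right [T2Space X] (hf : ContinuousOn f I) (h : Covers f I J) (hJ : IsArc J)
    (hL : IsArc L) (hLJ : L ⊆ J) : Covers f I L := by
  obtain ⟨C, ⟨φ, hφc, hφi, rfl⟩, hCI, hfC⟩ := h
  obtain ⟨χ, hχc, hχi, rfl⟩ := hJ
  obtain ⟨a, b, hab, habI, hχab⟩ := exists_Icc_image_eq_of_subset_image isCompact_Icc hχc hχi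
    hL.isCompact hL.isPreconnected hL.nontrivial hLJ
  set g := invFunOn χ (Icc 0 1)
  set G := g ∘ f ∘ φ
  have hleft : LeftInvOn g χ (Icc 0 1) := hχi.leftInvOn_invFunOn
  have hfφ : MapsTo (f ∘ φ) (Icc 0 1) (χ '' Icc 0 1) := by
    rw [← hfC, ← image_comp]; exact mapsTo_image _ _
  have hGc : ContinuousOn G (Icc 0 1) :=
    (isCompact_Icc.continuousOn_image_of_leftInvOn hχc hleft).comp
      ((hf.mono hCI).comp hφc (mapsTo_image φ _)) hfφ
  have hχG : EqOn (χ ∘ G) (f ∘ φ) (Icc 0 1) := fun t ht =>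
    (surjOn_image χ _).rightInvOn_invFunOn (hfφ ht)
  have hGsurj : G '' Icc 0 1 = Icc 0 1 := by
    rw [image_comp, image_comp, hfC, hleft.image_image]
  obtain ⟨p, hp, hGp⟩ := hGsurj.symm ▸ habI (left_mem_Icc.2 hab.le)
  obtain ⟨q, hq, hGq⟩ := hGsurj.symm ▸ habI (right_mem_Icc.2 hab.le)
  obtain ⟨u, v, huv, huvpq, hGuv⟩ :=
    (hGc.mono (uIcc_subset_Icc hp hq)).exists_image_Icc_eq hab hGp hGq
  have huv01 : Icc u v ⊆ Icc 0 1 := huvpq.trans (uIcc_subset_Icc hp hq)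
  refine ⟨φ '' Icc u v, isArc_image_Icc huv (hφc.mono huv01) (hφi.mono huv01),
    (image_mono huv01).trans hCI, ?_⟩
  rw [← hχab, ← hGuv, ← image_comp, ← image_comp]
  exact (hχG.mono huv01).image_eq.symm

end Covers

theorem stmt_8_general {X : Type*} [MetricSpace X]
    (f : X → X) (hf : Continuous f)
    (I J K L : Set X) (hJ : IsArc J) (hL : IsArc L)
    (hIK : I ⊆ K) (hLJ : L ⊆ J) (hcov : Covers f I J) :
    Covers f K L :=
  (hcov.mono_right hf.continuousOn hJ hL hLJ).mono_left hIK

theorem stmt_8 {X : Type*} [MetricSpace X] [CompactSpace X]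
    (f : X → X) (hf : Continuous f)
    (I J K L : Set X) (hI : IsArc I) (hJ : IsArc J) (hK : IsArc K) (hL : IsArc L)
    (hIK : I ⊆ K) (hLJ : L ⊆ J) (hcov : Covers f I J) :
    Covers f K L :=
  stmt_8_general f hf I J K L hJ hL hIK hLJ hcov
end

section
/- Let X be a compact metric space, f : X → X continuous, I and J arcs in X with J ⊆ f(I), and let K₁, K₂ ⊆ J be arcs whose intersection contains at most one point. Then I f-covers K₁ or I f-covers K₂. -/
/-!
Parametrize `J` by `ψ`; then `K₁` and `K₂` correspond to parameter intervals `[a, b]` and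
`[c, d]` with `b ≤ c`. Some point of `I` is mapped to `ψ m` with `b ≤ m ≤ c`, and some point of
`I` is mapped to the endpoint `ψ 0`, which lies outside the open set `ψ '' Ioo 0 1`. Moving along
`I` from the first point towards the nearest point mapped outside that open set, the image stays
in `J` and its `ψ`-coordinate runs continuously from `m` to `0` or to `1`, so it passes over all of
`[a, b]` or all of `[c, d]`. Between the first time it reaches the far end of that interval and the
last earlier time it is at the near end, it runs exactly over the interval: this subarc of `I`
covers `K₁` or `K₂`.
-/

open Set

section Crossing

variable {g : ℝ → ℝ} {p q a b : ℝ}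

lemma exists_eq_forall_Ico_ne (hg : ContinuousOn g (Icc p q)) (hb : b ∈ g '' Icc p q) :
    ∃ u ∈ Icc p q, g u = b ∧ ∀ x ∈ Ico p u, g x ≠ b := by
  have hcompact : IsCompact (Icc p q ∩ g ⁻¹' {b}) :=
    isCompact_Icc.of_isClosed_subset
      (hg.preimage_isClosed_of_isClosed isClosed_Icc isClosed_singleton) inter_subset_left
  obtain ⟨u, ⟨hu, hgu⟩, hleast⟩ := hcompact.exists_isLeast hb
  exact ⟨u, hu, hgu, fun x hx hgx =>
    hx.2.not_ge (hleast ⟨⟨hx.1, hx.2.le.trans hu.2⟩, hgx⟩)⟩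

lemma exists_eq_forall_Ioc_ne (hg : ContinuousOn g (Icc p q)) (ha : a ∈ g '' Icc p q) :
    ∃ s ∈ Icc p q, g s = a ∧ ∀ x ∈ Ioc s q, g x ≠ a := by
  have hcompact : IsCompact (Icc p q ∩ g ⁻¹' {a}) :=
    isCompact_Icc.of_isClosed_subset
      (hg.preimage_isClosed_of_isClosed isClosed_Icc isClosed_singleton) inter_subset_left
  obtain ⟨s, ⟨hs, hgs⟩, hgreatest⟩ := hcompact.exists_isGreatest ha
  exact ⟨s, hs, hgs, fun x hx hgx =>
    hx.1.not_ge (hgreatest ⟨⟨hs.1.trans hx.1.le, hx.2⟩, hgx⟩)⟩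

lemma exists_image_Icc_eq_Icc_of_le_of_le (hpq : p ≤ q) (hg : ContinuousOn g (Icc p q))
    (hab : a ≤ b) (hp : g p ≤ a) (hq : b ≤ g q) :
    ∃ s u, Icc s u ⊆ Icc p q ∧ g '' Icc s u = Icc a b := by
  obtain ⟨u, hu, hgu, hu_first⟩ :=
    exists_eq_forall_Ico_ne hg (intermediate_value_Icc hpq hg ⟨hp.trans hab, hq⟩)
  have hg_pu : ContinuousOn g (Icc p u) := hg.mono (Icc_subset_Icc_right hu.2)
  obtain ⟨s, hs, hgs, hs_last⟩ :=
    exists_eq_forall_Ioc_ne hg_pu (intermediate_value_Icc hu.1 hg_pu ⟨hp, hgu ▸ hab⟩)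
  have hg_su : ContinuousOn g (Icc s u) := hg_pu.mono (Icc_subset_Icc_left hs.1)
  refine ⟨s, u, Icc_subset_Icc hs.1 hu.2, Subset.antisymm ?_ ?_⟩
  · rintro _ ⟨x, hx, rfl⟩
    constructor
    · by_contra! hxa
      have hsx : s < x := hx.1.lt_of_ne (by rintro rfl; exact hxa.ne hgs)
      obtain ⟨z, hz, hgz⟩ := intermediate_value_Icc hx.2 (hg_su.mono (Icc_subset_Icc_left hx.1))
        ⟨hxa.le, hgu ▸ hab⟩
      exact hs_last z ⟨hsx.trans_le hz.1, hz.2⟩ hgz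
    · by_contra! hbx
      have hxu : x < u := hx.2.lt_of_ne (by rintro rfl; exact hbx.ne' hgu)
      obtain ⟨z, hz, hgz⟩ := intermediate_value_Icc hx.1 (hg_su.mono (Icc_subset_Icc_right hx.2))
        ⟨hgs ▸ hab, hbx.le⟩
      exact hu_first z ⟨hs.1.trans hz.1, hz.2.trans_lt hxu⟩ hgz
  · simpa only [hgs, hgu] using intermediate_value_Icc hs.2 hg_su

lemma exists_image_Icc_eq_Icc_of_ge_of_ge (hpq : p ≤ q) (hg : ContinuousOn g (Icc p q))
    (hab : a ≤ b) (hp : b ≤ g p) (hq : g q ≤ a) :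
    ∃ s u, Icc s u ⊆ Icc p q ∧ g '' Icc s u = Icc a b := by
  obtain ⟨s, u, hsub, him⟩ := exists_image_Icc_eq_Icc_of_le_of_le hpq hg.neg (neg_le_neg hab)
    (neg_le_neg hp) (neg_le_neg hq)
  refine ⟨s, u, hsub, ?_⟩
  have := congrArg (Neg.neg '' ·) him
  simpa only [image_image, Pi.neg_apply, neg_neg, image_neg_eq_neg, neg_Icc] using this

lemma exists_image_Icc_eq_Icc (hg : ContinuousOn g (Icc p q)) (hab : a ≤ b)
    (hsub : Icc a b ⊆ g '' Icc p q) :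
    ∃ s u, Icc s u ⊆ Icc p q ∧ g '' Icc s u = Icc a b := by
  obtain ⟨x, hx, hgx⟩ := hsub (left_mem_Icc.2 hab)
  obtain ⟨y, hy, hgy⟩ := hsub (right_mem_Icc.2 hab)
  rcases le_total x y with hxy | hyx
  · obtain ⟨s, u, hsu, him⟩ := exists_image_Icc_eq_Icc_of_le_of_le hxy
      (hg.mono (Icc_subset_Icc hx.1 hy.2)) hab hgx.le hgy.ge
    exact ⟨s, u, hsu.trans (Icc_subset_Icc hx.1 hy.2), him⟩
  · obtain ⟨s, u, hsu, him⟩ := exists_image_Icc_eq_Icc_of_ge_of_ge hyx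
      (hg.mono (Icc_subset_Icc hy.1 hx.2)) hab hgy.ge hgx.le
    exact ⟨s, u, hsu.trans (Icc_subset_Icc hy.1 hx.2), him⟩

end Crossing

lemma le_or_le_of_subsingleton_Icc_inter_Icc {a₁ b₁ a₂ b₂ : ℝ} (h₁ : a₁ < b₁) (h₂ : a₂ < b₂)
    (h : (Icc a₁ b₁ ∩ Icc a₂ b₂).Subsingleton) : b₁ ≤ a₂ ∨ b₂ ≤ a₁ := by
  by_contra! hlt
  rw [Icc_inter_Icc, subsingleton_Icc_iff] at h
  exact h.not_gt (max_lt (lt_min h₁ hlt.2) (lt_min hlt.1 h₂))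

lemma Set.LeftInvOn.eq_zero_or_eq_one_of_notMem_image_Ioo {X : Type*} {r : X → ℝ} {ψ : ℝ → X}
    (hrψ : LeftInvOn r ψ (Icc 0 1)) {y : X} (hy : y ∈ ψ '' Icc 0 1) (hyU : y ∉ ψ '' Ioo 0 1) :
    r y = 0 ∨ r y = 1 := by
  obtain ⟨x, hx, rfl⟩ := hy
  have hx' : x ∈ Icc 0 1 \ Ioo 0 1 := ⟨hx, fun hx' => hyU (mem_image_of_mem ψ hx')⟩
  rw [Icc_sdiff_Ioo_same zero_le_one] at hx'
  rwa [hrψ hx]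

section Arcs

variable {X : Type*} [TopologicalSpace X]

lemma isArc_image_Icc_s9 {φ : ℝ → X} {s u : ℝ} (hsu : s < u) (hc : ContinuousOn φ (Icc s u))
    (hi : InjOn φ (Icc s u)) : IsArc (φ '' Icc s u) := by
  have himage : (fun x => (u - s) * x + s) '' Icc 0 1 = Icc s u := by
    rw [image_affine_Icc' (sub_pos.2 hsu)]
    simp
  have hmaps : MapsTo (fun x => (u - s) * x + s) (Icc 0 1) (Icc s u) :=
    himage ▸ mapsTo_image _ _
  refine ⟨φ ∘ fun x => (u - s) * x + s, hc.comp (by fun_prop) hmaps, ?_, ?_⟩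
  · exact hi.comp ((add_left_injective s).comp
      (mul_right_injective₀ (sub_ne_zero.2 hsu.ne'))).injOn hmaps
  · rw [image_comp, himage]

lemma IsArc.nontrivial_s9 {K : Set X} (hK : IsArc K) : K.Nontrivial := by
  obtain ⟨φ, -, hi, rfl⟩ := hK
  refine ⟨φ 0, mem_image_of_mem φ (left_mem_Icc.2 zero_le_one), φ 1,
    mem_image_of_mem φ (right_mem_Icc.2 zero_le_one), fun h => zero_ne_one (α := ℝ) ?_⟩
  exact hi (left_mem_Icc.2 zero_le_one) (right_mem_Icc.2 zero_le_one) h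

lemma IsArc.isCompact_s9 {K : Set X} (hK : IsArc K) : IsCompact K := by
  obtain ⟨φ, hc, -, rfl⟩ := hK
  exact isCompact_Icc.image_of_continuousOn hc

lemma IsArc.isConnected {K : Set X} (hK : IsArc K) : IsConnected K := by
  obtain ⟨φ, hc, -, rfl⟩ := hK
  exact isConnected_Icc zero_le_one |>.image φ hc

lemma exists_continuousOn_leftInvOn [T2Space X] {α : Type*} [TopologicalSpace α] [Nonempty α]
    {s : Set α} (hs : IsCompact s) {ψ : α → X} (hc : ContinuousOn ψ s) (hi : InjOn ψ s) :
    ∃ r : X → α, ContinuousOn r (ψ '' s) ∧ LeftInvOn r ψ s := by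
  classical
  refine ⟨Function.invFunOn ψ s, ?_, fun x hx => hi.leftInvOn_invFunOn hx⟩
  rw [continuousOn_iff_isClosed]
  intro t ht
  refine ⟨ψ '' (t ∩ s), ((hs.inter_left ht).image_of_continuousOn
    (hc.mono inter_subset_right)).isClosed, ?_⟩
  ext y
  simp only [mem_inter_iff, mem_preimage, mem_image]
  constructor
  · rintro ⟨hyt, x, hx, rfl⟩
    rw [hi.leftInvOn_invFunOn hx] at hyt
    exact ⟨⟨x, ⟨hyt, hx⟩, rfl⟩, ⟨x, hx, rfl⟩⟩
  · rintro ⟨⟨x, ⟨hxt, hx⟩, rfl⟩, -⟩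
    exact ⟨by rwa [hi.leftInvOn_invFunOn hx], ⟨x, hx, rfl⟩⟩

lemma IsArc.exists_eq_image_Icc [T2Space X] {K : Set X} (hK : IsArc K) {s : Set ℝ}
    (hs : IsCompact s) {ψ : ℝ → X} (hc : ContinuousOn ψ s) (hi : InjOn ψ s) (hKJ : K ⊆ ψ '' s) :
    ∃ a b, a < b ∧ Icc a b ⊆ s ∧ ψ '' Icc a b = K := by
  obtain ⟨r, hrc, hrψ⟩ := exists_continuousOn_leftInvOn hs hc hi
  have hT : r '' K = Icc (sInf (r '' K)) (sSup (r '' K)) :=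
    eq_Icc_of_connected_compact (hK.isConnected.image r (hrc.mono hKJ))
      (hK.isCompact_s9.image_of_continuousOn (hrc.mono hKJ))
  have hK_eq : ψ '' (r '' K) = K := (hrψ.rightInvOn_image.mono hKJ).image_image
  refine ⟨sInf (r '' K), sSup (r '' K), ?_, ?_, hT ▸ hK_eq⟩
  · by_contra! hle
    have := (subsingleton_Icc_of_ge hle).image ψ
    rw [← hT, hK_eq] at this
    exact hK.nontrivial_s9.not_subsingleton this
  · rw [← hT, ← hrψ.image_image]
    exact image_mono hKJ

lemma exists_image_uIcc_subset_closure {h : ℝ → X} {U : Set X} {p q t : ℝ} (hU : IsOpen U)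
    (hh : ContinuousOn h (Icc p q)) (ht : t ∈ Icc p q) (htU : h t ∈ U)
    (hexit : ∃ x ∈ Icc p q, h x ∉ U) :
    ∃ β ∈ Icc p q, h β ∉ U ∧ h '' uIcc t β ⊆ closure U := by
  have hcompact : IsCompact (Icc p q ∩ h ⁻¹' Uᶜ) :=
    isCompact_Icc.of_isClosed_subset
      (hh.preimage_isClosed_of_isClosed isClosed_Icc hU.isClosed_compl) inter_subset_left
  obtain ⟨β, ⟨hβ, hβU⟩, hmin⟩ :=
    hcompact.exists_isMinOn hexit (f := fun x => |x - t|) (by fun_prop)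
  have htβ : t ⊓ β ≠ t ⊔ β := (inf_lt_sup.2 fun hβt : t = β => hβU (hβt ▸ htU)).ne
  have hsub : uIcc t β ⊆ Icc p q := uIcc_subset_Icc ht hβ
  have hIoo : MapsTo h (Ioo (t ⊓ β) (t ⊔ β)) U := by
    intro x hx
    by_contra hxU
    have hnearer : |x - t| < |β - t| := by
      simp only [mem_Ioo, inf_lt_iff, lt_sup_iff] at hx
      rw [abs_lt, abs_sub_comm]
      grind
    exact (hmin ⟨hsub (Ioo_subset_Icc_self hx), hxU⟩).not_gt hnearer
  refine ⟨β, hβ, hβU, image_subset_iff.2 fun x hx => ?_⟩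
  change x ∈ Icc (t ⊓ β) (t ⊔ β) at hx
  rw [← closure_Ioo htβ] at hx
  refine hIoo.closure_of_continuousWithinAt (fun y hy => ?_) hx
  rw [closure_Ioo htβ] at hy
  exact (hh y (hsub hy)).mono (Ioo_subset_Icc_self.trans hsub)

lemma covers_of_Icc_subset_image {f : X → X} {φ ψ : ℝ → X}
    {r : X → ℝ} {I : Set X} {p q a b : ℝ} (hφc : ContinuousOn φ (Icc p q))
    (hφi : InjOn φ (Icc p q)) (hI : φ '' Icc p q ⊆ I)
    (hψr : RightInvOn r ψ (f '' (φ '' Icc p q)))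
    (hg : ContinuousOn (fun x => r (f (φ x))) (Icc p q)) (hab : a < b)
    (hsub : Icc a b ⊆ (fun x => r (f (φ x))) '' Icc p q) :
    Covers f I (ψ '' Icc a b) := by
  obtain ⟨s, u, hsu_sub, him⟩ := exists_image_Icc_eq_Icc hg hab.le hsub
  have hsu : s < u := by
    by_contra! hle
    have := (subsingleton_Icc_of_ge hle).image (fun x => r (f (φ x)))
    rw [him, subsingleton_Icc_iff] at this
    exact this.not_gt hab
  refine ⟨φ '' Icc s u, isArc_image_Icc_s9 hsu (hφc.mono hsu_sub) (hφi.mono hsu_sub),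
    (image_mono hsu_sub).trans hI, ?_⟩
  simp only [← him, image_image]
  exact image_congr fun x hx => (hψr (mem_image_of_mem f (mem_image_of_mem φ (hsu_sub hx)))).symm

lemma covers_or_covers_of_le [T2Space X] {f : X → X}
    (hf : Continuous f) {φ ψ : ℝ → X} (hφc : ContinuousOn φ (Icc 0 1)) (hφi : InjOn φ (Icc 0 1))
    (hψc : ContinuousOn ψ (Icc 0 1)) (hψi : InjOn ψ (Icc 0 1)) (hU : IsOpen (ψ '' Ioo 0 1))
    (hJI : ψ '' Icc 0 1 ⊆ f '' (φ '' Icc 0 1)) {a b c d : ℝ} (ha : 0 ≤ a) (hab : a < b)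
    (hbc : b ≤ c) (hcd : c < d) (hd : d ≤ 1) :
    Covers f (φ '' Icc 0 1) (ψ '' Icc a b) ∨ Covers f (φ '' Icc 0 1) (ψ '' Icc c d) := by
  obtain ⟨r, hrc, hrψ⟩ := exists_continuousOn_leftInvOn isCompact_Icc hψc hψi
  have hm : (b + c) / 2 ∈ Ioo (0 : ℝ) 1 := ⟨by linarith, by linarith⟩
  rw [image_image] at hJI
  obtain ⟨t, ht, htm⟩ : ∃ t ∈ Icc (0 : ℝ) 1, f (φ t) = ψ ((b + c) / 2) :=
    hJI (mem_image_of_mem ψ (Ioo_subset_Icc_self hm))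
  have hexit : ∃ x ∈ Icc (0 : ℝ) 1, f (φ x) ∉ ψ '' Ioo 0 1 := by
    obtain ⟨x, hx, hx0⟩ := hJI (mem_image_of_mem ψ (left_mem_Icc.2 zero_le_one))
    refine ⟨x, hx, fun ⟨y, hy, hyx⟩ => hy.1.ne' ?_⟩
    exact hψi (Ioo_subset_Icc_self hy) (left_mem_Icc.2 zero_le_one) (hyx.trans hx0)
  obtain ⟨β, hβ, hβU, hβJ⟩ := exists_image_uIcc_subset_closure (h := fun x => f (φ x)) hU
    (hf.comp_continuousOn hφc) ht (by rw [htm]; exact mem_image_of_mem ψ hm) hexit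
  have hJ : (fun x => f (φ x)) '' uIcc t β ⊆ ψ '' Icc 0 1 :=
    hβJ.trans (closure_minimal (image_mono Ioo_subset_Icc_self)
      (isCompact_Icc.image_of_continuousOn hψc).isClosed)
  have hsub : uIcc t β ⊆ Icc 0 1 := uIcc_subset_Icc ht hβ
  have hψr : RightInvOn r ψ (f '' (φ '' uIcc t β)) := by
    rw [image_image]
    exact hrψ.rightInvOn_image.mono hJ
  have hg : ContinuousOn (fun x => r (f (φ x))) (uIcc t β) :=
    hrc.comp ((hf.comp_continuousOn hφc).mono hsub) (mapsTo_iff_image_subset.2 hJ)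
  have hcross : uIcc ((b + c) / 2) (r (f (φ β))) ⊆ (fun x => r (f (φ x))) '' uIcc t β := by
    simpa only [htm, hrψ (Ioo_subset_Icc_self hm)] using intermediate_value_uIcc hg
  have hβ_end : r (f (φ β)) = 0 ∨ r (f (φ β)) = 1 :=
    hrψ.eq_zero_or_eq_one_of_notMem_image_Ioo (hJ (mem_image_of_mem _ right_mem_uIcc)) hβU
  rcases hβ_end with h0 | h1
  · have hab_sub : Icc a b ⊆ uIcc ((b + c) / 2) (r (f (φ β))) := by
      rw [h0, uIcc_of_ge hm.1.le]
      exact Icc_subset_Icc ha (by linarith)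
    exact .inl (covers_of_Icc_subset_image (hφc.mono hsub) (hφi.mono hsub) (image_mono hsub)
      hψr hg hab (hab_sub.trans hcross))
  · have hcd_sub : Icc c d ⊆ uIcc ((b + c) / 2) (r (f (φ β))) := by
      rw [h1, uIcc_of_le hm.2.le]
      exact Icc_subset_Icc (by linarith) hd
    exact .inr (covers_of_Icc_subset_image (hφc.mono hsub) (hφi.mono hsub) (image_mono hsub)
      hψr hg hcd (hcd_sub.trans hcross))

end Arcs

theorem stmt_9_general {X : Type*} [MetricSpace X]
    (f : X → X) (hf : Continuous f)
    (I J K₁ K₂ : Set X) (hI : IsArc I) (hJ : IsFreeArc J)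
    (hK₁ : IsArc K₁) (hK₂ : IsArc K₂)
    (hJI : J ⊆ f '' I) (h1 : K₁ ⊆ J) (h2 : K₂ ⊆ J)
    (hint : (K₁ ∩ K₂).Subsingleton) :
    Covers f I K₁ ∨ Covers f I K₂ := by
  obtain ⟨φ, hφc, hφi, rfl⟩ := hI
  obtain ⟨ψ, hψc, hψi, rfl, hU⟩ := hJ
  obtain ⟨a₁, b₁, hab₁, hsub₁, rfl⟩ := hK₁.exists_eq_image_Icc isCompact_Icc hψc hψi h1
  obtain ⟨a₂, b₂, hab₂, hsub₂, rfl⟩ := hK₂.exists_eq_image_Icc isCompact_Icc hψc hψi h2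
  have hdisj : (Icc a₁ b₁ ∩ Icc a₂ b₂).Subsingleton := fun x hx y hy =>
    hψi (hsub₁ hx.1) (hsub₁ hy.1) (hint ⟨mem_image_of_mem ψ hx.1, mem_image_of_mem ψ hx.2⟩
      ⟨mem_image_of_mem ψ hy.1, mem_image_of_mem ψ hy.2⟩)
  rcases le_or_le_of_subsingleton_Icc_inter_Icc hab₁ hab₂ hdisj with h | h
  · exact covers_or_covers_of_le hf hφc hφi hψc hψi hU hJI (hsub₁ (left_mem_Icc.2 hab₁.le)).1
      hab₁ h hab₂ (hsub₂ (right_mem_Icc.2 hab₂.le)).2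
  · exact (covers_or_covers_of_le hf hφc hφi hψc hψi hU hJI (hsub₂ (left_mem_Icc.2 hab₂.le)).1
      hab₂ h hab₁ (hsub₁ (right_mem_Icc.2 hab₁.le)).2).symm

theorem stmt_9 {X : Type*} [MetricSpace X] [CompactSpace X]
    (f : X → X) (hf : Continuous f)
    (I J K₁ K₂ : Set X) (hI : IsArc I) (hJ : IsFreeArc J)
    (hK₁ : IsArc K₁) (hK₂ : IsArc K₂)
    (hJI : J ⊆ f '' I) (h1 : K₁ ⊆ J) (h2 : K₂ ⊆ J)
    (hint : (K₁ ∩ K₂).Subsingleton) :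
    Covers f I K₁ ∨ Covers f I K₂ :=
  stmt_9_general f hf I J K₁ K₂ hI hJ hK₁ hK₂ hJI h1 h2 hint
end

section
/- Let X be a compact metric space, f : X → X continuous, and suppose K₁, K₂ are two disjoint free arcs contained in a free arc J such that K₁ ∪ K₂ ⊆ f(K₁) ∩ f(K₂). Then the topological entropy of f is positive. -/
/-!
Two disjoint compact branches `K₁, K₂`, each of whose images covers both, form a horseshoe: every
finite itinerary `w ∈ {1,2}ⁿ` is followed by some orbit, obtained by pulling back through the
branches one step at a time. Orbits with different itineraries are, at the first disagreement, in
different branches and hence a uniform distance apart, so they form a dynamical net of size `2ⁿ`.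
The topological entropy is therefore at least `log 2`.
-/

open Set UniformSpace Dynamics
open scoped Uniformity SetRel

lemma IsFreeArc.isCompact {X : Type*} [TopologicalSpace X] {I : Set X} (hI : IsFreeArc I) :
    IsCompact I := by
  obtain ⟨φ, hφ, -, rfl, -⟩ := hI
  exact isCompact_Icc.image_of_continuousOn hφ

lemma IsFreeArc.nonempty {X : Type*} [TopologicalSpace X] {I : Set X} (hI : IsFreeArc I) :
    I.Nonempty := by
  obtain ⟨φ, -, -, rfl, -⟩ := hI
  exact (nonempty_Icc.2 zero_le_one).image φ

lemma Disjoint.exists_mem_uniformity_forall_notMem {X : Type*} [UniformSpace X] {A B : Set X}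
    (hA : IsCompact A) (hB : IsClosed B) (hAB : Disjoint A B) :
    ∃ U ∈ 𝓤 X, ∀ x ∈ A, ∀ y ∈ B, (x, y) ∉ U ∧ (y, x) ∉ U := by
  obtain ⟨U, hU, hdisj⟩ := hAB.exists_uniform_thickening hA hB
  have hball : ∀ z, z ∈ ball z U := fun z => refl_mem_uniformity hU
  refine ⟨U, hU, fun x hx y hy => ⟨fun hxy => ?_, fun hyx => ?_⟩⟩
  · exact disjoint_left.1 hdisj (mem_biUnion hx hxy) (mem_biUnion hy (hball y))
  · exact disjoint_left.1 hdisj (mem_biUnion hx (hball x)) (mem_biUnion hy hyx)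

section Horseshoe

variable {X ι : Type*} {f : X → X} {K : ι → Set X}

lemma exists_iterate_mem_of_subset_image (hne : ∀ i, (K i).Nonempty)
    (hcov : ∀ i j, K i ⊆ f '' K j) (w : ℕ → ι) (n : ℕ) :
    ∃ x, ∀ k ≤ n, f^[k] x ∈ K (w k) := by
  induction n generalizing w with
  | zero => exact (hne (w 0)).imp fun x hx k hk => by rwa [Nat.le_zero.1 hk]
  | succ n ih =>
    obtain ⟨y, hy⟩ := ih (fun k => w (k + 1))
    obtain ⟨x, hx, rfl⟩ := hcov (w 1) (w 0) (hy 0 n.zero_le)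
    refine ⟨x, fun k hk => ?_⟩
    cases k with
    | zero => exact hx
    | succ k => simpa only [Function.iterate_succ_apply] using hy k (by omega)

lemma Dynamics.IsDynNetIn.of_pairwise_exists_notMem {F s : Set X} {V : SetRel X X} [V.IsSymm]
    {n : ℕ} (hsF : s ⊆ F) (hs : s.Pairwise fun x y => ∃ k < n, (f^[k] x, f^[k] y) ∉ V ○ V) :
    IsDynNetIn f F V n s := by
  refine ⟨hsF, fun x hx y hy hxy => disjoint_left.2 fun z hzx hzy => ?_⟩
  obtain ⟨k, hk, hnot⟩ := hs hx hy hxy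
  have hball := mem_ball_dynEntourage_comp f n y x ⟨z, hzy, hzx⟩
  exact hnot (mem_dynEntourage.1 hball k hk)

lemma Dynamics.card_pow_le_netMaxcard_of_subset_image [Fintype ι] [Nonempty ι] {V : SetRel X X}
    [V.IsRefl] [V.IsSymm] (hsep : Pairwise fun i j => ∀ x ∈ K i, ∀ y ∈ K j, (x, y) ∉ V ○ V)
    (hne : ∀ i, (K i).Nonempty) (hcov : ∀ i j, K i ⊆ f '' K j) (n : ℕ) :
    (Fintype.card ι ^ n : ℕ∞) ≤ netMaxcard f univ V n := by
  classical
  obtain ⟨i₀⟩ := ‹Nonempty ι›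
  have hpt : ∀ w : Fin n → ι, ∃ x, ∀ k : Fin n, f^[k] x ∈ K (w k) := by
    intro w
    obtain ⟨x, hx⟩ := exists_iterate_mem_of_subset_image hne hcov
      (fun k => if hk : k < n then w ⟨k, hk⟩ else i₀) n
    exact ⟨x, fun k => by simpa [k.isLt] using hx k k.isLt.le⟩
  choose p hp using hpt
  have hsep' : ∀ w w', w ≠ w' → ∃ k < n, (f^[k] (p w), f^[k] (p w')) ∉ V ○ V := by
    intro w w' hww'
    obtain ⟨k, hk⟩ := Function.ne_iff.1 hww'
    exact ⟨k, k.isLt, hsep hk _ (hp w k) _ (hp w' k)⟩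
  have hinj : p.Injective := fun w w' h => by
    by_contra hww'
    obtain ⟨k, -, hk⟩ := hsep' w w' hww'
    exact hk (h ▸ SetRel.rfl _)
  have hnet : IsDynNetIn f univ V n (Finset.univ.image p : Set X) := by
    refine .of_pairwise_exists_notMem (subset_univ _) ?_
    simp only [Finset.coe_image, Finset.coe_univ, image_univ]
    rintro _ ⟨w, rfl⟩ _ ⟨w', rfl⟩ hne'
    exact hsep' w w' (ne_of_apply_ne p hne')
  simpa [Finset.card_image_of_injective _ hinj] using hnet.card_le_netMaxcard

theorem Dynamics.log_card_le_coverEntropy_of_subset_image [UniformSpace X] [Fintype ι]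
    {U : SetRel X X} (hU : U ∈ 𝓤 X) (hsep : Pairwise fun i j => ∀ x ∈ K i, ∀ y ∈ K j, (x, y) ∉ U)
    (hne : ∀ i, (K i).Nonempty) (hcov : ∀ i j, K i ⊆ f '' K j) :
    ENNReal.log (Fintype.card ι) ≤ coverEntropy f univ := by
  rcases isEmpty_or_nonempty ι with _ | _
  · simp [Fintype.card_eq_zero]
  obtain ⟨V, hV, hVsymm, hVU⟩ := comp_symm_mem_uniformity_sets hU
  have := isRefl_of_mem_uniformity hV
  have hsepV : Pairwise fun i j => ∀ x ∈ K i, ∀ y ∈ K j, (x, y) ∉ V ○ V :=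
    fun i j hij x hx y hy hxy => hsep hij x hx y hy (hVU hxy)
  calc ENNReal.log (Fintype.card ι)
      = ExpGrowth.expGrowthSup fun n => (Fintype.card ι : ENNReal) ^ n :=
        ExpGrowth.expGrowthSup_pow.symm
    _ ≤ netEntropyEntourage f univ V := ExpGrowth.expGrowthSup_monotone fun n => by
        simpa using ENat.toENNReal_le.2 (card_pow_le_netMaxcard_of_subset_image hsepV hne hcov n)
    _ ≤ coverEntropy f univ := netEntropyEntourage_le_coverEntropy f univ hV

theorem Dynamics.log_two_le_coverEntropy_of_subset_image [UniformSpace X] {K₁ K₂ : Set X}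
    (hK₁ : IsCompact K₁) (hK₂ : IsClosed K₂) (hdisj : Disjoint K₁ K₂) (hne : K₁.Nonempty)
    (hcov : K₁ ∪ K₂ ⊆ f '' K₁ ∩ f '' K₂) :
    ENNReal.log 2 ≤ coverEntropy f univ := by
  obtain ⟨U, hU, hsep⟩ := hdisj.exists_mem_uniformity_forall_notMem hK₁ hK₂
  have h₁ : K₁ ⊆ f '' K₁ ∩ f '' K₂ := subset_union_left.trans hcov
  have h₂ : K₂ ⊆ f '' K₁ ∩ f '' K₂ := subset_union_right.trans hcov
  have hcov' : ∀ i j : Bool, cond i K₁ K₂ ⊆ f '' cond j K₁ K₂ := by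
    rintro (_ | _) (_ | _)
    exacts [h₂.trans inter_subset_right, h₂.trans inter_subset_left,
      h₁.trans inter_subset_right, h₁.trans inter_subset_left]
  have hsep' : Pairwise fun i j : Bool => ∀ x ∈ cond i K₁ K₂, ∀ y ∈ cond j K₁ K₂, (x, y) ∉ U := by
    rintro (_ | _) (_ | _) hij x hx y hy
    exacts [(hij rfl).elim, (hsep y hy x hx).2, (hsep x hx y hy).1, (hij rfl).elim]
  have hne' : ∀ i : Bool, (cond i K₁ K₂).Nonempty := by
    rintro (_ | _)
    · exact (hne.mono (hcov' true false)).of_image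
    · exact hne
  simpa using log_card_le_coverEntropy_of_subset_image hU hsep' hne' hcov'

end Horseshoe

theorem stmt_10_general {X : Type*} [MetricSpace X]
    (f : X → X)
    (K₁ K₂ : Set X) (hK₁ : IsFreeArc K₁) (hK₂ : IsFreeArc K₂)
    (hdisj : Disjoint K₁ K₂)
    (hcov : K₁ ∪ K₂ ⊆ f '' K₁ ∩ f '' K₂) :
    0 < Dynamics.coverEntropy f Set.univ :=
  (ENNReal.zero_lt_log_iff.2 ENNReal.one_lt_two).trans_le <|
    log_two_le_coverEntropy_of_subset_image hK₁.isCompact hK₂.isCompact.isClosed hdisj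
      hK₁.nonempty hcov

theorem stmt_10 {X : Type*} [MetricSpace X] [CompactSpace X]
    (f : X → X) (hf : Continuous f)
    (J K₁ K₂ : Set X) (hJ : IsFreeArc J) (hK₁ : IsFreeArc K₁) (hK₂ : IsFreeArc K₂)
    (h1 : K₁ ⊆ J) (h2 : K₂ ⊆ J) (hdisj : Disjoint K₁ K₂)
    (hcov : K₁ ∪ K₂ ⊆ f '' K₁ ∩ f '' K₂) :
    0 < Dynamics.coverEntropy f Set.univ :=
  stmt_10_general f K₁ K₂ hK₁ hK₂ hdisj hcov
end

section
/- Let X be a compact metric space containing a free interval (an open set homeomorphic to (0,1)). If f : X → X is continuous and weakly mixing, then f is topologically mixing. -/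
/-- `X` contains a free interval: an open subset homeomorphic to `(0,1) ⊆ ℝ`. -/
def HasFreeInterval (X : Type*) [TopologicalSpace X] : Prop :=
  ∃ J : Set X, IsOpen J ∧ Nonempty (J ≃ₜ Set.Ioo (0 : ℝ) 1)

/-- `f` is weakly mixing: `f × f` is transitive. -/
def WeaklyMixing {X : Type*} [TopologicalSpace X] (f : X → X) : Prop :=
  TopTransitive (fun p : X × X => (f p.1, f p.2))

open Set Filter Function Topology

theorem Nat.mem_atTop_of_add_mem {s : Set ℕ} {m n : ℕ} (hm : 0 < m)
    (hs : ∀ k ∈ s, k + m ∈ s) (hn : ∀ j < m, n + j ∈ s) : s ∈ atTop := by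
  refine mem_atTop_sets.mpr ⟨n, fun k hk => ?_⟩
  induction k using Nat.strong_induction_on with
  | _ k ih =>
    by_cases hkm : k < n + m
    · simpa [Nat.add_sub_cancel' hk] using hn (k - n) (by omega)
    · simpa [Nat.sub_add_cancel (by omega : m ≤ k)] using
        hs (k - m) (ih (k - m) (by omega) (by omega))

theorem Finite.exists_rel_self {α : Type*} [Finite α] {r : α → α → Prop}
    (htrans : ∀ {a b c}, r a b → r b c → r a c) (hr : ∀ a, ∃ b, r a b) (a : α) :
    ∃ b, r a b ∧ r b b := by
  choose σ hσ using hr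
  have hiter : ∀ k x, r x (σ^[k + 1] x) := by
    intro k
    induction k with
    | zero => exact hσ
    | succ k ih => exact fun x => htrans (ih x) (by rw [iterate_succ_apply' σ (k + 1)]; exact hσ _)
  obtain ⟨k, l, hkl, heq⟩ := Finite.exists_ne_map_eq_of_infinite fun k => σ^[k + 1] a
  wlog hlt : k < l generalizing k l
  · exact this l k hkl.symm heq.symm (lt_of_le_of_ne (not_lt.mp hlt) hkl.symm)
  obtain ⟨d, rfl⟩ := Nat.exists_eq_add_of_lt hlt
  refine ⟨σ^[k + 1] a, hiter k a, ?_⟩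
  have hloop : σ^[d + 1] (σ^[k + 1] a) = σ^[k + 1] a := by
    rw [← iterate_add_apply]; exact (congrArg (σ^[·] a) (by omega)).trans heq.symm
  simpa only [hloop] using hiter d (σ^[k + 1] a)

section HittingTimes

variable {X : Type*} {f : X → X}

def hittingTimes (f : X → X) (U V : Set X) : Set ℕ := {n | (f^[n] '' U ∩ V).Nonempty}

theorem mem_hittingTimes {U V : Set X} {n : ℕ} :
    n ∈ hittingTimes f U V ↔ ∃ x ∈ U, f^[n] x ∈ V := by
  simp [hittingTimes, Set.Nonempty]

theorem hittingTimes_mono_left {U U' V : Set X} (h : U ⊆ U') :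
    hittingTimes f U V ⊆ hittingTimes f U' V :=
  fun _ hn => hn.mono (inter_subset_inter_left _ (image_mono h))

theorem hittingTimes_image_iterate (U V : Set X) (k : ℕ) :
    hittingTimes f (f^[k] '' U) V = (· + k) ⁻¹' hittingTimes f U V := by
  ext n
  simp [hittingTimes, image_image, ← iterate_add_apply]

theorem hittingTimes_preimage_iterate (U V : Set X) (k : ℕ) :
    hittingTimes f U (f^[k] ⁻¹' V) = (· + k) ⁻¹' hittingTimes f U V := by
  ext n
  simp [mem_hittingTimes, ← iterate_add_apply, add_comm]

theorem hittingTimes_mem_atTop_of_image_iterate_subset {A U V : Set X} {k : ℕ}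
    (h : f^[k] '' A ⊆ U) (hA : hittingTimes f A V ∈ atTop) : hittingTimes f U V ∈ atTop :=
  mem_of_superset (by rw [hittingTimes_image_iterate]; exact tendsto_add_atTop_nat k hA)
    (hittingTimes_mono_left h)

def IterateCovers (f : X → X) (A B : Set X) : Prop := ∃ n, 0 < n ∧ B ⊆ f^[n] '' A

theorem IterateCovers.trans {A B C : Set X} (hAB : IterateCovers f A B)
    (hBC : IterateCovers f B C) : IterateCovers f A C := by
  obtain ⟨m, hm, hAB⟩ := hAB
  obtain ⟨n, hn, hBC⟩ := hBC
  refine ⟨n + m, by omega, hBC.trans ?_⟩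
  rw [iterate_add, image_comp]
  exact image_mono hAB

theorem IterateCovers.hittingTimes_mem_atTop {A B V : Set X} (h : IterateCovers f A B)
    (hB : hittingTimes f B V ∈ atTop) : hittingTimes f A V ∈ atTop := by
  obtain ⟨n, -, hBA⟩ := h
  have := mem_of_superset hB (hittingTimes_mono_left hBA)
  rw [hittingTimes_image_iterate] at this
  rw [← map_add_atTop_eq_nat n]
  exact this

end HittingTimes

section WeakMixing

variable {X : Type*} [TopologicalSpace X] {f : X → X}

theorem WeaklyMixing.exists_mem_hittingTimes_and (hwm : WeaklyMixing f) {U₁ V₁ U₂ V₂ : Set X}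
    (hU₁ : IsOpen U₁) (hV₁ : IsOpen V₁) (hU₂ : IsOpen U₂) (hV₂ : IsOpen V₂)
    (hU₁ne : U₁.Nonempty) (hV₁ne : V₁.Nonempty) (hU₂ne : U₂.Nonempty) (hV₂ne : V₂.Nonempty) :
    ∃ n, n ∈ hittingTimes f U₁ V₁ ∧ n ∈ hittingTimes f U₂ V₂ := by
  obtain ⟨n, _, ⟨⟨x₁, x₂⟩, hx, rfl⟩, hxV⟩ :=
    hwm _ _ (hU₁.prod hU₂) (hV₁.prod hV₂) (hU₁ne.prod hU₂ne) (hV₁ne.prod hV₂ne)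
  have hprod : (fun p : X × X => (f p.1, f p.2)) = Prod.map f f := rfl
  rw [hprod, Prod.map_iterate] at hxV
  exact ⟨n, mem_hittingTimes.mpr ⟨x₁, hx.1, hxV.1⟩, mem_hittingTimes.mpr ⟨x₂, hx.2, hxV.2⟩⟩

/-- Furstenberg's intersection lemma. -/
theorem WeaklyMixing.exists_hittingTimes_subset_inter (hf : Continuous f) (hwm : WeaklyMixing f)
    {U₁ V₁ U₂ V₂ : Set X} (hU₁ : IsOpen U₁) (hV₁ : IsOpen V₁) (hU₂ : IsOpen U₂) (hV₂ : IsOpen V₂)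
    (hU₁ne : U₁.Nonempty) (hV₁ne : V₁.Nonempty) (hU₂ne : U₂.Nonempty) (hV₂ne : V₂.Nonempty) :
    ∃ U V : Set X, IsOpen U ∧ IsOpen V ∧ U.Nonempty ∧ V.Nonempty ∧
      hittingTimes f U V ⊆ hittingTimes f U₁ V₁ ∩ hittingTimes f U₂ V₂ := by
  obtain ⟨k, hkU, hkV⟩ :=
    hwm.exists_mem_hittingTimes_and hU₁ hU₂ hV₁ hV₂ hU₁ne hU₂ne hV₁ne hV₂ne
  obtain ⟨x, hxU₁, hxU₂⟩ := mem_hittingTimes.mp hkU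
  obtain ⟨y, hyV₁, hyV₂⟩ := mem_hittingTimes.mp hkV
  refine ⟨U₁ ∩ f^[k] ⁻¹' U₂, V₁ ∩ f^[k] ⁻¹' V₂, hU₁.inter (hU₂.preimage (hf.iterate k)),
    hV₁.inter (hV₂.preimage (hf.iterate k)), ⟨x, hxU₁, hxU₂⟩, ⟨y, hyV₁, hyV₂⟩, fun n hn => ?_⟩
  obtain ⟨z, ⟨hzU₁, hzU₂⟩, hzV₁, hzV₂⟩ := mem_hittingTimes.mp hn
  refine ⟨mem_hittingTimes.mpr ⟨z, hzU₁, hzV₁⟩, mem_hittingTimes.mpr ⟨f^[k] z, hzU₂, ?_⟩⟩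
  rwa [← iterate_add_apply, add_comm, iterate_add_apply]

def hittingFilter (f : X → X) : Filter ℕ :=
  ⨅ p : {p : Set X × Set X // IsOpen p.1 ∧ IsOpen p.2 ∧ p.1.Nonempty ∧ p.2.Nonempty},
    𝓟 (hittingTimes f p.1.1 p.1.2)

theorem hittingTimes_mem_hittingFilter {U V : Set X} (hU : IsOpen U) (hV : IsOpen V)
    (hUne : U.Nonempty) (hVne : V.Nonempty) : hittingTimes f U V ∈ hittingFilter f :=
  mem_iInf_of_mem ⟨(U, V), hU, hV, hUne, hVne⟩ (mem_principal_self _)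

theorem WeaklyMixing.hittingFilter_neBot (hf : Continuous f) (hwm : WeaklyMixing f) :
    (hittingFilter f).NeBot := by
  refine iInf_neBot_of_directed ?_ fun ⟨⟨U, V⟩, hU, hV, hUne, hVne⟩ => principal_neBot_iff.mpr ?_
  · rintro ⟨⟨U₁, V₁⟩, hU₁, hV₁, hU₁ne, hV₁ne⟩ ⟨⟨U₂, V₂⟩, hU₂, hV₂, hU₂ne, hV₂ne⟩
    obtain ⟨U, V, hU, hV, hUne, hVne, hsub⟩ :=
      hwm.exists_hittingTimes_subset_inter hf hU₁ hV₁ hU₂ hV₂ hU₁ne hV₁ne hU₂ne hV₂ne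
    exact ⟨⟨(U, V), hU, hV, hUne, hVne⟩, principal_mono.mpr (hsub.trans inter_subset_left),
      principal_mono.mpr (hsub.trans inter_subset_right)⟩
  · obtain ⟨n, hn, -⟩ := hwm.exists_mem_hittingTimes_and hU hV hU hV hUne hVne hUne hVne
    exact ⟨n, hn⟩

theorem WeaklyMixing.denseRange [T2Space X] (hwm : WeaklyMixing f) : DenseRange f := by
  rcases subsingleton_or_nontrivial X with hX | hX
  · exact fun y => subset_closure ⟨y, Subsingleton.elim _ _⟩
  obtain ⟨x, y, hxy⟩ := exists_pair_ne X
  obtain ⟨W₁, W₂, hW₁, hW₂, hxW₁, hyW₂, hW⟩ := t2_separation hxy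
  refine dense_iff_inter_open.mpr fun V hV hVne => ?_
  obtain ⟨n, hnV, hnW⟩ :=
    hwm.exists_mem_hittingTimes_and hV hV hW₁ hW₂ hVne hVne ⟨x, hxW₁⟩ ⟨y, hyW₂⟩
  obtain ⟨z, -, hnz⟩ := mem_hittingTimes.mp hnV
  obtain ⟨n, rfl⟩ : ∃ m, n = m + 1 := by
    refine Nat.exists_eq_add_one.mpr (Nat.pos_of_ne_zero ?_)
    rintro rfl
    obtain ⟨w, hw₁, hw₂⟩ := mem_hittingTimes.mp hnW
    exact hW.ne_of_mem hw₁ hw₂ rfl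
  exact ⟨_, hnz, f^[n] z, (iterate_succ_apply' f n z).symm⟩

theorem DenseRange.iterate (hd : DenseRange f) (hf : Continuous f) (n : ℕ) :
    DenseRange f^[n] := by
  induction n with
  | zero => exact denseRange_id
  | succ n ih => rw [iterate_succ']; exact hd.comp ih hf

/-- The hitting times contain `m` consecutive integers and are stable under adding `m`. -/
theorem WeaklyMixing.hittingTimes_mem_atTop_of_subset_image_iterate (hf : Continuous f)
    (hwm : WeaklyMixing f) (hd : DenseRange f) {B V : Set X} (hB : IsOpen B) (hBne : B.Nonempty)
    {m : ℕ} (hm : 0 < m) (hBm : B ⊆ f^[m] '' B) (hV : IsOpen V) (hVne : V.Nonempty) :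
    hittingTimes f B V ∈ atTop := by
  have := hwm.hittingFilter_neBot hf
  have hshift : ∀ j ∈ Finset.range m, ∀ᶠ n in hittingFilter f,
      n ∈ hittingTimes f B (f^[j] ⁻¹' V) := fun j _ =>
    hittingTimes_mem_hittingFilter hB (hV.preimage (hf.iterate j)) hBne
      ((hd.iterate hf j).exists_mem_open hV hVne)
  obtain ⟨n, hn⟩ := ((eventually_all_finset _).mpr hshift).exists
  refine Nat.mem_atTop_of_add_mem (n := n) hm (fun k hk => ?_) fun j hj => ?_
  · have := hittingTimes_mono_left hBm hk
    rwa [hittingTimes_image_iterate] at this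
  · have := hn j (Finset.mem_range.mpr hj)
    rwa [hittingTimes_preimage_iterate] at this

end WeakMixing

theorem HasFreeInterval.exists_isOpenEmbedding_real {X : Type*} [TopologicalSpace X]
    (hX : HasFreeInterval X) : ∃ ι : ℝ → X, IsOpenEmbedding ι := by
  obtain ⟨J, hJ, ⟨e⟩⟩ := hX
  have hmem (x : ℝ) : Real.sigmoid x ∈ Ioo (0 : ℝ) 1 := Real.range_sigmoid ▸ mem_range_self x
  have hsurj : Surjective (codRestrict Real.sigmoid _ hmem) := fun ⟨y, hy⟩ => by
    obtain ⟨x, rfl⟩ := (Real.range_sigmoid ▸ hy : y ∈ range Real.sigmoid)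
    exact ⟨x, rfl⟩
  let g := (Real.sigmoid_strictMono.codRestrict hmem).orderIsoOfSurjective _ hsurj
  exact ⟨_, hJ.isOpenEmbedding_subtypeVal.comp
    (e.symm.isOpenEmbedding.comp g.toHomeomorph.isOpenEmbedding)⟩

/-- Consecutive arcs are separated by the gaps `ι '' (1, 2)` and `ι '' (3, 4)`. -/
def basicArc {X : Type*} (ι : ℝ → X) (i : Fin 3) : Set X :=
  ι '' Ioo (2 * (i : ℕ)) (2 * (i : ℕ) + 1)

theorem basicArc_nonempty {X : Type*} (ι : ℝ → X) (i : Fin 3) : (basicArc ι i).Nonempty :=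
  (nonempty_Ioo.mpr (lt_add_one _)).image ι

section Arcs

variable {X : Type*} [TopologicalSpace X] {ι : ℝ → X}

/-- `C` is trapped in the open arc `ι '' (u, v)`, which is relatively clopen in `C` because its
closure only adds `ι u` and `ι v`; so `ι ⁻¹' C` is an interval. -/
theorem IsPreconnected.image_Icc_subset [T2Space X] (hι : IsOpenEmbedding ι) {C : Set X}
    (hC : IsPreconnected C) {u p q v : ℝ} (hup : u < p) (hqv : q < v) (hp : ι p ∈ C)
    (hq : ι q ∈ C) (hu : ι u ∉ C) (hv : ι v ∉ C) : ι '' Icc p q ⊆ C := by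
  rintro _ ⟨t, ht, rfl⟩
  have hCarc : C ⊆ ι '' Ioo u v := by
    refine hC.subset_of_closure_inter_subset (hι.isOpenMap _ isOpen_Ioo)
      ⟨ι p, hp, p, ⟨hup, by linarith [ht.1, ht.2]⟩, rfl⟩ ?_
    have hcl : closure (ι '' Ioo u v) ⊆ ι '' Icc u v :=
      closure_minimal (image_mono Ioo_subset_Icc_self)
        (isCompact_Icc.image hι.continuous).isClosed
    rintro _ ⟨hx, hxC⟩
    obtain ⟨s, hs, rfl⟩ := hcl hx
    refine ⟨s, ⟨lt_of_le_of_ne hs.1 ?_, lt_of_le_of_ne hs.2 ?_⟩, rfl⟩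
    · rintro rfl; exact hu hxC
    · rintro rfl; exact hv hxC
  have hpre : IsPreconnected (ι ⁻¹' C) :=
    hC.preimage_of_isOpenMap hι.injective hι.isOpenMap (hCarc.trans (image_subset_range _ _))
  exact hpre.Icc_subset hp hq ht

theorem IsPreconnected.exists_basicArc_subset [T2Space X] (hι : IsOpenEmbedding ι) {C : Set X}
    (hC : IsPreconnected C) (hL : (C ∩ ι '' Ioo 1 2).Nonempty)
    (hR : (C ∩ ι '' Ioo 3 4).Nonempty) : ∃ i, basicArc ι i ⊆ C := by
  obtain ⟨_, hpC, p, hp, rfl⟩ := hL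
  obtain ⟨_, hqC, q, hq, rfl⟩ := hR
  by_cases hleft : ∃ u < p, ι u ∉ C
  · obtain ⟨u, hup, hu⟩ := hleft
    by_cases hright : ∃ v > q, ι v ∉ C
    · obtain ⟨v, hqv, hv⟩ := hright
      refine ⟨1, (image_mono fun t ht => ?_).trans (hC.image_Icc_subset hι hup hqv hpC hqC hu hv)⟩
      simp only [Fin.val_one, Nat.cast_one, mem_Ioo] at ht
      exact ⟨by linarith [hp.2], by linarith [hq.1]⟩
    · push Not at hright
      refine ⟨2, ?_⟩
      rintro _ ⟨t, ht, rfl⟩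
      simp only [Fin.val_two, Nat.cast_ofNat, mem_Ioo] at ht
      exact hright t (by linarith [hq.2])
  · push Not at hleft
    refine ⟨0, ?_⟩
    rintro _ ⟨t, ht, rfl⟩
    simp only [Fin.val_zero, Nat.cast_zero, mem_Ioo] at ht
    exact hleft t (by linarith [hp.1])

theorem isOpen_basicArc (hι : IsOpenEmbedding ι) (i : Fin 3) : IsOpen (basicArc ι i) :=
  hι.isOpenMap _ isOpen_Ioo

theorem isPreconnected_basicArc (hι : Continuous ι) (i : Fin 3) :
    IsPreconnected (basicArc ι i) :=
  isPreconnected_Ioo.image ι hι.continuousOn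

theorem WeaklyMixing.exists_iterateCovers_basicArc [T2Space X] {f : X → X} (hf : Continuous f)
    (hwm : WeaklyMixing f) (hι : IsOpenEmbedding ι) {A : Set X} (hA : IsOpen A)
    (hAne : A.Nonempty) (hApre : IsPreconnected A) : ∃ i, IterateCovers f A (basicArc ι i) := by
  have := hwm.hittingFilter_neBot hf
  have hW (a b : ℝ) (hab : a < b) : IsOpen (ι '' Ioo a b) ∧ (ι '' Ioo a b).Nonempty :=
    ⟨hι.isOpenMap _ isOpen_Ioo, (nonempty_Ioo.mpr hab).image ι⟩
  obtain ⟨hL, hLne⟩ := hW 1 2 one_lt_two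
  obtain ⟨hR, hRne⟩ := hW 3 4 (by norm_num)
  obtain ⟨n, ⟨hnL, hnR⟩, hnLR⟩ := Filter.nonempty_of_mem <| inter_mem
    (inter_mem (hittingTimes_mem_hittingFilter (f := f) hA hL hAne hLne)
      (hittingTimes_mem_hittingFilter hA hR hAne hRne))
    (hittingTimes_mem_hittingFilter hL hR hLne hRne)
  -- a hit from one gap into the other cannot happen at time `0`
  have hn : 0 < n := by
    refine Nat.pos_of_ne_zero ?_
    rintro rfl
    obtain ⟨_, ⟨s, hs, rfl⟩, hsR⟩ := mem_hittingTimes.mp hnLR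
    obtain ⟨t, ht, hst⟩ := hsR
    rw [iterate_zero_apply, hι.injective.eq_iff] at hst
    linarith [hs.2, ht.1]
  obtain ⟨i, hi⟩ := (hApre.image _ (hf.iterate n).continuousOn).exists_basicArc_subset hι
    (by obtain ⟨x, hx, hxL⟩ := mem_hittingTimes.mp hnL; exact ⟨_, mem_image_of_mem _ hx, hxL⟩)
    (by obtain ⟨x, hx, hxR⟩ := mem_hittingTimes.mp hnR; exact ⟨_, mem_image_of_mem _ hx, hxR⟩)
  exact ⟨i, n, hn, hi⟩

theorem exists_image_iterate_image_Ioo_subset (hι : Continuous ι) {f : X → X}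
    (hf : Continuous f) {U : Set X} (hU : IsOpen U) {k : ℕ}
    (hk : k ∈ hittingTimes f (range ι) U) : ∃ a b, a < b ∧ f^[k] '' (ι '' Ioo a b) ⊆ U := by
  obtain ⟨_, ⟨t, rfl⟩, ht⟩ := mem_hittingTimes.mp hk
  have hnhds : ι ⁻¹' (f^[k] ⁻¹' U) ∈ 𝓝 t :=
    ((hU.preimage (hf.iterate k)).preimage hι).mem_nhds ht
  obtain ⟨a, b, hab, hsub⟩ := mem_nhds_iff_exists_Ioo_subset.mp hnhds
  refine ⟨a, b, hab.1.trans hab.2, ?_⟩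
  rw [← image_comp]
  exact image_subset_iff.mpr hsub

end Arcs

theorem stmt_11_general {X : Type*} [MetricSpace X]
    (hX : HasFreeInterval X)
    (f : X → X) (hf : Continuous f) (hwm : WeaklyMixing f) :
    TopMixing f := by
  obtain ⟨ι, hι⟩ := hX.exists_isOpenEmbedding_real
  have := hwm.hittingFilter_neBot hf
  have hcover (A : Set X) (hA : IsOpen A) (hAne : A.Nonempty) (hApre : IsPreconnected A) :=
    hwm.exists_iterateCovers_basicArc hf hι hA hAne hApre
  intro U V hU hV hUne hVne
  obtain ⟨k, hk⟩ := Filter.nonempty_of_mem <|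
    hittingTimes_mem_hittingFilter (f := f) hι.isOpen_range hU (range_nonempty ι) hUne
  obtain ⟨a, b, hab, habU⟩ := exists_image_iterate_image_Ioo_subset hι.continuous hf hU hk
  obtain ⟨i, hi⟩ := hcover _ (hι.isOpenMap _ isOpen_Ioo) ((nonempty_Ioo.mpr hab).image ι)
    (isPreconnected_Ioo.image ι hι.continuous.continuousOn)
  obtain ⟨j, hij, m, hm, hjj⟩ :=
    Finite.exists_rel_self (r := fun i j => IterateCovers f (basicArc ι i) (basicArc ι j))
      IterateCovers.trans (fun i => hcover _ (isOpen_basicArc hι i) (basicArc_nonempty ι i)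
        (isPreconnected_basicArc hι.continuous i)) i
  have hj := hwm.hittingTimes_mem_atTop_of_subset_image_iterate hf hwm.denseRange
    (isOpen_basicArc hι j) (basicArc_nonempty ι j) hm hjj hV hVne
  exact mem_atTop_sets.mp <|
    hittingTimes_mem_atTop_of_image_iterate_subset habU ((hi.trans hij).hittingTimes_mem_atTop hj)

theorem stmt_11 {X : Type*} [MetricSpace X] [CompactSpace X]
    (hX : HasFreeInterval X)
    (f : X → X) (hf : Continuous f) (hwm : WeaklyMixing f) :
    TopMixing f :=
  stmt_11_general hX f hf hwm
end

section
/- If a continuous map f on a compact metric space is weakly mixing, then for every m ≥ 1 the m-fold product map f × ⋯ × f on X^m is transitive. -/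
private lemma iter_prod {X : Type*} (f : X → X) (n : ℕ) (p : X × X) :
    (fun p : X × X => (f p.1, f p.2))^[n] p = (f^[n] p.1, f^[n] p.2) := by
  induction n generalizing p with
  | zero => simp
  | succ n ih =>
      rw [Function.iterate_succ_apply, ih]
      simp [Function.iterate_succ_apply]

private lemma iter_pi {X : Type*} {m : ℕ} (f : X → X) (n : ℕ) (x : Fin m → X) :
    (fun x : Fin m → X => fun i => f (x i))^[n] x = fun i => f^[n] (x i) := by
  induction n generalizing x with
  | zero => simp
  | succ n ih =>
      rw [Function.iterate_succ_apply, ih]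
      funext i
      rw [Function.iterate_succ_apply]

/-- the Furstenberg intersection trick. -/
private lemma pair_lemma {X : Type*} [TopologicalSpace X] {f : X → X}
    (hf : Continuous f) (hwm : WeaklyMixing f)
    (U₁ V₁ U₂ V₂ : Set X) (hU₁ : IsOpen U₁) (hV₁ : IsOpen V₁) (hU₂ : IsOpen U₂)
    (hV₂ : IsOpen V₂) (hU₁n : U₁.Nonempty) (hV₁n : V₁.Nonempty)
    (hU₂n : U₂.Nonempty) (hV₂n : V₂.Nonempty) :
    ∃ U' V' : Set X, IsOpen U' ∧ IsOpen V' ∧ U'.Nonempty ∧ V'.Nonempty ∧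
      ∀ n, (f^[n] '' U' ∩ V').Nonempty →
        (f^[n] '' U₁ ∩ V₁).Nonempty ∧ (f^[n] '' U₂ ∩ V₂).Nonempty := by
  obtain ⟨k, q, ⟨p, hp, hpq⟩, hq⟩ :=
    hwm (U₁ ×ˢ V₁) (U₂ ×ˢ V₂) (hU₁.prod hV₁) (hU₂.prod hV₂)
      (hU₁n.prod hV₁n) (hU₂n.prod hV₂n)
  rw [iter_prod] at hpq
  subst hpq
  refine ⟨U₁ ∩ f^[k] ⁻¹' U₂, V₁ ∩ f^[k] ⁻¹' V₂,
    hU₁.inter (hU₂.preimage (hf.iterate k)),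
    hV₁.inter (hV₂.preimage (hf.iterate k)),
    ⟨p.1, hp.1, hq.1⟩, ⟨p.2, hp.2, hq.2⟩, ?_⟩
  rintro n ⟨y, ⟨x, ⟨hx1, hx2⟩, rfl⟩, hy1, hy2⟩
  refine ⟨⟨f^[n] x, ⟨x, hx1, rfl⟩, hy1⟩, ⟨f^[n] (f^[k] x), ⟨f^[k] x, hx2, rfl⟩, ?_⟩⟩
  rw [← Function.iterate_add_apply, Nat.add_comm, Function.iterate_add_apply]
  exact hy2

private lemma multi_lemma {X : Type*} [TopologicalSpace X] [Nonempty X] {f : X → X}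
    (hf : Continuous f) (hwm : WeaklyMixing f) (m : ℕ)
    (U V : Fin m → Set X) (hU : ∀ i, IsOpen (U i)) (hV : ∀ i, IsOpen (V i))
    (hUn : ∀ i, (U i).Nonempty) (hVn : ∀ i, (V i).Nonempty) :
    ∃ U' V' : Set X, IsOpen U' ∧ IsOpen V' ∧ U'.Nonempty ∧ V'.Nonempty ∧
      ∀ n, (f^[n] '' U' ∩ V').Nonempty →
        ∀ i, (f^[n] '' (U i) ∩ V i).Nonempty := by
  induction m with
  | zero =>
      exact ⟨Set.univ, Set.univ, isOpen_univ, isOpen_univ, Set.univ_nonempty,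
        Set.univ_nonempty, fun n _ i => i.elim0⟩
  | succ m ih =>
      obtain ⟨U', V', hU', hV', hU'n, hV'n, h⟩ :=
        ih (fun i => U i.succ) (fun i => V i.succ) (fun i => hU i.succ)
          (fun i => hV i.succ) (fun i => hUn i.succ) (fun i => hVn i.succ)
      obtain ⟨U'', V'', hU'', hV'', hU''n, hV''n, h2⟩ :=
        pair_lemma hf hwm (U 0) (V 0) U' V' (hU 0) (hV 0) hU' hV'
          (hUn 0) (hVn 0) hU'n hV'n
      refine ⟨U'', V'', hU'', hV'', hU''n, hV''n, fun n hn i => ?_⟩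
      obtain ⟨h0, hs⟩ := h2 n hn
      refine Fin.cases h0 (fun j => h n hs j) i

/-- weak mixing implies transitivity. -/
private lemma trans_of_wm {X : Type*} [TopologicalSpace X] {f : X → X}
    (hwm : WeaklyMixing f) (U V : Set X) (hU : IsOpen U) (hV : IsOpen V)
    (hUn : U.Nonempty) (hVn : V.Nonempty) : ∃ n, (f^[n] '' U ∩ V).Nonempty := by
  obtain ⟨u, hu⟩ := hUn
  obtain ⟨k, q, ⟨p, hp, hpq⟩, hq⟩ :=
    hwm (U ×ˢ Set.univ) (V ×ˢ Set.univ) (hU.prod isOpen_univ) (hV.prod isOpen_univ)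
      ⟨(u, u), hu, trivial⟩ (hVn.prod ⟨u, trivial⟩)
  rw [iter_prod] at hpq
  subst hpq
  exact ⟨k, f^[k] p.1, ⟨p.1, hp.1, rfl⟩, hq.1⟩

theorem stmt_13 {X : Type*} [MetricSpace X] [CompactSpace X]
    (f : X → X) (hf : Continuous f) (hwm : WeaklyMixing f) :
    ∀ m : ℕ, 1 ≤ m →
      TopTransitive (fun x : Fin m → X => fun i => f (x i)) := by
  intro m hm U V hUo hVo hUn hVn
  obtain ⟨u, hu⟩ := hUn
  obtain ⟨v, hv⟩ := hVn
  have : Nonempty (Fin m) := ⟨⟨0, hm⟩⟩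
  have : Nonempty X := ⟨u this.some⟩
  -- extract open boxes inside U and V
  obtain ⟨I, w, hw, hwU⟩ := isOpen_pi_iff.mp hUo u hu
  obtain ⟨J, z, hz, hzV⟩ := isOpen_pi_iff.mp hVo v hv
  set Ui : Fin m → Set X := fun i => if i ∈ I then w i else Set.univ with hUi
  set Vi : Fin m → Set X := fun i => if i ∈ J then z i else Set.univ with hVi
  have hUio : ∀ i, IsOpen (Ui i) := by
    intro i; simp only [hUi]; split
    · exact (hw i (by assumption)).1
    · exact isOpen_univ
  have hVio : ∀ i, IsOpen (Vi i) := by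
    intro i; simp only [hVi]; split
    · exact (hz i (by assumption)).1
    · exact isOpen_univ
  have hUin : ∀ i, (Ui i).Nonempty := by
    intro i; simp only [hUi]; split
    · exact ⟨u i, (hw i (by assumption)).2⟩
    · exact Set.univ_nonempty
  have hVin : ∀ i, (Vi i).Nonempty := by
    intro i; simp only [hVi]; split
    · exact ⟨v i, (hz i (by assumption)).2⟩
    · exact Set.univ_nonempty
  obtain ⟨U', V', hU', hV', hU'n, hV'n, hmain⟩ :=
    multi_lemma hf hwm m Ui Vi hUio hVio hUin hVin
  obtain ⟨n, hn⟩ := trans_of_wm hwm U' V' hU' hV' hU'n hV'n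
  have hall := hmain n hn
  choose y hy using hall
  choose x hxU hxy using fun i => (hy i).1
  refine ⟨n, (fun x : Fin m → X => fun i => f (x i))^[n] x, ⟨x, ?_, rfl⟩, ?_⟩
  · apply hwU
    intro i hi
    have h0 := hxU i
    simp only [hUi] at h0
    rwa [if_pos (Finset.mem_coe.mp hi)] at h0
  · rw [iter_pi]
    apply hzV
    intro i hi
    show f^[n] (x i) ∈ z i
    rw [hxy i]
    have h1 := (hy i).2
    simp only [hVi] at h1
    rwa [if_pos (Finset.mem_coe.mp hi)] at h1
end

section
/- Every totally transitive continuous map with a dense set of periodic points on a compact metric space (with at least two points) is weakly mixing. -/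
lemma prod_map_iterate {X : Type*} (f : X → X) :
    ∀ (k : ℕ) (a b : X),
    (fun p : X × X => (f p.1, f p.2))^[k] (a, b) = (f^[k] a, f^[k] b) := by
  intro k
  induction k with
  | zero => intro a b; simp
  | succ k ih =>
      intro a b
      rw [Function.iterate_succ_apply, Function.iterate_succ_apply,
        Function.iterate_succ_apply]
      exact ih (f a) (f b)

theorem stmt_14 {X : Type*} [MetricSpace X] [CompactSpace X] [Nontrivial X]
    (f : X → X) (hf : Continuous f)
    (htt : ∀ n : ℕ, 1 ≤ n → TopTransitive f^[n])
    (hper : Dense {x : X | ∃ n : ℕ, 0 < n ∧ f^[n] x = x}) :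
    WeaklyMixing f := by
  -- f is surjective
  have hsurj : Function.Surjective f := by
    have hclosed : IsClosed (Set.range f) := (isCompact_range hf).isClosed
    have hsub : {x : X | ∃ n : ℕ, 0 < n ∧ f^[n] x = x} ⊆ Set.range f := by
      rintro x ⟨n, hn, hx⟩
      refine ⟨f^[n - 1] x, ?_⟩
      have : f (f^[n - 1] x) = f^[n] x := by
        rw [← Function.iterate_succ_apply' f (n - 1) x,
          show (n - 1).succ = n by omega]
      rw [this, hx]
    have : Dense (Set.range f) := Dense.mono hsub hper
    intro y
    have : y ∈ closure (Set.range f) := this y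
    rwa [hclosed.closure_eq] at this
  rintro W1 W2 hW1 hW2 ⟨w1, hw1⟩ ⟨w2, hw2⟩
  obtain ⟨U1, V1, hU1, hV1, hw1a, hw1b, hUV1⟩ :=
    isOpen_prod_iff.mp hW1 w1.1 w1.2 hw1
  obtain ⟨U2, V2, hU2, hV2, hw2a, hw2b, hUV2⟩ :=
    isOpen_prod_iff.mp hW2 w2.1 w2.2 hw2
  -- transitivity of f on (V1, V2)
  obtain ⟨m, y, ⟨y', hy'V1, hy'eq⟩, hyV2⟩ :=
    htt 1 le_rfl V1 V2 hV1 hV2 ⟨w1.2, hw1b⟩ ⟨w2.2, hw2b⟩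
  have hy'm : f^[m] y' ∈ V2 := by
    have : (f^[1])^[m] y' = f^[m] y' := by rw [Function.iterate_one]
    rw [this] at hy'eq; rw [hy'eq]; exact hyV2
  -- periodic point in V1 ∩ f^[m]⁻¹ V2
  have hC1open : IsOpen (V1 ∩ f^[m] ⁻¹' V2) :=
    hV1.inter ((hf.iterate m).isOpen_preimage V2 hV2)
  obtain ⟨p, hpPer, hpV1, hpm⟩ :
      ∃ p, p ∈ {x : X | ∃ n : ℕ, 0 < n ∧ f^[n] x = x} ∧ p ∈ V1 ∧ f^[m] p ∈ V2 := by
    obtain ⟨p, hp1, hp2⟩ := hper.exists_mem_open hC1open ⟨y', hy'V1, hy'm⟩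
    exact ⟨p, hp1, hp2.1, hp2.2⟩
  obtain ⟨q, hq0, hqp⟩ := hpPer
  -- preimage of U2 under f^[m] is nonempty open
  have hB'open : IsOpen (f^[m] ⁻¹' U2) := (hf.iterate m).isOpen_preimage U2 hU2
  have hB'ne : (f^[m] ⁻¹' U2).Nonempty := by
    obtain ⟨z, hz⟩ := (hsurj.iterate m) w2.1
    exact ⟨z, by rw [Set.mem_preimage, hz]; exact hw2a⟩
  -- transitivity of f^[q]
  obtain ⟨t, x, ⟨x', hx'U1, hx'eq⟩, hxB'⟩ :=
    htt q hq0 U1 (f^[m] ⁻¹' U2) hU1 hB'open ⟨w1.1, hw1a⟩ hB'ne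
  have hxeq : f^[q * t] x' = x := by
    rw [Function.iterate_mul]; exact hx'eq
  refine ⟨m + q * t, (f^[m + q * t] x', f^[m + q * t] p), ⟨(x', p), hUV1 ⟨hx'U1, hpV1⟩, ?_⟩, ?_⟩
  · exact prod_map_iterate f (m + q * t) x' p
  · apply hUV2
    constructor
    · show f^[m + q * t] x' ∈ U2
      rw [Function.iterate_add_apply, hxeq]
      exact hxB'
    · show f^[m + q * t] p ∈ V2
      have hfix : f^[q * t] p = p := by
        rw [Function.iterate_mul]; exact Function.iterate_fixed hqp t
      rw [Function.iterate_add_apply, hfix]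
      exact hpm
end

section
/- Let X be a compact connected metric space with a disconnecting interval, and let f : X → X be totally transitive. Then f is topologically mixing. -/
set_option linter.unusedSectionVars false
set_option linter.unusedVariables false
set_option maxHeartbeats 1000000

/-- `X` has a disconnecting interval: an open set homeomorphic to `(0,1)` such that
removing any of its points leaves exactly two connected components. -/
def HasDisconnectingInterval (X : Type*) [TopologicalSpace X] : Prop :=
  ∃ J : Set X, IsOpen J ∧ Nonempty (J ≃ₜ Set.Ioo (0 : ℝ) 1) ∧
    ∀ x ∈ J, Nat.card (ConnectedComponents ({x}ᶜ : Set X)) = 2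

open Set Function Topology

namespace Stmt16Aux


section Comp
variable {X : Type*} [TopologicalSpace X]

/-- component of `x` in the complement of `v` -/
def cpt (v x : X) : Set X := connectedComponentIn ({v}ᶜ) x

lemma mem_compl_single {v x : X} (h : x ≠ v) : x ∈ ({v}ᶜ : Set X) := by
  simpa using h

lemma cpt_preconn (v x : X) : IsPreconnected (cpt v x) :=
  isPreconnected_connectedComponentIn

lemma mem_cpt {v x : X} (h : x ≠ v) : x ∈ cpt v x :=
  mem_connectedComponentIn (mem_compl_single h)

lemma cpt_subset (v x : X) : cpt v x ⊆ ({v}ᶜ : Set X) :=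
  connectedComponentIn_subset _ _

lemma cpt_eq_of_mem {v x y : X} (h : y ∈ cpt v x) : cpt v x = cpt v y :=
  connectedComponentIn_eq h

lemma cpt_rel_closed {v x : X} (hx : x ≠ v) :
    ∃ D : Set X, IsClosed D ∧ cpt v x = D ∩ ({v}ᶜ : Set X) := by
  have h := connectedComponentIn_eq_image (F := ({v}ᶜ : Set X)) (x := x) (mem_compl_single hx)
  have hcl : IsClosed (connectedComponent (⟨x, mem_compl_single hx⟩ : ({v}ᶜ : Set X))) :=
    isClosed_connectedComponent
  rw [isClosed_induced_iff] at hcl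
  obtain ⟨D, hD, hDeq⟩ := hcl
  refine ⟨D, hD, ?_⟩
  rw [cpt, h, ← hDeq]
  rw [Subtype.image_preimage_coe]
  exact (inter_comm _ _)

lemma cpt_closure_subset {v x : X} (hx : x ≠ v) :
    closure (cpt v x) ⊆ cpt v x ∪ {v} := by
  obtain ⟨D, hD, hDeq⟩ := cpt_rel_closed hx
  intro z hz
  rcases eq_or_ne z v with rfl | hzv
  · exact Or.inr rfl
  · left
    have hzD : z ∈ D := by
      have : closure (cpt v x) ⊆ D := by
        rw [hDeq]
        exact hD.closure_subset_iff.2 inter_subset_left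
      exact this hz
    rw [hDeq]; exact ⟨hzD, mem_compl_single hzv⟩


/-- among any three points off `v`, two have the same component -/
lemma cpt_two_class {v : X} (h2 : Nat.card (ConnectedComponents ({v}ᶜ : Set X)) = 2)
    {x y z : X} (hx : x ≠ v) (hy : y ≠ v) (hz : z ≠ v) :
    cpt v x = cpt v y ∨ cpt v x = cpt v z ∨ cpt v y = cpt v z := by
  obtain ⟨a, b, -, hab⟩ := Nat.card_eq_two_iff.1 h2
  set x' : ({v}ᶜ : Set X) := ⟨x, mem_compl_single hx⟩
  set y' : ({v}ᶜ : Set X) := ⟨y, mem_compl_single hy⟩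
  set z' : ({v}ᶜ : Set X) := ⟨z, mem_compl_single hz⟩
  have key : ∀ p q : ({v}ᶜ : Set X),
      (ConnectedComponents.mk p = ConnectedComponents.mk q) →
      cpt v p.1 = cpt v q.1 := by
    intro p q hpq
    have h' : connectedComponent p = connectedComponent q :=
      ConnectedComponents.coe_eq_coe.1 hpq
    have h1 := connectedComponentIn_eq_image (F := ({v}ᶜ : Set X)) (x := p.1) p.2
    have h2' := connectedComponentIn_eq_image (F := ({v}ᶜ : Set X)) (x := q.1) q.2
    rw [cpt, cpt, h1, h2']
    congr 1
  have hxm : (ConnectedComponents.mk x') = a ∨ (ConnectedComponents.mk x') = b := by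
    have : (ConnectedComponents.mk x') ∈ ({a, b} : Set _) := hab ▸ mem_univ _
    simpa using this
  have hym : (ConnectedComponents.mk y') = a ∨ (ConnectedComponents.mk y') = b := by
    have : (ConnectedComponents.mk y') ∈ ({a, b} : Set _) := hab ▸ mem_univ _
    simpa using this
  have hzm : (ConnectedComponents.mk z') = a ∨ (ConnectedComponents.mk z') = b := by
    have : (ConnectedComponents.mk z') ∈ ({a, b} : Set _) := hab ▸ mem_univ _
    simpa using this
  rcases hxm with h1 | h1 <;> rcases hym with h2' | h2' <;> rcases hzm with h3 | h3
  · exact Or.inl (key _ _ (h1.trans h2'.symm))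
  · exact Or.inl (key _ _ (h1.trans h2'.symm))
  · exact Or.inr (Or.inl (key _ _ (h1.trans h3.symm)))
  · exact Or.inr (Or.inr (key _ _ (h2'.trans h3.symm)))
  · exact Or.inr (Or.inr (key _ _ (h2'.trans h3.symm)))
  · exact Or.inr (Or.inl (key _ _ (h1.trans h3.symm)))
  · exact Or.inl (key _ _ (h1.trans h2'.symm))
  · exact Or.inl (key _ _ (h1.trans h2'.symm))

lemma cpt_exists_other {v : X} (h2 : Nat.card (ConnectedComponents ({v}ᶜ : Set X)) = 2)
    {x : X} (hx : x ≠ v) : ∃ y, y ≠ v ∧ cpt v y ≠ cpt v x := by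
  obtain ⟨a, b, hab, habu⟩ := Nat.card_eq_two_iff.1 h2
  set x' : ({v}ᶜ : Set X) := ⟨x, mem_compl_single hx⟩
  have hxm : (ConnectedComponents.mk x') = a ∨ (ConnectedComponents.mk x') = b := by
    have : (ConnectedComponents.mk x') ∈ ({a, b} : Set _) := habu ▸ mem_univ _
    simpa using this
  -- the other class
  obtain ⟨c, hc⟩ : ∃ c, c ≠ ConnectedComponents.mk x' ∧ (c = a ∨ c = b) := by
    rcases hxm with h | h
    · exact ⟨b, by rw [h]; exact hab.symm, Or.inr rfl⟩
    · exact ⟨a, by rw [h]; exact hab, Or.inl rfl⟩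
  obtain ⟨y', hy'⟩ := ConnectedComponents.surjective_coe c
  refine ⟨y'.1, Set.mem_compl_singleton_iff.1 y'.2, ?_⟩
  intro heq
  apply hc.1
  rw [← hy']
  -- from set equality derive component equality
  have h1 := connectedComponentIn_eq_image (F := ({v}ᶜ : Set X)) (x := y'.1) y'.2
  have h2' := connectedComponentIn_eq_image (F := ({v}ᶜ : Set X)) (x := x) (mem_compl_single hx)
  rw [cpt, cpt, h1, h2'] at heq
  have himg := Subtype.val_injective.image_injective heq
  have : connectedComponent y' = connectedComponent x' := by
    convert himg using 2
  exact ConnectedComponents.coe_eq_coe.2 this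

lemma cpt_disjoint {v x y : X} (hne : cpt v x ≠ cpt v y) :
    cpt v x ∩ cpt v y = ∅ := by
  by_contra h
  obtain ⟨z, hz1, hz2⟩ := nonempty_iff_ne_empty.2 h
  exact hne ((cpt_eq_of_mem hz1).trans (cpt_eq_of_mem hz2).symm)

lemma cpt_cover {v : X} (h2 : Nat.card (ConnectedComponents ({v}ᶜ : Set X)) = 2)
    {x y : X} (hx : x ≠ v) (hy : y ≠ v) (hne : cpt v x ≠ cpt v y)
    {z : X} (hz : z ≠ v) : z ∈ cpt v x ∨ z ∈ cpt v y := by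
  rcases cpt_two_class h2 hz hx hy with h | h | h
  · exact Or.inl (h ▸ mem_cpt hz)
  · exact Or.inr (h ▸ mem_cpt hz)
  · exact absurd h hne

lemma cpt_open [T1Space X] {v : X}
    (h2 : Nat.card (ConnectedComponents ({v}ᶜ : Set X)) = 2)
    {x : X} (hx : x ≠ v) : IsOpen (cpt v x) := by
  obtain ⟨y, hy, hyne⟩ := cpt_exists_other h2 hx
  have hxyne : cpt v x ≠ cpt v y := hyne.symm
  obtain ⟨D, hD, hDeq⟩ := cpt_rel_closed hy
  have heq : cpt v x = ({v}ᶜ : Set X) ∩ Dᶜ := by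
    ext z
    constructor
    · intro hzx
      have hzv : z ≠ v := by
        have := cpt_subset v x hzx; simpa using this
      refine ⟨mem_compl_single hzv, ?_⟩
      intro hzD
      have hzy : z ∈ cpt v y := by rw [hDeq]; exact ⟨hzD, mem_compl_single hzv⟩
      have hdis := cpt_disjoint hxyne
      have : z ∈ cpt v x ∩ cpt v y := ⟨hzx, hzy⟩
      rw [hdis] at this
      exact this
    · rintro ⟨hzv, hzD⟩
      have hz : z ≠ v := by simpa using hzv
      rcases cpt_cover h2 hx hy hxyne hz with h | h
      · exact h
      · exfalso
        apply hzD
        rw [hDeq] at h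
        exact h.1
  rw [heq]
  exact isOpen_compl_singleton.inter hD.isOpen_compl


lemma cpt_v_mem_closure [PreconnectedSpace X] [T1Space X] {v : X}
    (h2 : Nat.card (ConnectedComponents ({v}ᶜ : Set X)) = 2)
    {x : X} (hx : x ≠ v) : v ∈ closure (cpt v x) := by
  by_contra hv
  have hsub : closure (cpt v x) ⊆ cpt v x := by
    intro z hz
    rcases cpt_closure_subset hx hz with h | h
    · exact h
    · exact absurd (h ▸ hz) hv
  have hcl : IsClosed (cpt v x) := isClosed_of_closure_subset hsub
  have hclopen : IsClopen (cpt v x) := ⟨hcl, cpt_open h2 hx⟩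
  rcases isClopen_iff.1 hclopen with h | h
  · exact absurd (h ▸ mem_cpt hx) (by simp)
  · have : v ∈ cpt v x := h ▸ mem_univ v
    exact absurd (cpt_subset v x this) (by simp)

end Comp

section Main
variable {X : Type*} [MetricSpace X] [CompactSpace X] [ConnectedSpace X]
variable (J : Set X) (e : ↥J ≃ₜ ↥(Set.Ioo (0:ℝ) 1))

/-- parametrization of the free interval -/
noncomputable def fj (p : ↥(Set.Ioo (0:ℝ) 1)) : X := ((e.symm p : ↥J) : X)

noncomputable def Pt (t : ℝ) : X :=
  if h : t ∈ Set.Ioo (0:ℝ) 1 then fj J e ⟨t, h⟩ else fj J e ⟨1/2, by norm_num⟩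

open Classical in
noncomputable def cJ (x : X) : ℝ := if h : x ∈ J then (e ⟨x, h⟩ : ℝ) else 0

def AO (c d : ℝ) : Set X := fj J e '' {p | c < (p : ℝ) ∧ (p : ℝ) < d}
def AC (c d : ℝ) : Set X := fj J e '' {p | c ≤ (p : ℝ) ∧ (p : ℝ) ≤ d}

lemma fj_inj : Injective (fj J e) := fun p q h =>
  e.symm.injective (Subtype.val_injective h)

lemma fj_mem (p : ↥(Set.Ioo (0:ℝ) 1)) : fj J e p ∈ J := (e.symm p).2

lemma fj_cont : Continuous (fj J e) :=
  continuous_subtype_val.comp e.symm.continuous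

lemma cJ_fj (p : ↥(Set.Ioo (0:ℝ) 1)) : cJ J e (fj J e p) = (p : ℝ) := by
  rw [cJ, dif_pos (fj_mem J e p)]
  congr 1
  have : (⟨fj J e p, fj_mem J e p⟩ : ↥J) = e.symm p := rfl
  rw [this, e.apply_symm_apply]

lemma range_fj : range (fj J e) = J := by
  apply subset_antisymm
  · rintro x ⟨p, rfl⟩; exact fj_mem J e p
  · intro x hx
    exact ⟨e ⟨x, hx⟩, by rw [fj, e.symm_apply_apply]⟩

lemma fj_image_open {s : Set ↥(Set.Ioo (0:ℝ) 1)} (hJ : IsOpen J) (hs : IsOpen s) :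
    IsOpen (fj J e '' s) := by
  have : fj J e '' s = Subtype.val '' (e.symm '' s) := by
    rw [← image_comp]; rfl
  rw [this]
  exact hJ.isOpenMap_subtype_val _ (e.symm.isOpenMap s hs)

lemma Pt_eq {t : ℝ} (h : t ∈ Set.Ioo (0:ℝ) 1) : Pt J e t = fj J e ⟨t, h⟩ := dif_pos h

lemma Pt_mem {t : ℝ} (h : t ∈ Set.Ioo (0:ℝ) 1) : Pt J e t ∈ J := by
  rw [Pt_eq J e h]; exact fj_mem J e _

lemma cJ_Pt {t : ℝ} (h : t ∈ Set.Ioo (0:ℝ) 1) : cJ J e (Pt J e t) = t := by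
  rw [Pt_eq J e h, cJ_fj]

lemma Pt_inj {s t : ℝ} (hs : s ∈ Set.Ioo (0:ℝ) 1) (ht : t ∈ Set.Ioo (0:ℝ) 1)
    (h : Pt J e s = Pt J e t) : s = t := by
  have := congrArg (cJ J e) h
  rwa [cJ_Pt J e hs, cJ_Pt J e ht] at this

lemma fj_eq_Pt (p : ↥(Set.Ioo (0:ℝ) 1)) : fj J e p = Pt J e (p : ℝ) := by
  rw [Pt_eq J e p.2]

lemma AO_open {c d : ℝ} (hJ : IsOpen J) : IsOpen (AO J e c d) := by
  apply fj_image_open J e hJ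
  have : {p : ↥(Set.Ioo (0:ℝ) 1) | c < (p : ℝ) ∧ (p : ℝ) < d} =
      Subtype.val ⁻¹' (Set.Ioo c d) := rfl
  rw [this]
  exact isOpen_Ioo.preimage continuous_subtype_val

lemma mem_AO_iff {c d : ℝ} {t : ℝ} (ht : t ∈ Set.Ioo (0:ℝ) 1) :
    Pt J e t ∈ AO J e c d ↔ (c < t ∧ t < d) := by
  constructor
  · rintro ⟨p, hp, hpe⟩
    rw [Pt_eq J e ht] at hpe
    have h2 := fj_inj J e hpe
    subst h2
    exact hp
  · intro h
    exact ⟨⟨t, ht⟩, h, (Pt_eq J e ht).symm⟩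

lemma AO_subset_J (c d : ℝ) : AO J e c d ⊆ J := by
  rintro x ⟨p, -, rfl⟩; exact fj_mem J e p

lemma AC_subset_J (c d : ℝ) : AC J e c d ⊆ J := by
  rintro x ⟨p, -, rfl⟩; exact fj_mem J e p

lemma AO_subset_AC (c d : ℝ) : AO J e c d ⊆ AC J e c d := by
  rintro x ⟨p, hp, rfl⟩; exact ⟨p, ⟨hp.1.le, hp.2.le⟩, rfl⟩

lemma AO_preconn (c d : ℝ) (hc : 0 ≤ c) (hd : d ≤ 1) : IsPreconnected (AO J e c d) := by
  rw [AO]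
  apply IsPreconnected.image _ _ (fj_cont J e).continuousOn
  rw [← IsInducing.subtypeVal.isPreconnected_image]
  have : Subtype.val '' {p : ↥(Set.Ioo (0:ℝ) 1) | c < (p : ℝ) ∧ (p : ℝ) < d} =
      Set.Ioo c d ∩ Set.Ioo (0:ℝ) 1 := by
    ext s
    simp only [mem_image, mem_setOf_eq, mem_inter_iff, mem_Ioo]
    constructor
    · rintro ⟨p, hp, rfl⟩; exact ⟨hp, p.2⟩
    · rintro ⟨h1, h2⟩; exact ⟨⟨s, h2⟩, h1, rfl⟩
  rw [this, Set.Ioo_inter_Ioo]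
  exact isPreconnected_Ioo

lemma AC_compact {c d : ℝ} (hc : 0 < c) (hd : d < 1) : IsCompact (AC J e c d) := by
  rcases le_or_gt c d with hcd | hcd
  · have hsub : Set.Icc c d ⊆ Set.Ioo (0:ℝ) 1 := fun s hs => ⟨lt_of_lt_of_le hc hs.1, lt_of_le_of_lt hs.2 hd⟩
    have : AC J e c d = Set.range (fj J e ∘ Set.inclusion hsub) := by
      ext x
      simp only [AC, mem_image, mem_setOf_eq, mem_range, comp_apply]
      constructor
      · rintro ⟨p, hp, rfl⟩
        exact ⟨⟨(p : ℝ), hp⟩, by simp [Set.inclusion]⟩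
      · rintro ⟨q, rfl⟩
        exact ⟨Set.inclusion hsub q, ⟨q.2.1, q.2.2⟩, rfl⟩
    rw [this]
    exact isCompact_range ((fj_cont J e).comp (continuous_inclusion hsub))
  · have : AC J e c d = ∅ := by
      ext x; simp only [AC, mem_image, mem_setOf_eq, mem_empty_iff_false, iff_false]
      rintro ⟨p, hp, -⟩
      exact absurd (hp.1.trans hp.2) (not_le.2 hcd)
    rw [this]; exact isCompact_empty

lemma AC_closed {c d : ℝ} (hc : 0 < c) (hd : d < 1) : IsClosed (AC J e c d) :=
  (AC_compact J e hc hd).isClosed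


variable (hJ : IsOpen J)
variable (hcut : ∀ x ∈ J, Nat.card (ConnectedComponents ({x}ᶜ : Set X)) = 2)

lemma mem_Ioo_half {t : ℝ} (ht : t ∈ Set.Ioo (0:ℝ) 1) : t/2 ∈ Set.Ioo (0:ℝ) 1 := by
  obtain ⟨h1, h2⟩ := ht; constructor <;> [linarith; linarith]

lemma mem_Ioo_half' {t : ℝ} (ht : t ∈ Set.Ioo (0:ℝ) 1) : (t+1)/2 ∈ Set.Ioo (0:ℝ) 1 := by
  obtain ⟨h1, h2⟩ := ht; constructor <;> [linarith; linarith]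

lemma Pt_ne {s t : ℝ} (hs : s ∈ Set.Ioo (0:ℝ) 1) (ht : t ∈ Set.Ioo (0:ℝ) 1)
    (hne : s ≠ t) : Pt J e s ≠ Pt J e t := fun h => hne (Pt_inj J e hs ht h)

/-- left component at `Pt t` -/
noncomputable def Lc (t : ℝ) : Set X := cpt (Pt J e t) (Pt J e (t/2))
/-- right component at `Pt t` -/
noncomputable def Rc (t : ℝ) : Set X := cpt (Pt J e t) (Pt J e ((t+1)/2))

/-- `t` is a regular (non-pathological) parameter -/
def NP (t : ℝ) : Prop := Lc J e t ≠ Rc J e t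

lemma below_mem_Lc {s t : ℝ} (hs : s ∈ Set.Ioo (0:ℝ) 1) (ht : t ∈ Set.Ioo (0:ℝ) 1)
    (hst : s < t) : Pt J e s ∈ Lc J e t := by
  have hS : IsPreconnected (AO J e 0 t) := AO_preconn J e 0 t le_rfl ht.2.le
  have hSc : AO J e 0 t ⊆ ({Pt J e t}ᶜ : Set X) := by
    rintro x ⟨p, hp, rfl⟩
    rw [fj_eq_Pt J e p]
    exact Set.mem_compl_singleton_iff.2 (Pt_ne J e p.2 ht (ne_of_lt hp.2))
  have hhalf : Pt J e (t/2) ∈ AO J e 0 t := by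
    rw [mem_AO_iff J e (mem_Ioo_half ht)]
    constructor <;> [exact (mem_Ioo_half ht).1; linarith [ht.1]]
  have hsS : Pt J e s ∈ AO J e 0 t := by
    rw [mem_AO_iff J e hs]; exact ⟨hs.1, hst⟩
  exact hS.subset_connectedComponentIn hhalf hSc hsS

lemma above_mem_Rc {s t : ℝ} (hs : s ∈ Set.Ioo (0:ℝ) 1) (ht : t ∈ Set.Ioo (0:ℝ) 1)
    (hst : t < s) : Pt J e s ∈ Rc J e t := by
  have hS : IsPreconnected (AO J e t 1) := AO_preconn J e t 1 ht.1.le le_rfl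
  have hSc : AO J e t 1 ⊆ ({Pt J e t}ᶜ : Set X) := by
    rintro x ⟨p, hp, rfl⟩
    rw [fj_eq_Pt J e p]
    exact Set.mem_compl_singleton_iff.2 (Pt_ne J e p.2 ht (ne_of_gt hp.1))
  have hhalf : Pt J e ((t+1)/2) ∈ AO J e t 1 := by
    rw [mem_AO_iff J e (mem_Ioo_half' ht)]
    constructor <;> [linarith [ht.2]; exact (mem_Ioo_half' ht).2]
  have hsS : Pt J e s ∈ AO J e t 1 := by
    rw [mem_AO_iff J e hs]; exact ⟨hst, hs.2⟩
  exact hS.subset_connectedComponentIn hhalf hSc hsS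

lemma Lc_ne_v {t : ℝ} (ht : t ∈ Set.Ioo (0:ℝ) 1) : Pt J e (t/2) ≠ Pt J e t :=
  Pt_ne J e (mem_Ioo_half ht) ht (by intro h; obtain ⟨h1,_⟩ := ht; linarith)

lemma Rc_ne_v {t : ℝ} (ht : t ∈ Set.Ioo (0:ℝ) 1) : Pt J e ((t+1)/2) ≠ Pt J e t :=
  Pt_ne J e (mem_Ioo_half' ht) ht (by intro h; obtain ⟨_,h2⟩ := ht; linarith)

lemma Lc_open (hcut : ∀ x ∈ J, Nat.card (ConnectedComponents ({x}ᶜ : Set X)) = 2)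
    {t : ℝ} (ht : t ∈ Set.Ioo (0:ℝ) 1) : IsOpen (Lc J e t) :=
  cpt_open (hcut _ (Pt_mem J e ht)) (Lc_ne_v J e ht)

lemma Rc_open (hcut : ∀ x ∈ J, Nat.card (ConnectedComponents ({x}ᶜ : Set X)) = 2)
    {t : ℝ} (ht : t ∈ Set.Ioo (0:ℝ) 1) : IsOpen (Rc J e t) :=
  cpt_open (hcut _ (Pt_mem J e ht)) (Rc_ne_v J e ht)

lemma Lc_sub {t : ℝ} : Lc J e t ⊆ ({Pt J e t}ᶜ : Set X) := cpt_subset _ _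
lemma Rc_sub {t : ℝ} : Rc J e t ⊆ ({Pt J e t}ᶜ : Set X) := cpt_subset _ _

lemma np_disjoint {t : ℝ} (hnp : NP J e t) : Lc J e t ∩ Rc J e t = ∅ :=
  cpt_disjoint hnp

lemma np_cover (hcut : ∀ x ∈ J, Nat.card (ConnectedComponents ({x}ᶜ : Set X)) = 2)
    {t : ℝ} (ht : t ∈ Set.Ioo (0:ℝ) 1) (hnp : NP J e t)
    {z : X} (hz : z ≠ Pt J e t) : z ∈ Lc J e t ∨ z ∈ Rc J e t :=
  cpt_cover (hcut _ (Pt_mem J e ht)) (Lc_ne_v J e ht) (Rc_ne_v J e ht) hnp hz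

lemma mem_Rc_of_Z {a : ℝ} (ha : a ∈ Set.Ioo (0:ℝ) 1) (hnpa : NP J e a)
    {s : ℝ} (hs : s ∈ Set.Ioo (0:ℝ) 1) (hmem : Pt J e s ∈ Rc J e a) : a < s := by
  rcases lt_trichotomy s a with h | h | h
  · exfalso
    have h1 : Pt J e s ∈ Lc J e a := below_mem_Lc J e hs ha h
    have := np_disjoint J e hnpa
    have h2 : Pt J e s ∈ Lc J e a ∩ Rc J e a := ⟨h1, hmem⟩
    rw [this] at h2; exact h2
  · exfalso
    subst h
    exact absurd hmem (by have := Rc_sub J e (t := s); intro hm; exact (this hm) rfl)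
  · exact h

lemma mem_Lc_of_Z {b : ℝ} (hb : b ∈ Set.Ioo (0:ℝ) 1) (hnpb : NP J e b)
    {s : ℝ} (hs : s ∈ Set.Ioo (0:ℝ) 1) (hmem : Pt J e s ∈ Lc J e b) : s < b := by
  rcases lt_trichotomy s b with h | h | h
  · exact h
  · exfalso
    subst h
    exact absurd hmem (by have := Lc_sub J e (t := s); intro hm; exact (this hm) rfl)
  · exfalso
    have h1 : Pt J e s ∈ Rc J e b := above_mem_Rc J e hs hb h
    have := np_disjoint J e hnpb
    have h2 : Pt J e s ∈ Lc J e b ∩ Rc J e b := ⟨hmem, h1⟩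
    rw [this] at h2; exact h2

/-- THE LINEARITY LEMMA -/
lemma RL_eq (hJ : IsOpen J)
    (hcut : ∀ x ∈ J, Nat.card (ConnectedComponents ({x}ᶜ : Set X)) = 2)
    {a b : ℝ} (ha : a ∈ Set.Ioo (0:ℝ) 1) (hb : b ∈ Set.Ioo (0:ℝ) 1)
    (hab : a < b) (hnpa : NP J e a) (hnpb : NP J e b) :
    Rc J e a ∩ Lc J e b = AO J e a b := by
  set Z := Rc J e a ∩ Lc J e b with hZ
  have hAOZ : AO J e a b ⊆ Z := by
    rintro x ⟨p, hp, rfl⟩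
    rw [fj_eq_Pt J e p]
    exact ⟨above_mem_Rc J e p.2 ha hp.1, below_mem_Lc J e p.2 hb hp.2⟩
  have hZJ : Z ∩ J = AO J e a b := by
    apply subset_antisymm
    · rintro x ⟨hxZ, hxJ⟩
      rw [← range_fj J e] at hxJ
      obtain ⟨p, rfl⟩ := hxJ
      have hpe := fj_eq_Pt J e p
      have h1 : a < (p : ℝ) := by
        apply mem_Rc_of_Z J e ha hnpa p.2
        rw [← hpe]; exact hxZ.1
      have h2 : (p : ℝ) < b := by
        apply mem_Lc_of_Z J e hb hnpb p.2
        rw [← hpe]; exact hxZ.2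
      exact ⟨p, ⟨h1, h2⟩, rfl⟩
    · intro x hx
      exact ⟨hAOZ hx, AO_subset_J J e a b hx⟩
  have hZopen : IsOpen Z := (Rc_open J e hcut ha).inter (Lc_open J e hcut hb)
  set G := Z \ J with hG
  have hGAC : G = Z \ AC J e a b := by
    apply subset_antisymm
    · rintro x ⟨hxZ, hxJ⟩
      exact ⟨hxZ, fun hc => hxJ (AC_subset_J J e a b hc)⟩
    · rintro x ⟨hxZ, hxAC⟩
      refine ⟨hxZ, fun hxJ => hxAC ?_⟩
      have : x ∈ Z ∩ J := ⟨hxZ, hxJ⟩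
      rw [hZJ] at this
      exact AO_subset_AC J e a b this
  have hGopen : IsOpen G := by
    rw [hGAC]
    exact hZopen.sdiff (AC_closed J e ha.1 hb.2)
  have hGclosed : IsClosed G := by
    apply isClosed_of_closure_subset
    intro z hz
    have hzJc : z ∉ J := by
      have h1 : closure G ⊆ closure (Jᶜ : Set X) := closure_mono (fun w hw => hw.2)
      have h2 : closure (Jᶜ : Set X) = (Jᶜ : Set X) := hJ.isClosed_compl.closure_eq
      have := h1 hz; rw [h2] at this; exact this
    have hza : z ∈ Rc J e a := by
      have h1 : closure G ⊆ closure (Rc J e a) :=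
        closure_mono (fun w hw => hw.1.1)
      rcases cpt_closure_subset (Rc_ne_v J e ha) (h1 hz) with h | h
      · exact h
      · exfalso
        rw [Set.mem_singleton_iff] at h
        rw [h] at hzJc
        exact hzJc (Pt_mem J e ha)
    have hzb : z ∈ Lc J e b := by
      have h1 : closure G ⊆ closure (Lc J e b) :=
        closure_mono (fun w hw => hw.1.2)
      rcases cpt_closure_subset (Lc_ne_v J e hb) (h1 hz) with h | h
      · exact h
      · exfalso
        rw [Set.mem_singleton_iff] at h
        rw [h] at hzJc
        exact hzJc (Pt_mem J e hb)
    exact ⟨⟨hza, hzb⟩, hzJc⟩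
  have hGempty : G = ∅ := by
    rcases isClopen_iff.1 ⟨hGclosed, hGopen⟩ with h | h
    · exact h
    · exfalso
      have : Pt J e a ∈ G := h ▸ mem_univ _
      exact this.2 (Pt_mem J e ha)
  apply subset_antisymm _ hAOZ
  intro x hx
  rcases em (x ∈ J) with hxJ | hxJ
  · rw [← hZJ]; exact ⟨hx, hxJ⟩
  · exfalso
    have : x ∈ G := ⟨hx, hxJ⟩
    rw [hGempty] at this
    exact this


lemma Pt_mem_AC {a b : ℝ} (ha : a ∈ Set.Ioo (0:ℝ) 1) (hab : a ≤ b) :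
    Pt J e a ∈ AC J e a b := ⟨⟨a, ha⟩, ⟨le_rfl, hab⟩, (Pt_eq J e ha).symm⟩

lemma Pt_mem_AC' {a b : ℝ} (hb : b ∈ Set.Ioo (0:ℝ) 1) (hab : a ≤ b) :
    Pt J e b ∈ AC J e a b := ⟨⟨b, hb⟩, ⟨hab, le_rfl⟩, (Pt_eq J e hb).symm⟩

lemma cover3 (hJ : IsOpen J)
    (hcut : ∀ x ∈ J, Nat.card (ConnectedComponents ({x}ᶜ : Set X)) = 2)
    {a b : ℝ} (ha : a ∈ Set.Ioo (0:ℝ) 1) (hb : b ∈ Set.Ioo (0:ℝ) 1)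
    (hab : a < b) (hnpa : NP J e a) (hnpb : NP J e b) (x : X) :
    x ∈ Lc J e a ∨ x ∈ AC J e a b ∨ x ∈ Rc J e b := by
  by_cases hAC : x ∈ AC J e a b
  · exact Or.inr (Or.inl hAC)
  have hxa : x ≠ Pt J e a := by
    rintro rfl; exact hAC (Pt_mem_AC J e ha hab.le)
  have hxb : x ≠ Pt J e b := by
    rintro rfl; exact hAC (Pt_mem_AC' J e hb hab.le)
  rcases np_cover J e hcut ha hnpa hxa with h | h
  · exact Or.inl h
  rcases np_cover J e hcut hb hnpb hxb with h' | h'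
  · exfalso
    apply hAC
    apply AO_subset_AC J e a b
    rw [← RL_eq J e hJ hcut ha hb hab hnpa hnpb]
    exact ⟨h, h'⟩
  · exact Or.inr (Or.inr h')

lemma AC_disj_Lc {a b : ℝ} (ha : a ∈ Set.Ioo (0:ℝ) 1) (hnpa : NP J e a)
    {x : X} (hx : x ∈ AC J e a b) : x ∉ Lc J e a := by
  obtain ⟨p, hp, rfl⟩ := hx
  rcases eq_or_lt_of_le hp.1 with h | h
  · intro hc
    have hpa : fj J e p = Pt J e a := by rw [fj_eq_Pt J e p, ← h]
    rw [hpa] at hc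
    exact (Lc_sub J e hc) rfl
  · intro hc
    have h1 : fj J e p ∈ Rc J e a := by
      rw [fj_eq_Pt J e p]; exact above_mem_Rc J e p.2 ha h
    have h2 : fj J e p ∈ Lc J e a ∩ Rc J e a := ⟨hc, h1⟩
    rw [np_disjoint J e hnpa] at h2
    exact h2

lemma AC_disj_Rc {a b : ℝ} (hb : b ∈ Set.Ioo (0:ℝ) 1) (hnpb : NP J e b)
    {x : X} (hx : x ∈ AC J e a b) : x ∉ Rc J e b := by
  obtain ⟨p, hp, rfl⟩ := hx
  rcases eq_or_lt_of_le hp.2 with h | h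
  · intro hc
    have hpb : fj J e p = Pt J e b := by rw [fj_eq_Pt J e p, h]
    rw [hpb] at hc
    exact (Rc_sub J e hc) rfl
  · intro hc
    have h1 : fj J e p ∈ Lc J e b := by
      rw [fj_eq_Pt J e p]; exact below_mem_Lc J e p.2 hb h
    have h2 : fj J e p ∈ Lc J e b ∩ Rc J e b := ⟨h1, hc⟩
    rw [np_disjoint J e hnpb] at h2
    exact h2

lemma Lc_mono (hcut : ∀ x ∈ J, Nat.card (ConnectedComponents ({x}ᶜ : Set X)) = 2)
    {a b : ℝ} (ha : a ∈ Set.Ioo (0:ℝ) 1) (hb : b ∈ Set.Ioo (0:ℝ) 1)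
    (hab : a < b) (hnpa : NP J e a) : Lc J e a ⊆ Lc J e b := by
  set T := Lc J e a ∪ {Pt J e a} with hT
  have hTpre : IsPreconnected T := by
    apply IsPreconnected.subset_closure (cpt_preconn _ _) subset_union_left
    intro z hz
    rcases hz with hz | hz
    · exact subset_closure hz
    · rw [Set.mem_singleton_iff] at hz
      rw [hz]
      exact cpt_v_mem_closure (hcut _ (Pt_mem J e ha)) (Lc_ne_v J e ha)
  have hTsub : T ⊆ ({Pt J e b}ᶜ : Set X) := by
    rintro z (hz | hz)
    · intro hc
      rw [Set.mem_singleton_iff] at hc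
      subst hc
      have h1 : Pt J e b ∈ Rc J e a := above_mem_Rc J e hb ha hab
      have h2 : Pt J e b ∈ Lc J e a ∩ Rc J e a := ⟨hz, h1⟩
      rw [np_disjoint J e hnpa] at h2
      exact h2
    · rw [Set.mem_singleton_iff] at hz
      rw [hz]
      exact Set.mem_compl_singleton_iff.2 (Pt_ne J e ha hb (ne_of_lt hab))
  have hmem : Pt J e a ∈ T := Or.inr rfl
  have hsub := hTpre.subset_connectedComponentIn hmem hTsub
  have heq : connectedComponentIn ({Pt J e b}ᶜ : Set X) (Pt J e a) = Lc J e b := by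
    have h1 : Pt J e a ∈ Lc J e b := below_mem_Lc J e ha hb hab
    exact (cpt_eq_of_mem h1).symm
  rw [heq] at hsub
  exact fun z hz => hsub (Or.inl hz)

lemma Lc_disj_Rc (hcut : ∀ x ∈ J, Nat.card (ConnectedComponents ({x}ᶜ : Set X)) = 2)
    {a b : ℝ} (ha : a ∈ Set.Ioo (0:ℝ) 1) (hb : b ∈ Set.Ioo (0:ℝ) 1)
    (hab : a < b) (hnpa : NP J e a) (hnpb : NP J e b)
    {x : X} (hx : x ∈ Lc J e a) : x ∉ Rc J e b := by
  intro hc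
  have h1 : x ∈ Lc J e b := Lc_mono J e hcut ha hb hab hnpa hx
  have h2 : x ∈ Lc J e b ∩ Rc J e b := ⟨h1, hc⟩
  rw [np_disjoint J e hnpb] at h2
  exact h2

section Rho
variable (hJ : IsOpen J)

open Classical in
/-- clipped coordinate relative to window `[a,b]` -/
noncomputable def rho (a b : ℝ) (x : X) : ℝ :=
  if x ∈ Lc J e a then a else if x ∈ Rc J e b then b else cJ J e x

variable {a b : ℝ}

lemma fj_image_param_compact {K : Set ℝ} (hK : IsCompact K)
    (hsub : K ⊆ Set.Ioo (0:ℝ) 1) :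
    IsCompact (fj J e '' {p | (p:ℝ) ∈ K}) := by
  haveI : CompactSpace ↥K := isCompact_iff_compactSpace.mp hK
  have heq : fj J e '' {p | (p:ℝ) ∈ K} = Set.range (fj J e ∘ Set.inclusion hsub) := by
    ext x
    simp only [mem_image, mem_setOf_eq, mem_range, comp_apply]
    constructor
    · rintro ⟨p, hp, rfl⟩
      exact ⟨⟨(p:ℝ), hp⟩, by simp [Set.inclusion]⟩
    · rintro ⟨q, rfl⟩
      exact ⟨Set.inclusion hsub q, q.2, rfl⟩
  rw [heq]
  exact isCompact_range ((fj_cont J e).comp (continuous_inclusion hsub))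

lemma rho_Lc {x : X} (hx : x ∈ Lc J e a) : rho J e a b x = a := if_pos hx

lemma rho_Rc (hcut : ∀ x ∈ J, Nat.card (ConnectedComponents ({x}ᶜ : Set X)) = 2)
    (ha : a ∈ Set.Ioo (0:ℝ) 1) (hb : b ∈ Set.Ioo (0:ℝ) 1) (hab : a < b)
    (hnpa : NP J e a) (hnpb : NP J e b)
    {x : X} (hx : x ∈ Rc J e b) : rho J e a b x = b := by
  rw [rho, if_neg, if_pos hx]
  intro hc
  exact Lc_disj_Rc J e hcut ha hb hab hnpa hnpb hc hx

lemma rho_AC (ha : a ∈ Set.Ioo (0:ℝ) 1) (hb : b ∈ Set.Ioo (0:ℝ) 1)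
    (hnpa : NP J e a) (hnpb : NP J e b)
    {x : X} (hx : x ∈ AC J e a b) : rho J e a b x = cJ J e x := by
  rw [rho, if_neg (AC_disj_Lc J e ha hnpa hx), if_neg (AC_disj_Rc J e hb hnpb hx)]

lemma Icc_subset_Ioo01 (ha : a ∈ Set.Ioo (0:ℝ) 1) (hb : b ∈ Set.Ioo (0:ℝ) 1) :
    Set.Icc a b ⊆ Set.Ioo (0:ℝ) 1 :=
  fun s hs => ⟨lt_of_lt_of_le ha.1 hs.1, lt_of_le_of_lt hs.2 hb.2⟩

lemma Pt_mem_AC_of_Icc (ha : a ∈ Set.Ioo (0:ℝ) 1) (hb : b ∈ Set.Ioo (0:ℝ) 1)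
    {s : ℝ} (hs : s ∈ Set.Icc a b) : Pt J e s ∈ AC J e a b := by
  have hs0 : s ∈ Set.Ioo (0:ℝ) 1 := Icc_subset_Ioo01 ha hb hs
  exact ⟨⟨s, hs0⟩, ⟨hs.1, hs.2⟩, (Pt_eq J e hs0).symm⟩

lemma rho_Pt (ha : a ∈ Set.Ioo (0:ℝ) 1) (hb : b ∈ Set.Ioo (0:ℝ) 1)
    (hnpa : NP J e a) (hnpb : NP J e b)
    {s : ℝ} (hs : s ∈ Set.Icc a b) : rho J e a b (Pt J e s) = s := by
  rw [rho_AC J e ha hb hnpa hnpb (Pt_mem_AC_of_Icc J e ha hb hs)]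
  exact cJ_Pt J e (Icc_subset_Ioo01 ha hb hs)

lemma rho_mem_Icc (hJ : IsOpen J)
    (hcut : ∀ x ∈ J, Nat.card (ConnectedComponents ({x}ᶜ : Set X)) = 2)
    (ha : a ∈ Set.Ioo (0:ℝ) 1) (hb : b ∈ Set.Ioo (0:ℝ) 1) (hab : a < b)
    (hnpa : NP J e a) (hnpb : NP J e b) (x : X) :
    rho J e a b x ∈ Set.Icc a b := by
  by_cases hL : x ∈ Lc J e a
  · rw [rho_Lc J e hL]; exact ⟨le_rfl, hab.le⟩
  by_cases hR : x ∈ Rc J e b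
  · rw [rho_Rc J e hcut ha hb hab hnpa hnpb hR]; exact ⟨hab.le, le_rfl⟩
  rcases cover3 J e hJ hcut ha hb hab hnpa hnpb x with h | h | h
  · exact absurd h hL
  · rw [rho_AC J e ha hb hnpa hnpb h]
    obtain ⟨p, hp, rfl⟩ := h
    rw [cJ_fj]
    exact ⟨hp.1, hp.2⟩
  · exact absurd h hR

lemma rho_honest (hJ : IsOpen J)
    (hcut : ∀ x ∈ J, Nat.card (ConnectedComponents ({x}ᶜ : Set X)) = 2)
    (ha : a ∈ Set.Ioo (0:ℝ) 1) (hb : b ∈ Set.Ioo (0:ℝ) 1) (hab : a < b)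
    (hnpa : NP J e a) (hnpb : NP J e b) {x : X}
    (hx : rho J e a b x ∈ Set.Ioo a b) : x = Pt J e (rho J e a b x) := by
  by_cases hL : x ∈ Lc J e a
  · rw [rho_Lc J e hL] at hx; exact absurd hx.1 (lt_irrefl a)
  by_cases hR : x ∈ Rc J e b
  · rw [rho_Rc J e hcut ha hb hab hnpa hnpb hR] at hx
    exact absurd hx.2 (lt_irrefl b)
  rcases cover3 J e hJ hcut ha hb hab hnpa hnpb x with h | h | h
  · exact absurd h hL
  · have hval := rho_AC J e ha hb hnpa hnpb h
    obtain ⟨p, hp, rfl⟩ := h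
    rw [hval, cJ_fj]
    exact fj_eq_Pt J e p
  · exact absurd h hR

lemma closure_Lc (hcut : ∀ x ∈ J, Nat.card (ConnectedComponents ({x}ᶜ : Set X)) = 2)
    (ha : a ∈ Set.Ioo (0:ℝ) 1) :
    closure (Lc J e a) = Lc J e a ∪ {Pt J e a} := by
  apply subset_antisymm
  · exact cpt_closure_subset (Lc_ne_v J e ha)
  · rintro z (hz | hz)
    · exact subset_closure hz
    · rw [Set.mem_singleton_iff] at hz
      rw [hz]
      exact cpt_v_mem_closure (hcut _ (Pt_mem J e ha)) (Lc_ne_v J e ha)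

lemma closure_Rc (hcut : ∀ x ∈ J, Nat.card (ConnectedComponents ({x}ᶜ : Set X)) = 2)
    (hb : b ∈ Set.Ioo (0:ℝ) 1) :
    closure (Rc J e b) = Rc J e b ∪ {Pt J e b} := by
  apply subset_antisymm
  · exact cpt_closure_subset (Rc_ne_v J e hb)
  · rintro z (hz | hz)
    · exact subset_closure hz
    · rw [Set.mem_singleton_iff] at hz
      rw [hz]
      exact cpt_v_mem_closure (hcut _ (Pt_mem J e hb)) (Rc_ne_v J e hb)

lemma rho_cont (hJ : IsOpen J)
    (hcut : ∀ x ∈ J, Nat.card (ConnectedComponents ({x}ᶜ : Set X)) = 2)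
    (ha : a ∈ Set.Ioo (0:ℝ) 1) (hb : b ∈ Set.Ioo (0:ℝ) 1) (hab : a < b)
    (hnpa : NP J e a) (hnpb : NP J e b) :
    Continuous (rho J e a b) := by
  rw [continuous_iff_isClosed]
  intro F hF
  classical
  have hpre : rho J e a b ⁻¹' F =
      ((if a ∈ F then closure (Lc J e a) else ∅) ∪
       (if b ∈ F then closure (Rc J e b) else ∅)) ∪
      fj J e '' {p | a ≤ (p:ℝ) ∧ (p:ℝ) ≤ b ∧ (p:ℝ) ∈ F} := by
    ext x
    simp only [mem_preimage, mem_union]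
    constructor
    · intro hx
      by_cases hL : x ∈ Lc J e a
      · have hval := rho_Lc J e hL (b := b)
        rw [hval] at hx
        left; left
        rw [if_pos hx]
        exact subset_closure hL
      by_cases hR : x ∈ Rc J e b
      · have hval := rho_Rc J e hcut ha hb hab hnpa hnpb hR
        rw [hval] at hx
        left; right
        rw [if_pos hx]
        exact subset_closure hR
      rcases cover3 J e hJ hcut ha hb hab hnpa hnpb x with h | h | h
      · exact absurd h hL
      · have hval := rho_AC J e ha hb hnpa hnpb h
        rw [hval] at hx
        obtain ⟨p, hp, rfl⟩ := h
        rw [cJ_fj] at hx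
        exact Or.inr ⟨p, ⟨hp.1, hp.2, hx⟩, rfl⟩
      · exact absurd h hR
    · intro hx
      rcases hx with (hx | hx) | hx
      · by_cases haF : a ∈ F
        · rw [if_pos haF, closure_Lc J e hcut ha] at hx
          rcases hx with hx | hx
          · rw [rho_Lc J e hx]; exact haF
          · rw [Set.mem_singleton_iff] at hx
            rw [hx, rho_Pt J e ha hb hnpa hnpb ⟨le_rfl, hab.le⟩]
            exact haF
        · rw [if_neg haF] at hx; exact absurd hx (notMem_empty x)
      · by_cases hbF : b ∈ F
        · rw [if_pos hbF, closure_Rc J e hcut hb] at hx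
          rcases hx with hx | hx
          · rw [rho_Rc J e hcut ha hb hab hnpa hnpb hx]; exact hbF
          · rw [Set.mem_singleton_iff] at hx
            rw [hx, rho_Pt J e ha hb hnpa hnpb ⟨hab.le, le_rfl⟩]
            exact hbF
        · rw [if_neg hbF] at hx; exact absurd hx (notMem_empty x)
      · obtain ⟨p, hp, rfl⟩ := hx
        have hAC : fj J e p ∈ AC J e a b := ⟨p, ⟨hp.1, hp.2.1⟩, rfl⟩
        rw [rho_AC J e ha hb hnpa hnpb hAC, cJ_fj]
        exact hp.2.2
  rw [hpre]
  apply IsClosed.union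
  · apply IsClosed.union
    · split_ifs
      · exact isClosed_closure
      · exact isClosed_empty
    · split_ifs
      · exact isClosed_closure
      · exact isClosed_empty
  · have hKc : IsCompact (Set.Icc a b ∩ F) := isCompact_Icc.inter_right hF
    have hKs : Set.Icc a b ∩ F ⊆ Set.Ioo (0:ℝ) 1 :=
      fun s hs => Icc_subset_Ioo01 ha hb hs.1
    have heq : {p : ↥(Set.Ioo (0:ℝ) 1) | a ≤ (p:ℝ) ∧ (p:ℝ) ≤ b ∧ (p:ℝ) ∈ F} =
        {p : ↥(Set.Ioo (0:ℝ) 1) | (p:ℝ) ∈ Set.Icc a b ∩ F} := by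
      ext p; simp only [mem_setOf_eq, mem_inter_iff, mem_Icc]; tauto
    rw [heq]
    exact (fj_image_param_compact J e hKc hKs).isClosed

end Rho

lemma np_dense (hJ : IsOpen J)
    (hcut : ∀ x ∈ J, Nat.card (ConnectedComponents ({x}ᶜ : Set X)) = 2)
    {c d : ℝ} (hc : 0 < c) (hcd : c < d) (hd : d < 1) :
    ∃ t, t ∈ Set.Ioo c d ∧ NP J e t := by
  by_contra hcon
  push_neg at hcon
  have hP : ∀ t ∈ Set.Ioo c d, Lc J e t = Rc J e t := by
    intro t ht
    have := hcon t ht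
    rw [NP] at this
    push_neg at this
    exact this
  have hIoo : ∀ t ∈ Set.Ioo c d, t ∈ Set.Ioo (0:ℝ) 1 :=
    fun t ht => ⟨hc.trans ht.1, ht.2.trans hd⟩
  -- choose a point in the other component
  have hQex : ∀ t, t ∈ Set.Ioo c d →
      ∃ w : X, w ≠ Pt J e t ∧ cpt (Pt J e t) w ≠ Lc J e t := by
    intro t ht
    obtain ⟨w, hw1, hw2⟩ :=
      cpt_exists_other (hcut _ (Pt_mem J e (hIoo t ht))) (Lc_ne_v J e (hIoo t ht))
    exact ⟨w, hw1, hw2⟩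
  choose! w hw1 hw2 using hQex
  set Q : ℝ → Set X := fun t => cpt (Pt J e t) (w t) with hQdef
  have hQJ : ∀ t, t ∈ Set.Ioo c d → Q t ∩ J = ∅ := by
    intro t ht
    rw [eq_empty_iff_forall_notMem]
    rintro z ⟨hzQ, hzJ⟩
    rw [← range_fj J e] at hzJ
    obtain ⟨p, rfl⟩ := hzJ
    have hpt : (p : ℝ) ≠ t := by
      intro hp
      have : fj J e p = Pt J e t := by rw [fj_eq_Pt J e p, hp]
      exact (cpt_subset _ _ hzQ) (by rw [← this]; rfl)
    have hzL : fj J e p ∈ Lc J e t := by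
      rcases lt_or_gt_of_ne hpt with h | h
      · rw [fj_eq_Pt J e p]; exact below_mem_Lc J e p.2 (hIoo t ht) h
      · rw [hP t ht, fj_eq_Pt J e p]; exact above_mem_Rc J e p.2 (hIoo t ht) h
    have hdis := cpt_disjoint (v := Pt J e t) (x := w t) (y := Pt J e (t/2)) (hw2 t ht)
    have : fj J e p ∈ cpt (Pt J e t) (w t) ∩ cpt (Pt J e t) (Pt J e (t/2)) := ⟨hzQ, hzL⟩
    rw [hdis] at this
    exact this
  have hQopen : ∀ t, t ∈ Set.Ioo c d → IsOpen (Q t) :=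
    fun t ht => cpt_open (hcut _ (Pt_mem J e (hIoo t ht))) (hw1 t ht)
  have hQne : ∀ t, t ∈ Set.Ioo c d → (Q t).Nonempty :=
    fun t ht => ⟨w t, mem_cpt (hw1 t ht)⟩
  have hQdisj : ∀ t t', t ∈ Set.Ioo c d → t' ∈ Set.Ioo c d → t ≠ t' →
      Q t ∩ Q t' = ∅ := by
    intro t t' ht ht' htt'
    rw [eq_empty_iff_forall_notMem]
    rintro z ⟨hzt, hzt'⟩
    have hQ't : Q t' ⊆ ({Pt J e t}ᶜ : Set X) := by
      intro y hy
      intro hc2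
      rw [Set.mem_singleton_iff] at hc2
      subst hc2
      have : Pt J e t ∈ Q t' ∩ J := ⟨hy, Pt_mem J e (hIoo t ht)⟩
      rw [hQJ t' ht'] at this
      exact this
    have hsub : Q t' ⊆ cpt (Pt J e t) z :=
      (cpt_preconn _ _).subset_connectedComponentIn hzt' hQ't
    have heq : cpt (Pt J e t) z = Q t := (cpt_eq_of_mem hzt).symm
    rw [heq] at hsub
    have hcl : Pt J e t' ∈ closure (Q t') :=
      cpt_v_mem_closure (hcut _ (Pt_mem J e (hIoo t' ht'))) (hw1 t' ht')
    have hcl2 : Pt J e t' ∈ closure (Q t) := closure_mono hsub hcl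
    rcases cpt_closure_subset (hw1 t ht) hcl2 with h | h
    · have : Pt J e t' ∈ Q t ∩ J := ⟨h, Pt_mem J e (hIoo t' ht')⟩
      rw [hQJ t ht] at this
      exact this
    · rw [Set.mem_singleton_iff] at h
      exact htt' (Pt_inj J e (hIoo t' ht') (hIoo t ht) h).symm
  -- separability
  obtain ⟨D, hDc, hDd⟩ := TopologicalSpace.exists_countable_dense X
  have hgex : ∀ t, t ∈ Set.Ioo c d → ∃ z, z ∈ D ∧ z ∈ Q t := by
    intro t ht
    exact hDd.exists_mem_open (hQopen t ht) (hQne t ht)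
  choose! g hg1 hg2 using hgex
  have hinj : Set.InjOn g (Set.Ioo c d) := by
    intro t ht t' ht' hgtt
    by_contra hne
    have : g t ∈ Q t ∩ Q t' := ⟨hg2 t ht, hgtt ▸ hg2 t' ht'⟩
    rw [hQdisj t t' ht ht' hne] at this
    exact this
  have hcnt : (Set.Ioo c d).Countable :=
    Set.MapsTo.countable_of_injOn (fun t ht => hg1 t ht) hinj hDc
  have h1 : Cardinal.mk (Set.Ioo c d) ≤ Cardinal.aleph0 := hcnt.le_aleph0
  rw [Cardinal.mk_Ioo_real hcd] at h1
  exact absurd h1 (not_le.2 Cardinal.aleph0_lt_continuum)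

section Periodic
variable (f : X → X)

/-- continuous parametrization clipped to window `[a,b]` -/
noncomputable def qq {a b : ℝ} (ha : a ∈ Set.Ioo (0:ℝ) 1) (hb : b ∈ Set.Ioo (0:ℝ) 1)
    (hab : a ≤ b) : ℝ → X :=
  fun s => fj J e (Set.inclusion (Icc_subset_Ioo01 ha hb) (Set.projIcc a b hab s))

lemma qq_cont {a b : ℝ} (ha : a ∈ Set.Ioo (0:ℝ) 1) (hb : b ∈ Set.Ioo (0:ℝ) 1)
    (hab : a ≤ b) : Continuous (qq J e ha hb hab) :=
  (fj_cont J e).comp ((continuous_inclusion (Icc_subset_Ioo01 ha hb)).comp continuous_projIcc)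

lemma qq_eq {a b : ℝ} (ha : a ∈ Set.Ioo (0:ℝ) 1) (hb : b ∈ Set.Ioo (0:ℝ) 1)
    (hab : a ≤ b) {s : ℝ} (hs : s ∈ Set.Icc a b) :
    qq J e ha hb hab s = Pt J e s := by
  have hs0 : s ∈ Set.Ioo (0:ℝ) 1 := Icc_subset_Ioo01 ha hb hs
  rw [qq, Pt_eq J e hs0]
  congr 1
  rw [Set.projIcc_of_mem hab hs]

theorem exists_periodic (hJ : IsOpen J)
    (hcut : ∀ x ∈ J, Nat.card (ConnectedComponents ({x}ᶜ : Set X)) = 2)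
    (hf : Continuous f)
    (htt : ∀ n, 1 ≤ n → ∀ U V : Set X, IsOpen U → IsOpen V → U.Nonempty → V.Nonempty →
      ∃ k, ((f^[n])^[k] '' U ∩ V).Nonempty)
    {c d : ℝ} (hc : 0 < c) (hcd : c < d) (hd : d < 1) :
    ∃ s, s ∈ Set.Ioo c d ∧ s ∈ Set.Ioo (0:ℝ) 1 ∧
      ∃ k, 1 ≤ k ∧ f^[k] (Pt J e s) = Pt J e s := by
  -- choose a regular window inside (c,d)
  set m0 : ℝ := (c+d)/2 with hm0
  obtain ⟨a, haIoo, hnpa⟩ := np_dense J e hJ hcut hc (show c < m0 by rw [hm0]; linarith)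
    (show m0 < 1 by rw [hm0]; linarith)
  obtain ⟨b, hbIoo, hnpb⟩ := np_dense J e hJ hcut (show (0:ℝ) < m0 by rw [hm0]; linarith)
    (show m0 < d by rw [hm0]; linarith) hd
  have hab : a < b := haIoo.2.trans hbIoo.1
  have ha01 : a ∈ Set.Ioo (0:ℝ) 1 := ⟨hc.trans haIoo.1, haIoo.2.trans (by rw [hm0]; linarith)⟩
  have hb01 : b ∈ Set.Ioo (0:ℝ) 1 := ⟨(show (0:ℝ) < m0 by rw [hm0]; linarith).trans hbIoo.1, hbIoo.2.trans hd⟩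
  have hsubcd : Set.Ioo a b ⊆ Set.Ioo c d := by
    intro s hs
    exact ⟨haIoo.1.trans hs.1, hs.2.trans hbIoo.2⟩
  have hsub01 : Set.Ioo a b ⊆ Set.Ioo (0:ℝ) 1 := by
    intro s hs
    exact ⟨ha01.1.trans hs.1, hs.2.trans hb01.2⟩
  by_contra hcon
  push_neg at hcon
  have hper : ∀ s ∈ Set.Ioo a b, ∀ k, 1 ≤ k → f^[k] (Pt J e s) ≠ Pt J e s := by
    intro s hs k hk
    exact hcon s (hsubcd hs) (hsub01 hs) k hk
  -- notation
  set Q : ℝ → X := qq J e ha01 hb01 hab.le with hQ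
  set H : ℝ → ℕ → ℝ := fun s k => rho J e a b (f^[k] (Q s)) with hH
  have hHcont : ∀ k, Continuous (fun s => H s k) := by
    intro k
    exact (rho_cont J e hJ hcut ha01 hb01 hab hnpa hnpb).comp
      ((hf.iterate k).comp (qq_cont J e ha01 hb01 hab.le))
  have hQPt : ∀ s ∈ Set.Icc a b, Q s = Pt J e s := fun s hs => qq_eq J e ha01 hb01 hab.le hs
  -- equality case yields a periodic point
  have heqcase : ∀ s ∈ Set.Ioo a b, ∀ k, 1 ≤ k → H s k ≠ s := by
    intro s hs k hk hEq
    have hsIcc : s ∈ Set.Icc a b := ⟨hs.1.le, hs.2.le⟩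
    have h1 : rho J e a b (f^[k] (Q s)) ∈ Set.Ioo a b := by
      rw [hH] at hEq
      simp only at hEq
      rw [hEq]; exact hs
    have h2 := rho_honest J e hJ hcut ha01 hb01 hab hnpa hnpb h1
    rw [hH] at hEq
    simp only at hEq
    rw [hEq] at h2
    rw [hQPt s hsIcc] at h2
    exact hper s hs k hk h2
  -- dichotomy of signs
  have hdich : ∀ k, 1 ≤ k → (∀ s ∈ Set.Ioo a b, s < H s k) ∨ (∀ s ∈ Set.Ioo a b, H s k < s) := by
    intro k hk
    by_contra hcon2
    push_neg at hcon2
    obtain ⟨⟨s1, hs1, hle1⟩, ⟨s2, hs2, hle2⟩⟩ := hcon2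
    have hlt1 : H s1 k < s1 := lt_of_le_of_ne hle1 (heqcase s1 hs1 k hk)
    have hlt2 : s2 < H s2 k := lt_of_le_of_ne hle2 (fun h => (heqcase s2 hs2 k hk) h.symm)
    set φ : ℝ → ℝ := fun s => H s k - s with hφ
    have hφcont : ContinuousOn φ (Set.uIcc s1 s2) :=
      ((hHcont k).sub continuous_id).continuousOn
    have hmem : (0:ℝ) ∈ Set.uIcc (φ s1) (φ s2) := by
      rw [Set.mem_uIcc]
      left
      constructor
      · rw [hφ]; simp only; linarith
      · rw [hφ]; simp only; linarith
    obtain ⟨s0, hs0mem, hφ0⟩ := intermediate_value_uIcc hφcont hmem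
    have hs0ab : s0 ∈ Set.Ioo a b := by
      have h1 : Set.uIcc s1 s2 ⊆ Set.Ioo a b := by
        rw [Set.uIcc]
        intro x hx
        constructor
        · exact lt_of_lt_of_le (lt_min hs1.1 hs2.1) hx.1
        · exact lt_of_le_of_lt hx.2 (max_lt hs1.2 hs2.2)
      exact h1 hs0mem
    apply heqcase s0 hs0ab k hk
    have := sub_eq_zero.1 hφ0
    exact this
  -- transitivity witnesses
  set a1 : ℝ := a + (b-a)/3 with ha1
  set b1 : ℝ := b - (b-a)/3 with hb1
  have ha1b1 : a < a1 ∧ a1 < b1 ∧ b1 < b :=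
    ⟨by rw [ha1]; linarith, by rw [ha1, hb1]; linarith, by rw [hb1]; linarith⟩
  -- generic transitivity witness extraction
  have hwit : ∀ k, 1 ≤ k → ∀ l1 r1 l2 r2 : ℝ, a ≤ l1 → l1 < r1 → r1 ≤ b →
      a ≤ l2 → l2 < r2 → r2 ≤ b → (r1 ≤ l2 ∨ r2 ≤ l1) →
      ∃ n s u, 1 ≤ n ∧ (∃ m, 1 ≤ m ∧ n = k * m) ∧ s ∈ Set.Ioo l1 r1 ∧ u ∈ Set.Ioo l2 r2 ∧
        f^[n] (Q s) = Q u := by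
    intro k hk l1 r1 l2 r2 hal1 hl1r1 hr1b hal2 hl2r2 hr2b hdisj
    have hl101 : (l1+r1)/2 ∈ Set.Ioo (0:ℝ) 1 :=
      ⟨by nlinarith [ha01.1, ha01.2, hb01.1, hb01.2], by nlinarith [ha01.1, ha01.2, hb01.1, hb01.2]⟩
    have hl201 : (l2+r2)/2 ∈ Set.Ioo (0:ℝ) 1 :=
      ⟨by nlinarith [ha01.1, ha01.2, hb01.1, hb01.2], by nlinarith [ha01.1, ha01.2, hb01.1, hb01.2]⟩
    obtain ⟨m, hmne⟩ := htt k hk (AO J e l1 r1) (AO J e l2 r2)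
      (AO_open J e hJ) (AO_open J e hJ)
      ⟨Pt J e ((l1+r1)/2), by rw [mem_AO_iff J e hl101]; constructor <;> linarith⟩
      ⟨Pt J e ((l2+r2)/2), by rw [mem_AO_iff J e hl201]; constructor <;> linarith⟩
    obtain ⟨y, ⟨x, hxA, rfl⟩, hyC⟩ := hmne
    obtain ⟨p, hp, rfl⟩ := hxA
    obtain ⟨p', hp', hpe⟩ := hyC
    have hm1 : 1 ≤ m := by
      rcases Nat.eq_zero_or_pos m with hm0 | hm0
      · exfalso
        rw [hm0] at hpe
        simp only [Function.iterate_zero, id_eq] at hpe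
        have := fj_inj J e hpe
        subst this
        rcases hdisj with h | h
        · exact absurd (hp.2.trans_le (h.trans hp'.1.le)) (lt_irrefl _)
        · exact absurd (hp'.2.trans_le (h.trans hp.1.le)) (lt_irrefl _)
      · exact hm0
    refine ⟨k * m, (p : ℝ), (p' : ℝ), Nat.one_le_iff_ne_zero.2 (Nat.mul_ne_zero
      (Nat.one_le_iff_ne_zero.1 hk) (Nat.one_le_iff_ne_zero.1 hm1)), ⟨m, hm1, rfl⟩, hp, hp', ?_⟩
    have hQs : Q (p : ℝ) = fj J e p := by
      rw [hQ, qq_eq J e ha01 hb01 hab.le ⟨hal1.trans hp.1.le, hp.2.le.trans hr1b⟩,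
        Pt_eq J e p.2]
    have hQu : Q (p' : ℝ) = fj J e p' := by
      rw [hQ, qq_eq J e ha01 hb01 hab.le ⟨hal2.trans hp'.1.le, hp'.2.le.trans hr2b⟩,
        Pt_eq J e p'.2]
    rw [hQs, hQu, Function.iterate_mul]
    exact hpe.symm
  -- positive and negative signed witnesses
  have hrhoQ : ∀ u ∈ Set.Icc a b, rho J e a b (Q u) = u := by
    intro u hu
    rw [hQ, qq_eq J e ha01 hb01 hab.le hu]
    exact rho_Pt J e ha01 hb01 hnpa hnpb hu
  have hplus : ∀ k, 1 ≤ k → ∃ n, 1 ≤ n ∧ (∃ m, 1 ≤ m ∧ n = k * m) ∧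
      (∀ s ∈ Set.Ioo a b, s < H s n) ∧
      ∃ s u, s ∈ Set.Ioo a b ∧ u ∈ Set.Ioo a b ∧ f^[n] (Q s) = Q u := by
    intro k hk
    obtain ⟨n, s, u, hn1, hnm, hs, hu, heq⟩ := hwit k hk a a1 b1 b le_rfl ha1b1.1
      (by rw [ha1]; linarith) (by rw [hb1]; linarith) ha1b1.2.2 le_rfl (Or.inl ha1b1.2.1.le)
    have hsab : s ∈ Set.Ioo a b := ⟨hs.1, hs.2.trans (ha1b1.2.1.trans ha1b1.2.2)⟩
    have huab : u ∈ Set.Ioo a b := ⟨(ha1b1.1.trans ha1b1.2.1).trans hu.1, hu.2⟩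
    have hHval : H s n = u := by
      rw [hH]; simp only
      rw [heq]
      exact hrhoQ u ⟨huab.1.le, huab.2.le⟩
    rcases hdich n hn1 with hSP | hSM
    · exact ⟨n, hn1, hnm, hSP, s, u, hsab, huab, heq⟩
    · exfalso
      have := hSM s hsab
      rw [hHval] at this
      have : u < a1 := this.trans hs.2
      have : b1 < a1 := hu.1.trans this
      exact absurd this (not_lt.2 ha1b1.2.1.le)
  have hminus : ∀ k, 1 ≤ k → ∃ n, 1 ≤ n ∧ (∃ m, 1 ≤ m ∧ n = k * m) ∧
      (∀ s ∈ Set.Ioo a b, H s n < s) := by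
    intro k hk
    obtain ⟨n, s, u, hn1, hnm, hs, hu, heq⟩ := hwit k hk b1 b a a1 (by rw [hb1]; linarith)
      ha1b1.2.2 le_rfl le_rfl ha1b1.1 (by rw [ha1]; linarith) (Or.inr ha1b1.2.1.le)
    have hsab : s ∈ Set.Ioo a b := ⟨(ha1b1.1.trans ha1b1.2.1).trans hs.1, hs.2⟩
    have huab : u ∈ Set.Ioo a b := ⟨hu.1, hu.2.trans (ha1b1.2.1.trans ha1b1.2.2)⟩
    have hHval : H s n = u := by
      rw [hH]; simp only
      rw [heq]
      exact hrhoQ u ⟨huab.1.le, huab.2.le⟩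
    rcases hdich n hn1 with hSP | hSM
    · exfalso
      have := hSP s hsab
      rw [hHval] at this
      have h1 : b1 < u := hs.1.trans this
      have h2 : u < b1 := hu.2.trans_le (le_of_eq rfl) |>.trans_le (by linarith [ha1b1.2.1])
      exact absurd (h1.trans h2) (lt_irrefl _)
    · exact ⟨n, hn1, hnm, hSM⟩
  -- composition rule
  have hrule : ∀ i j, 1 ≤ i → 1 ≤ j →
      (∀ s ∈ Set.Ioo a b, s < H s j) →
      (∀ s ∈ Set.Ioo a b, s < H s i) →
      (∃ s u, s ∈ Set.Ioo a b ∧ u ∈ Set.Ioo a b ∧ f^[i] (Q s) = Q u) →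
      (∀ s ∈ Set.Ioo a b, s < H s (j + i)) := by
    intro i j hi hj hSPj hSPi hWit
    rcases hdich (j + i) (le_trans hi (Nat.le_add_left i j)) with h | h
    · exact h
    · exfalso
      obtain ⟨s0, u0, hs0, hu0, heq0⟩ := hWit
      have h1 : s0 < u0 := by
        have := hSPi s0 hs0
        rw [hH] at this; simp only at this
        rw [heq0] at this
        rwa [hrhoQ u0 ⟨hu0.1.le, hu0.2.le⟩] at this
      have h2 : u0 < H u0 j := hSPj u0 hu0
      have h3 : H s0 (j + i) = H u0 j := by
        rw [hH]; simp only
        rw [Function.iterate_add_apply, heq0]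
      have h4 := h s0 hs0
      rw [h3] at h4
      linarith
  -- the main induction
  obtain ⟨g, hg1, -, hSPg, hWitg⟩ := hplus 1 le_rfl
  have hclaim : ∀ nn, 1 ≤ nn → (∀ s ∈ Set.Ioo a b, s < H s (nn * g)) := by
    intro nn
    induction nn with
    | zero => intro h; exact absurd h (by norm_num)
    | succ m ih =>
      intro _
      rcases Nat.eq_zero_or_pos m with hm0 | hm0
      · subst hm0
        simpa using hSPg
      · have hIH := ih hm0
        have := hrule g (m * g) hg1
          (Nat.one_le_iff_ne_zero.2 (Nat.mul_ne_zero (Nat.one_le_iff_ne_zero.1 hm0)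
            (Nat.one_le_iff_ne_zero.1 hg1))) hIH hSPg hWitg
        rwa [Nat.succ_mul]
  -- contradiction
  obtain ⟨n2, hn21, ⟨m2, hm21, hm2eq⟩, hSMn2⟩ := hminus g hg1
  have hSPn2 : ∀ s ∈ Set.Ioo a b, s < H s n2 := by
    have := hclaim m2 hm21
    rwa [mul_comm, ← hm2eq] at this
  have hmid : (a+b)/2 ∈ Set.Ioo a b := ⟨by linarith, by linarith⟩
  have := hSPn2 _ hmid
  have h2 := hSMn2 _ hmid
  linarith

end Periodic

section Capture
variable (f : X → X)

lemma mod_iterate {x : X} {M : ℕ} (hfix : f^[M] x = x) (r : ℕ) :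
    f^[r] x = f^[r % M] x := by
  conv_lhs => rw [← Nat.mod_add_div r M]
  rw [Function.iterate_add_apply, Function.iterate_mul]
  rw [Function.iterate_fixed hfix]

lemma period_dvd {x : X} {k M : ℕ} (hfix : f^[k] x = x) (hdvd : k ∣ M) :
    f^[M] x = x := by
  obtain ⟨c, rfl⟩ := hdvd
  rw [Function.iterate_mul]
  exact Function.iterate_fixed hfix c

include e in
lemma f_surj (hJ : IsOpen J) (hf : Continuous f)
    (htt1 : ∀ U V : Set X, IsOpen U → IsOpen V → U.Nonempty → V.Nonempty →
      ∃ k, ((f^[1])^[k] '' U ∩ V).Nonempty) : Surjective f := by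
  have hrange : Set.range f = Set.univ := by
    by_contra hne
    have hclosed : IsClosed (Set.range f) := (isCompact_range hf).isClosed
    have hO : IsOpen (Set.range f)ᶜ := hclosed.isOpen_compl
    obtain ⟨x, hx⟩ : (Set.range f)ᶜ.Nonempty := Set.nonempty_compl.2 hne
    have h2pts : ∃ y ∈ (Set.range f)ᶜ, y ≠ x := by
      by_contra hc
      push_neg at hc
      have hOx : (Set.range f)ᶜ = {x} := by
        apply subset_antisymm
        · intro y hy; exact hc y hy
        · intro y hy; rw [Set.mem_singleton_iff] at hy; rwa [hy]
      have hclopen : IsClopen ({x} : Set X) := ⟨isClosed_singleton, hOx ▸ hO⟩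
      rcases isClopen_iff.1 hclopen with h | h
      · exact absurd h (Set.singleton_ne_empty x)
      · have h13 : Pt J e (1/3) = x := by
          have : Pt J e (1/3) ∈ ({x} : Set X) := h.symm ▸ Set.mem_univ _
          rwa [Set.mem_singleton_iff] at this
        have h23 : Pt J e (2/3) = x := by
          have : Pt J e (2/3) ∈ ({x} : Set X) := h.symm ▸ Set.mem_univ _
          rwa [Set.mem_singleton_iff] at this
        have : (1/3 : ℝ) = 2/3 :=
          Pt_inj J e (by norm_num) (by norm_num) (h13.trans h23.symm)
        norm_num at this
    obtain ⟨y, hy, hyx⟩ := h2pts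
    have hr : (0:ℝ) < dist y x / 2 := by
      have : (0:ℝ) < dist y x := dist_pos.2 hyx
      linarith
    set U1 : Set X := Metric.ball x (dist y x / 2) ∩ (Set.range f)ᶜ with hU1
    set U2 : Set X := Metric.ball y (dist y x / 2) ∩ (Set.range f)ᶜ with hU2
    have hdisj : U1 ∩ U2 = ∅ := by
      rw [Set.eq_empty_iff_forall_notMem]
      rintro z ⟨⟨hz1, -⟩, ⟨hz2, -⟩⟩
      rw [Metric.mem_ball] at hz1 hz2
      have := dist_triangle y z x
      rw [dist_comm y z] at this
      linarith
    obtain ⟨k, w, ⟨w0, hw0, rfl⟩, hw2⟩ := htt1 U1 U2 (Metric.isOpen_ball.inter hO)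
      (Metric.isOpen_ball.inter hO) ⟨x, Metric.mem_ball_self hr, hx⟩
      ⟨y, Metric.mem_ball_self hr, hy⟩
    rcases Nat.eq_zero_or_pos k with hk0 | hk0
    · subst hk0
      simp only [Function.iterate_zero, id_eq] at hw2
      have : w0 ∈ U1 ∩ U2 := ⟨hw0, hw2⟩
      rw [hdisj] at this
      exact this
    · obtain ⟨k', rfl⟩ := Nat.exists_eq_succ_of_ne_zero (Nat.one_le_iff_ne_zero.1 hk0)
      have : (f^[1])^[k' + 1] w0 ∈ Set.range f := by
        rw [Function.iterate_one]
        rw [Function.iterate_succ_apply']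
        exact ⟨f^[k'] w0, rfl⟩
      exact hw2.2 this
  intro y
  have : y ∈ Set.range f := hrange ▸ Set.mem_univ y
  exact this

lemma capture (hJ : IsOpen J)
    (hcut : ∀ x ∈ J, Nat.card (ConnectedComponents ({x}ᶜ : Set X)) = 2)
    (hf : Continuous f) (hsurj : Surjective f)
    {M : ℕ} (hM : 1 ≤ M)
    (httM : ∀ U V : Set X, IsOpen U → IsOpen V → U.Nonempty → V.Nonempty →
      ∃ k, ((f^[M])^[k] '' U ∩ V).Nonempty)
    {SRC : Set X} (hSRCo : IsOpen SRC) (hSRCp : IsPreconnected SRC)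
    {qa : X} (hq : qa ∈ SRC) (hqper : f^[M] qa = qa)
    {v : X} (hvJ : v ∈ J) (hvper : f^[M] v = v) (hqv : ∀ r, f^[r] qa ≠ v) :
    ∃ N, ∀ n, N ≤ n → v ∈ f^[n] '' SRC := by
  -- capture at each residue
  have hres : ∀ r, r < M → ∃ n, n % M = r ∧ v ∈ f^[n] '' SRC := by
    intro r hr
    obtain ⟨y, hyv, hyne⟩ := cpt_exists_other (hcut v hvJ) (hqv r)
    set T : Set X := f^[r] ⁻¹' (cpt v y) with hT
    have hTo : IsOpen T := (cpt_open (hcut v hvJ) hyv).preimage (hf.iterate r)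
    have hTne : T.Nonempty := by
      obtain ⟨z, hz⟩ := (hsurj.iterate r) y
      exact ⟨z, by rw [hT, Set.mem_preimage, hz]; exact mem_cpt hyv⟩
    obtain ⟨k, w, ⟨x0, hx0, rfl⟩, hwT⟩ := httM SRC T hSRCo hTo ⟨qa, hq⟩ hTne
    refine ⟨r + M * k, by simp [Nat.add_mul_mod_self_left, Nat.mod_eq_of_lt hr], ?_⟩
    by_contra hvE
    -- the image is connected, misses v, contains the anchor and a point of the other side
    set E : Set X := f^[r + M * k] '' SRC with hE
    have hEp : IsPreconnected E := hSRCp.image _ (hf.iterate _).continuousOn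
    have hEc : E ⊆ ({v}ᶜ : Set X) := by
      intro z hz
      rw [Set.mem_compl_singleton_iff]
      rintro rfl
      exact hvE hz
    have hqE : f^[r] qa ∈ E := by
      refine ⟨qa, hq, ?_⟩
      rw [Function.iterate_add_apply, Function.iterate_mul, Function.iterate_fixed hqper]
    have hxE : f^[r] ((f^[M])^[k] x0) ∈ E := by
      refine ⟨x0, hx0, ?_⟩
      rw [Function.iterate_add_apply, Function.iterate_mul]
    have hsub : E ⊆ cpt v (f^[r] qa) :=
      hEp.subset_connectedComponentIn hqE hEc
    have hmem2 : f^[r] ((f^[M])^[k] x0) ∈ cpt v y := hwT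
    have hdisj := cpt_disjoint hyne
    have : f^[r] ((f^[M])^[k] x0) ∈ cpt v y ∩ cpt v (f^[r] qa) := ⟨hmem2, hsub hxE⟩
    rw [hdisj] at this
    exact this
  -- choose witnesses and combine
  choose! nfun hn1 hn2 using hres
  set N := (Finset.range M).sup nfun with hN
  refine ⟨N, fun n hn => ?_⟩
  set r := n % M with hr
  have hrM : r < M := Nat.mod_lt n (Nat.lt_of_lt_of_le Nat.zero_lt_one hM)
  have hnr := hn1 r hrM
  have hvmem := hn2 r hrM
  have hle : nfun r ≤ n := le_trans (Finset.le_sup (Finset.mem_range.2 hrM)) hn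
  have hmodeq : nfun r % M = n % M := by rw [hnr, hr]
  have hdvd : M ∣ n - nfun r := (Nat.modEq_iff_dvd' hle).1 hmodeq
  obtain ⟨c, hc⟩ := hdvd
  have hnc : n = nfun r + M * c := by omega
  rw [hnc]
  obtain ⟨s0, hs0, hs0eq⟩ := hvmem
  refine ⟨s0, hs0, ?_⟩
  rw [Nat.add_comm, Function.iterate_add_apply, hs0eq, Function.iterate_mul]
  exact Function.iterate_fixed hvper c

end Capture

section Assembly

lemma exists_subIoo_avoid {S : Set ℝ} (hS : S.Finite) {c d : ℝ} (hcd : c < d) :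
    ∃ c' d', c ≤ c' ∧ c' < d' ∧ d' ≤ d ∧ ∀ s ∈ Set.Ioo c' d', s ∉ S := by
  classical
  set m := (c+d)/2 with hm
  have hcm : c < m := by rw [hm]; linarith
  have hmd : m ≤ d := by rw [hm]; linarith
  set F : Finset ℝ := insert c (hS.toFinset.filter (fun s => s ∈ Set.Ioo c m)) with hF
  have hFne : F.Nonempty := ⟨c, Finset.mem_insert_self _ _⟩
  set u := F.max' hFne with hu
  have humem : u ∈ F := F.max'_mem hFne
  have hum : u < m := by
    rcases Finset.mem_insert.1 humem with h | h
    · rw [h]; exact hcm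
    · exact (Finset.mem_filter.1 h).2.2
  have hcu : c ≤ u := F.le_max' c (Finset.mem_insert_self _ _)
  refine ⟨u, m, hcu, hum, hmd, ?_⟩
  intro s hs hsS
  have hsF : s ∈ F := by
    apply Finset.mem_insert_of_mem
    rw [Finset.mem_filter]
    exact ⟨hS.mem_toFinset.2 hsS, lt_of_le_of_lt hcu hs.1, hs.2⟩
  have := F.le_max' s hsF
  exact absurd hs.1 (not_lt.2 this)

lemma shrink_Ioo {γ δ : ℝ} (hγδ : γ < δ) (hsub : Set.Ioo γ δ ⊆ Set.Ioo (0:ℝ) 1) :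
    ∃ γ' δ', γ' ∈ Set.Ioo (0:ℝ) 1 ∧ δ' ∈ Set.Ioo (0:ℝ) 1 ∧ γ' < δ' ∧
      Set.Ioo γ' δ' ⊆ Set.Ioo γ δ := by
  refine ⟨γ + (δ-γ)/3, δ - (δ-γ)/3, hsub ⟨by linarith, by linarith⟩,
    hsub ⟨by linarith, by linarith⟩, by linarith, ?_⟩
  intro s hs
  exact ⟨by linarith [hs.1], by linarith [hs.2]⟩

include e in
theorem mixing_main (hJ : IsOpen J)
    (hcut : ∀ x ∈ J, Nat.card (ConnectedComponents ({x}ᶜ : Set X)) = 2)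
    (f : X → X) (hf : Continuous f)
    (htt : ∀ n, 1 ≤ n → ∀ U V : Set X, IsOpen U → IsOpen V → U.Nonempty → V.Nonempty →
      ∃ k, ((f^[n])^[k] '' U ∩ V).Nonempty)
    (U V : Set X) (hU : IsOpen U) (hV : IsOpen V) (hUne : U.Nonempty) (hVne : V.Nonempty) :
    ∃ N, ∀ n, N ≤ n → (f^[n] '' U ∩ V).Nonempty := by
  have hsurj : Surjective f := f_surj J e f hJ hf (htt 1 le_rfl)
  -- localize the source inside J
  have hJne : J.Nonempty := ⟨Pt J e (1/2), Pt_mem J e (by norm_num)⟩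
  obtain ⟨j, hj⟩ := htt 1 le_rfl J U hJ hU hJne hUne
  rw [Function.iterate_one] at hj
  obtain ⟨y0, ⟨x0, hx0J, rfl⟩, hyU⟩ := hj
  set W : Set X := J ∩ f^[j] ⁻¹' U with hW
  have hWo : IsOpen W := hJ.inter (hU.preimage (hf.iterate j))
  have hx0W : x0 ∈ W := ⟨hx0J, hyU⟩
  have hx0J' := hx0J
  rw [← range_fj J e] at hx0J'
  obtain ⟨p0, rfl⟩ := hx0J'
  set Osub : Set ↥(Set.Ioo (0:ℝ) 1) := (fun p => fj J e p) ⁻¹' W with hOsubdef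
  have hOsubo : IsOpen Osub := hWo.preimage (fj_cont J e)
  set O : Set ℝ := Subtype.val '' Osub with hOdef
  have hOo : IsOpen O := isOpen_Ioo.isOpenMap_subtype_val Osub hOsubo
  have hO01 : O ⊆ Set.Ioo (0:ℝ) 1 := by rintro s ⟨p, hp, rfl⟩; exact p.2
  have hp0O : (p0 : ℝ) ∈ O := ⟨p0, hx0W, rfl⟩
  obtain ⟨γ, δ, hpmem, hIoosub⟩ := mem_nhds_iff_exists_Ioo_subset.1 (hOo.mem_nhds hp0O)
  obtain ⟨γ', δ', hγ'01, hδ'01, hγ'δ', hshr⟩ :=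
    shrink_Ioo (hpmem.1.trans hpmem.2) (fun s hs => hO01 (hIoosub hs))
  have hIoo'O : Set.Ioo γ' δ' ⊆ O := fun s hs => hIoosub (hshr hs)
  set SRC : Set X := AO J e γ' δ' with hSRCdef
  have hSRCo : IsOpen SRC := AO_open J e hJ
  have hSRCp : IsPreconnected SRC := AO_preconn J e γ' δ' hγ'01.1.le hδ'01.2.le
  have hSRCW : SRC ⊆ W := by
    rintro x ⟨p, hp, rfl⟩
    obtain ⟨q, hq, hqval⟩ := hIoo'O hp
    have : q = p := Subtype.coe_injective hqval
    rw [← this]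
    exact hq
  have hSRCU : ∀ z ∈ SRC, f^[j] z ∈ U := fun z hz => (hSRCW hz).2
  -- anchor periodic point in SRC
  obtain ⟨tq, htqIoo, htq01, kq, hkq, hkqper⟩ :=
    exists_periodic J e f hJ hcut hf htt hγ'01.1 hγ'δ' hδ'01.2
  set qa : X := Pt J e tq with hqadef
  have hqaSRC : qa ∈ SRC := ⟨⟨tq, htq01⟩, htqIoo, (Pt_eq J e htq01).symm⟩
  -- the parameters of the orbit of the anchor
  set Sbad : Set ℝ := (fun r => cJ J e (f^[r] qa)) '' Set.Iio kq with hSbaddef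
  have hSbadfin : Sbad.Finite := (Set.finite_Iio kq).image _
  have hkq0 : 0 < kq := hkq
  -- two periodic points avoiding the anchor orbit
  obtain ⟨c1, d1, hc1, hcd1, hd1, havoid1⟩ :=
    exists_subIoo_avoid hSbadfin (show (1/4:ℝ) < 1/2 by norm_num)
  obtain ⟨t1, ht1Ioo, ht101, k1, hk1, hk1per⟩ :=
    exists_periodic J e f hJ hcut hf htt (show (0:ℝ) < c1 by linarith) hcd1
      (show d1 < 1 by linarith)
  obtain ⟨c2, d2, hc2, hcd2, hd2, havoid2⟩ :=
    exists_subIoo_avoid hSbadfin (show (1/2:ℝ) < 3/4 by norm_num)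
  obtain ⟨t2, ht2Ioo, ht201, k2, hk2, hk2per⟩ :=
    exists_periodic J e f hJ hcut hf htt (show (0:ℝ) < c2 by linarith) hcd2
      (show d2 < 1 by linarith)
  have ht1t2 : t1 < t2 := by
    have h1 : t1 < d1 := ht1Ioo.2
    have h2 : c2 < t2 := ht2Ioo.1
    linarith
  set v1 : X := Pt J e t1 with hv1def
  set v2 : X := Pt J e t2 with hv2def
  have havoidgen : ∀ (t : ℝ), t ∈ Set.Ioo (0:ℝ) 1 → t ∉ Sbad → ∀ r, f^[r] qa ≠ Pt J e t := by
    intro t ht htS r heq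
    apply htS
    refine ⟨r % kq, Nat.mod_lt r hkq0, ?_⟩
    show cJ J e (f^[r % kq] qa) = t
    rw [← mod_iterate f hkqper r, heq, cJ_Pt J e ht]
  have hv1avoid : ∀ r, f^[r] qa ≠ v1 :=
    havoidgen t1 ht101 (fun hmem => havoid1 t1 ht1Ioo hmem)
  have hv2avoid : ∀ r, f^[r] qa ≠ v2 :=
    havoidgen t2 ht201 (fun hmem => havoid2 t2 ht2Ioo hmem)
  -- the common period
  set M : ℕ := kq * (k1 * k2) with hMdef
  have hM : 1 ≤ M := by
    have := Nat.mul_le_mul hkq (Nat.mul_le_mul hk1 hk2)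
    simpa [hMdef] using this
  have hqaM : f^[M] qa = qa := period_dvd f hkqper (Dvd.intro _ rfl)
  have hv1M : f^[M] v1 = v1 :=
    period_dvd f hk1per (dvd_mul_of_dvd_right (dvd_mul_right k1 k2) kq)
  have hv2M : f^[M] v2 = v2 :=
    period_dvd f hk2per (dvd_mul_of_dvd_right (dvd_mul_left k2 k1) kq)
  -- captures
  obtain ⟨N1, hN1⟩ := capture J f hJ hcut hf hsurj hM (htt M hM) hSRCo hSRCp hqaSRC hqaM
    (Pt_mem J e ht101) hv1M hv1avoid
  obtain ⟨N2, hN2⟩ := capture J f hJ hcut hf hsurj hM (htt M hM) hSRCo hSRCp hqaSRC hqaM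
    (Pt_mem J e ht201) hv2M hv2avoid
  set N := max N1 N2 with hNdef
  -- target localization : a regular parameter between t1 and t2 reaching V
  have hI0ne : (AO J e t1 t2).Nonempty := by
    refine ⟨Pt J e ((t1+t2)/2), ?_⟩
    rw [mem_AO_iff J e ⟨by linarith [ht101.1, ht201.1], by linarith [ht101.2, ht201.2]⟩]
    constructor <;> linarith
  obtain ⟨m, hm⟩ := htt 1 le_rfl (AO J e t1 t2) V (AO_open J e hJ) hV hI0ne hVne
  rw [Function.iterate_one] at hm
  obtain ⟨y1, ⟨x1, hx1I, rfl⟩, hy1V⟩ := hm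
  obtain ⟨p1, hp1, rfl⟩ := hx1I
  set Osub2 : Set ↥(Set.Ioo (0:ℝ) 1) := (fun p => fj J e p) ⁻¹' (f^[m] ⁻¹' V) with hOsub2def
  have hOsub2o : IsOpen Osub2 := (hV.preimage (hf.iterate m)).preimage (fj_cont J e)
  set O2 : Set ℝ := (Subtype.val '' Osub2) ∩ Set.Ioo t1 t2 with hO2def
  have hO2o : IsOpen O2 := (isOpen_Ioo.isOpenMap_subtype_val Osub2 hOsub2o).inter isOpen_Ioo
  have hp1O2 : (p1 : ℝ) ∈ O2 := ⟨⟨p1, hy1V, rfl⟩, hp1⟩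
  obtain ⟨γ2, δ2, hp2mem, hIoo2sub⟩ := mem_nhds_iff_exists_Ioo_subset.1 (hO2o.mem_nhds hp1O2)
  have hO201 : O2 ⊆ Set.Ioo (0:ℝ) 1 := by
    rintro s ⟨⟨p, hp, rfl⟩, -⟩; exact p.2
  obtain ⟨γ2', δ2', hγ2'01, hδ2'01, hγ2'δ2', hshr2⟩ :=
    shrink_Ioo (hp2mem.1.trans hp2mem.2) (fun s hs => hO201 (hIoo2sub hs))
  obtain ⟨w, hwIoo, hnpw⟩ := np_dense J e hJ hcut hγ2'01.1 hγ2'δ2' hδ2'01.2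
  have hwO2 : w ∈ O2 := hIoo2sub (hshr2 hwIoo)
  have hw01 : w ∈ Set.Ioo (0:ℝ) 1 := hO201 hwO2
  have hwt : t1 < w ∧ w < t2 := hwO2.2
  have hwV : f^[m] (Pt J e w) ∈ V := by
    obtain ⟨⟨p, hp, hpval⟩, -⟩ := hwO2
    have hpw : p = (⟨w, hw01⟩ : ↥(Set.Ioo (0:ℝ) 1)) := Subtype.coe_injective hpval
    rw [hpw] at hp
    rw [Pt_eq J e hw01]
    exact hp
  -- conclusion
  refine ⟨N + m, fun n hn => ?_⟩
  have hnm : m ≤ n := le_trans (Nat.le_add_left m N) hn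
  set k := (n - m) + j with hkdef
  have hkN : N ≤ n - m := by omega
  have hv1E : v1 ∈ f^[k] '' SRC := hN1 k (by omega)
  have hv2E : v2 ∈ f^[k] '' SRC := hN2 k (by omega)
  have hwE : Pt J e w ∈ f^[k] '' SRC := by
    by_contra hwE
    set E : Set X := f^[k] '' SRC with hEdef
    have hEp : IsPreconnected E := hSRCp.image _ (hf.iterate _).continuousOn
    have hEc : E ⊆ ({Pt J e w}ᶜ : Set X) := by
      intro z hz
      rw [Set.mem_compl_singleton_iff]
      rintro rfl
      exact hwE hz
    have hv1Lc : v1 ∈ Lc J e w := below_mem_Lc J e ht101 hw01 hwt.1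
    have hsubE : E ⊆ cpt (Pt J e w) v1 :=
      hEp.subset_connectedComponentIn hv1E hEc
    have heqc : cpt (Pt J e w) v1 = Lc J e w := (cpt_eq_of_mem hv1Lc).symm
    rw [heqc] at hsubE
    have hv2R : v2 ∈ Rc J e w := above_mem_Rc J e ht201 hw01 hwt.2
    have : v2 ∈ Lc J e w ∩ Rc J e w := ⟨hsubE hv2E, hv2R⟩
    rw [np_disjoint J e hnpw] at this
    exact this
  obtain ⟨s2, hs2SRC, hs2eq⟩ := hwE
  refine ⟨f^[m] (Pt J e w), ⟨f^[j] s2, hSRCU s2 hs2SRC, ?_⟩, hwV⟩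
  rw [← hs2eq]
  rw [← Function.iterate_add_apply, ← Function.iterate_add_apply]
  congr 1
  omega

end Assembly
end Main
end Stmt16Aux

theorem stmt_16 {X : Type*} [MetricSpace X] [CompactSpace X] [ConnectedSpace X]
    (hX : HasDisconnectingInterval X)
    (f : X → X) (hf : Continuous f)
    (htt : ∀ n : ℕ, 1 ≤ n → TopTransitive f^[n]) :
    TopMixing f := by
  obtain ⟨J, hJ, ⟨e⟩, hcut⟩ := hX
  intro U V hU hV hUne hVne
  exact Stmt16Aux.mixing_main J e hJ hcut f hf (fun n hn => htt n hn) U V hU hV hUne hVne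
end

section
/- Let f : [0,1] → [0,1] be continuous, and suppose there are points u < s ≤ t < y in [0,1] and natural numbers n, m ≥ 1 such that f^n([u,s]) ⊇ [t,y] and f^m([t,y]) ⊇ [u,s]. Then f has a periodic point in [u,s]. -/
theorem stmt_17 (f : ℝ → ℝ)
    (hf : ContinuousOn f (Set.Icc 0 1))
    (hmaps : Set.MapsTo f (Set.Icc 0 1) (Set.Icc 0 1))
    (u s t y : ℝ) (hu : u ∈ Set.Icc (0:ℝ) 1) (hy : y ∈ Set.Icc (0:ℝ) 1)
    (hus : u < s) (hst : s ≤ t) (hty : t < y)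
    (n m : ℕ) (hn : 1 ≤ n) (hm : 1 ≤ m)
    (h1 : Set.Icc t y ⊆ f^[n] '' Set.Icc u s)
    (h2 : Set.Icc u s ⊆ f^[m] '' Set.Icc t y) :
    ∃ x ∈ Set.Icc u s, ∃ p : ℕ, 1 ≤ p ∧ f^[p] x = x := by
  have hsub : Set.Icc u s ⊆ Set.Icc (0:ℝ) 1 := by
    intro x hx
    exact ⟨le_trans hu.1 hx.1, le_trans hx.2 (le_trans hst (le_trans hty.le hy.2))⟩
  -- continuity of iterates on [0,1]
  have hcont : ∀ k : ℕ, ContinuousOn (f^[k]) (Set.Icc (0:ℝ) 1) := by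
    intro k
    induction k with
    | zero => simpa using continuousOn_id
    | succ k ih =>
      rw [Function.iterate_succ']
      exact hf.comp ih (hmaps.iterate k)
  -- the combined image contains [u,s]
  have himg : Set.Icc u s ⊆ f^[m + n] '' Set.Icc u s := by
    intro x hx
    obtain ⟨z, hz, hzx⟩ := h2 hx
    obtain ⟨w, hw, hwz⟩ := h1 hz
    exact ⟨w, hw, by rw [Function.iterate_add_apply, hwz, hzx]⟩
  set g := f^[m + n] with hg
  obtain ⟨a, ha, hau⟩ := himg (Set.left_mem_Icc.2 hus.le)
  obtain ⟨b, hb, hbs⟩ := himg (Set.right_mem_Icc.2 hus.le)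
  have hconth : ContinuousOn (fun x => g x - x) (Set.uIcc a b) := by
    apply ContinuousOn.sub
    · exact (hcont (m + n)).mono (le_trans (Set.uIcc_subset_Icc ha hb) hsub)
    · exact continuousOn_id
  have hzero : (0:ℝ) ∈ Set.uIcc (g a - a) (g b - b) := by
    rw [Set.mem_uIcc]
    left
    constructor
    · rw [hau]; linarith [ha.1]
    · rw [hbs]; linarith [hb.2]
  obtain ⟨x, hx, hgx⟩ := intermediate_value_uIcc hconth hzero
  refine ⟨x, Set.uIcc_subset_Icc ha hb hx, m + n, by omega, ?_⟩
  have : g x - x = 0 := hgx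
  linarith [this]
end
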